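/- arXiv:1809.06328 — 15 statements merged into one kernel-verified Lean document; each statement's English description precedes it below -/
import Mathlib

section
/- Let d ≥ 3 and let α₁,…,α_d ≥ 2 be pairwise coprime integers, α := α₁⋯α_d, aᵢ := α/αᵢ, and let b₀ ∈ ℤ and integers 0 < ωᵢ < αᵢ satisfy α·b₀ − Σᵢ ωᵢ·aᵢ = 1. Then the set 𝒮 = {ℓ ∈ ℤ≥0 : N(ℓ) ≥ 0}, where N(ℓ) := b₀·ℓ − Σᵢ ⌈ℓ·ωᵢ/αᵢ⌉, is exactly the additive submonoid of ℤ≥0 generated by a₁, …, a_d. (That is, the numerical semigroup of the Seifert integral homology sphere Σ(α₁,…,α_d) is the strongly flat semigroup G(a₁,…,a_d).) -/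
lemma aux_ceil (p q : ℤ) (hq : 0 < q) :
    q * ⌈((p : ℚ)) / ((q : ℚ))⌉ = p + (-p) % q := by
  have hqt : ((q.toNat : ℤ)) = q := Int.toNat_of_nonneg hq.le
  have hqQ : ((q.toNat : ℚ)) = (q : ℚ) := by exact_mod_cast hqt
  have h1 : ((p : ℚ)) / ((q : ℚ)) = -((((-p) : ℤ) : ℚ) / (((q.toNat : ℕ) : ℚ))) := by
    rw [hqQ]; push_cast; ring
  rw [h1, Int.ceil_neg, Rat.floor_intCast_div_natCast, hqt, mul_neg]
  have := Int.mul_ediv_add_emod (-p) q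
  omega

/-- The numerical semigroup of the Seifert integral homology sphere
`Σ(α₁,…,α_d)` is the strongly flat semigroup generated by the `aᵢ = α/αᵢ`. -/
theorem stmt_0
    (d : ℕ) (hd : 3 ≤ d)
    (α : Fin d → ℤ) (hα2 : ∀ i, 2 ≤ α i)
    (hcop : ∀ i j, i ≠ j → IsCoprime (α i) (α j))
    (A : ℤ) (hA : A = ∏ i, α i)
    (a : Fin d → ℤ) (ha : ∀ i, a i = A / α i)
    (b₀ : ℤ) (ω : Fin d → ℤ)
    (hω : ∀ i, 0 < ω i ∧ ω i < α i)
    (hdio : A * b₀ - ∑ i, ω i * a i = 1)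
    (N : ℤ → ℤ)
    (hN : ∀ ℓ : ℤ, N ℓ = b₀ * ℓ - ∑ i, ⌈((ℓ * ω i : ℤ) : ℚ) / ((α i : ℤ) : ℚ)⌉) :
    {ℓ : ℤ | 0 ≤ N ℓ} = ↑(AddSubmonoid.closure (Set.range a)) := by
  have hαpos : ∀ i, (0:ℤ) < α i := fun i => lt_of_lt_of_le two_pos (hα2 i)
  have hαdvdA : ∀ i, α i ∣ A := fun i => hA ▸ Finset.dvd_prod_of_mem α (Finset.mem_univ i)
  have hAa : ∀ i, A = α i * a i := fun i => by
    rw [ha i]; exact (Int.mul_ediv_cancel' (hαdvdA i)).symm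
  have hApos : 0 < A := by
    rw [hA]; exact Finset.prod_pos (fun i _ => hαpos i)
  have hja : ∀ i j, j ≠ i → α j ∣ a i := by
    intro i j hji
    have h1 : α j ∣ α i * a i := (hAa i) ▸ hαdvdA j
    exact (hcop j i hji).dvd_of_dvd_mul_left h1
  have hdvd1 : ∀ i, α i ∣ a i * ω i + 1 := by
    intro i
    have hsum : ∑ j, ω j * a j = ω i * a i + ∑ j ∈ Finset.univ.erase i, ω j * a j :=
      (Finset.add_sum_erase _ _ (Finset.mem_univ i)).symm
    have h1 : a i * ω i + 1 = A * b₀ - ∑ j ∈ Finset.univ.erase i, ω j * a j := by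
      rw [← hdio, hsum]; ring
    rw [h1]
    exact dvd_sub ((hαdvdA i).mul_right b₀)
      (Finset.dvd_sum (fun j hj =>
        ((hja j i (Finset.ne_of_mem_erase hj).symm).mul_left (ω j))))
  -- the key identity
  have key : ∀ ℓ : ℤ, A * N ℓ = ℓ - ∑ i, ((-(ℓ * ω i)) % α i) * a i := by
    intro ℓ
    have hterm : ∀ i, A * ⌈((ℓ * ω i : ℤ) : ℚ) / ((α i : ℤ) : ℚ)⌉
        = a i * (ℓ * ω i) + ((-(ℓ * ω i)) % α i) * a i := by
      intro i
      calc A * ⌈((ℓ * ω i : ℤ) : ℚ) / ((α i : ℤ) : ℚ)⌉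
          = a i * (α i * ⌈((ℓ * ω i : ℤ) : ℚ) / ((α i : ℤ) : ℚ)⌉) := by rw [hAa i]; ring
        _ = a i * (ℓ * ω i + (-(ℓ * ω i)) % α i) := by
            rw [aux_ceil (ℓ * ω i) (α i) (hαpos i)]
        _ = a i * (ℓ * ω i) + ((-(ℓ * ω i)) % α i) * a i := by ring
    rw [hN ℓ, mul_sub, Finset.mul_sum]
    rw [Finset.sum_congr rfl (fun i _ => hterm i), Finset.sum_add_distrib]
    have h3 : ∑ i, a i * (ℓ * ω i) = ℓ * ∑ i, ω i * a i := by
      rw [Finset.mul_sum]; exact Finset.sum_congr rfl (fun i _ => by ring)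
    rw [h3]
    linear_combination ℓ * hdio
  have hamem : ∀ i, a i ∈ AddSubmonoid.closure (Set.range a) := fun i =>
    AddSubmonoid.subset_closure ⟨i, rfl⟩
  have hmem : ∀ (c x : ℤ), 0 ≤ c → x ∈ AddSubmonoid.closure (Set.range a) →
      c * x ∈ AddSubmonoid.closure (Set.range a) := by
    intro c x hc hx
    have h1 : c * x = c.toNat • x := by rw [nsmul_eq_mul, Int.toNat_of_nonneg hc]
    rw [h1]; exact AddSubmonoid.nsmul_mem _ hx _
  -- N (a i) = 0
  have hNa : ∀ i, N (a i) = 0 := by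
    intro i
    have hk := key (a i)
    have hmod : ∀ j, (-(a i * ω j)) % α j = if j = i then 1 else 0 := by
      intro j
      by_cases hji : j = i
      · subst hji
        obtain ⟨k, hk2⟩ := hdvd1 j
        have h2 : -(a j * ω j) = 1 + α j * (-k) := by linarith
        rw [if_pos rfl, h2, Int.add_mul_emod_self_left]
        exact Int.emod_eq_of_lt (by norm_num) (by linarith [hα2 j])
      · rw [if_neg hji]
        have h2 : α j ∣ -(a i * ω j) :=
          (dvd_neg).mpr ((hja i j hji).mul_right (ω j))
        exact Int.emod_eq_zero_of_dvd h2
    have hsum : ∑ j, ((-(a i * ω j)) % α j) * a j = a i := by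
      rw [Finset.sum_congr rfl (fun j _ => by rw [hmod j])]
      simp [Finset.sum_ite_eq']
    rw [hsum, sub_self] at hk
    exact (mul_eq_zero.mp hk).resolve_left hApos.ne'
  -- superadditivity
  have hadd : ∀ x y : ℤ, 0 ≤ N x → 0 ≤ N y → 0 ≤ N (x + y) := by
    intro x y hx hy
    have hterm : ∀ i : Fin d, ⌈(((x + y) * ω i : ℤ) : ℚ) / ((α i : ℤ) : ℚ)⌉ ≤
        ⌈((x * ω i : ℤ) : ℚ) / ((α i : ℤ) : ℚ)⌉ + ⌈((y * ω i : ℤ) : ℚ) / ((α i : ℤ) : ℚ)⌉ := by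
      intro i
      have h1 : (((x + y) * ω i : ℤ) : ℚ) / ((α i : ℤ) : ℚ)
          = ((x * ω i : ℤ) : ℚ) / ((α i : ℤ) : ℚ) + ((y * ω i : ℤ) : ℚ) / ((α i : ℤ) : ℚ) := by
        push_cast; ring
      rw [h1]; exact Int.ceil_add_le _ _
    have hsle := Finset.sum_le_sum (fun i (_ : i ∈ Finset.univ) => hterm i)
    rw [Finset.sum_add_distrib] at hsle
    have h2 := hN x; have h3 := hN y; have h4 := hN (x + y)
    have h5 : N x + N y ≤ N (x + y) := by rw [h2, h3, h4]; linarith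
    linarith
  ext ℓ
  simp only [Set.mem_setOf_eq, SetLike.mem_coe]
  constructor
  · intro hl
    have i0 : Fin d := ⟨0, by omega⟩
    have hℓeq : ℓ = (N ℓ * α i0) * a i0 + ∑ i, ((-(ℓ * ω i)) % α i) * a i := by
      linear_combination (N ℓ) * (hAa i0) - key ℓ
    rw [hℓeq]
    exact AddSubmonoid.add_mem _
      (hmem _ _ (mul_nonneg hl (hαpos i0).le) (hamem i0))
      (AddSubmonoid.sum_mem _ (fun i _ =>
        hmem _ _ (Int.emod_nonneg _ (hαpos i).ne') (hamem i)))
  · intro hl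
    refine AddSubmonoid.closure_induction ?_ ?_ ?_ hl
    · rintro x ⟨i, rfl⟩
      rw [hNa i]
    · simp [hN]
    · intro x y _ _ hx hy
      exact hadd x y hx hy
end

section
/- Fix Seifert data and assume the numerically Gorenstein congruence conditions: γ ∈ ℤ and ωᵢ·γ ≡ 1 (mod αᵢ) for every i = 1,…,d. Then N(ℓ) + N(γ − ℓ) = −2 for every integer ℓ. -/
/-!
For each `i` the congruence `ωᵢ γ ≡ 1 (mod αᵢ)` makes `ℓ ωᵢ / αᵢ` and `(γ - ℓ) ωᵢ / αᵢ` two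
fractions with denominator `αᵢ` summing to `kᵢ + 1/αᵢ` with `kᵢ ∈ ℤ`, so their ceilings sum to
exactly `kᵢ + 1`. Summing over `i`, `N(ℓ) + N(γ - ℓ) = b₀ γ - Σᵢ (kᵢ + 1)`, which no longer
depends on `ℓ`, and the definition of `γ` evaluates it to `-2`.
-/

section CeilDiv

variable {K : Type*} [Field K] [LinearOrder K] [IsStrictOrderedRing K] [FloorRing K]

theorem Int.ceil_intCast_div_eq_floor_sub_one_div_add_one {a n : ℤ} (hn : 0 < n) :
    ⌈(a : K) / n⌉ = ⌊((a - 1 : ℤ) : K) / n⌋ + 1 := by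
  have hnK : (0 : K) < n := Int.cast_pos.mpr hn
  have hlo := (le_div_iff₀ hnK).mp (Int.floor_le (((a - 1 : ℤ) : K) / n))
  have hhi := (div_lt_iff₀ hnK).mp (Int.lt_floor_add_one (((a - 1 : ℤ) : K) / n))
  generalize ⌊((a - 1 : ℤ) : K) / n⌋ = m at hlo hhi ⊢
  have hhiZ : a ≤ (m + 1) * n := by
    have : a - 1 < (m + 1) * n := by exact_mod_cast hhi
    omega
  rw [Int.ceil_eq_iff, lt_div_iff₀ hnK, div_le_iff₀ hnK]
  push_cast at hlo ⊢
  exact ⟨by linarith, by exact_mod_cast hhiZ⟩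

theorem Int.ceil_intCast_div_add_ceil_intCast_div {a b n k : ℤ} (hn : 0 < n)
    (hab : a + b = n * k + 1) : ⌈(a : K) / n⌉ + ⌈(b : K) / n⌉ = k + 1 := by
  have hnK : (n : K) ≠ 0 := Int.cast_ne_zero.mpr hn.ne'
  have hb : (b : K) / n = k + -(((a - 1 : ℤ) : K) / n) := by
    rw [eq_sub_of_add_eq' hab]
    field_simp
    push_cast
    ring
  rw [hb, Int.ceil_intCast_add, Int.ceil_neg, Int.ceil_intCast_div_eq_floor_sub_one_div_add_one hn]
  ring

end CeilDiv

theorem stmt_1_general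
    (d : ℕ) (b₀ : ℤ)
    (α ω : Fin d → ℤ)
    (hω : ∀ i, 0 < ω i ∧ ω i < α i)
    (e : ℚ) (he : e = -(b₀ : ℚ) + ∑ i, (ω i : ℚ) / (α i : ℚ)) (heneg : e < 0)
    (N : ℤ → ℤ)
    (hN : ∀ ℓ : ℤ, N ℓ = b₀ * ℓ - ∑ i, ⌈((ℓ * ω i : ℤ) : ℚ) / ((α i : ℤ) : ℚ)⌉)
    (γ : ℤ)
    (hγ : (γ : ℚ) = ((d : ℚ) - 2 - ∑ i, 1 / (α i : ℚ)) / |e|)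
    (hGor : ∀ i, α i ∣ ω i * γ - 1) :
    ∀ ℓ : ℤ, N ℓ + N (γ - ℓ) = -2 := by
  intro ℓ
  have hα : ∀ i, 0 < α i := fun i => (hω i).1.trans (hω i).2
  choose k hk using hGor
  have hpair : ∀ i, ⌈((ℓ * ω i : ℤ) : ℚ) / ((α i : ℤ) : ℚ)⌉
      + ⌈(((γ - ℓ) * ω i : ℤ) : ℚ) / ((α i : ℤ) : ℚ)⌉ = k i + 1 := fun i =>
    Int.ceil_intCast_div_add_ceil_intCast_div (hα i) (by linear_combination hk i)
  have hsum : N ℓ + N (γ - ℓ) = b₀ * γ - ∑ i, (k i + 1) := by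
    rw [hN, hN, ← Finset.sum_congr rfl fun i _ => hpair i, Finset.sum_add_distrib]
    ring
  have hkQ : ∀ i, (k i : ℚ) = γ * ((ω i : ℚ) / α i) - 1 / α i := fun i => by
    have hαQ : (α i : ℚ) ≠ 0 := Int.cast_ne_zero.mpr (hα i).ne'
    have hkiQ : ((ω i * γ - 1 : ℤ) : ℚ) = ((α i * k i : ℤ) : ℚ) := congrArg _ (hk i)
    push_cast at hkiQ
    field_simp
    linear_combination -hkiQ
  have hγe : (γ : ℚ) * -e = d - 2 - ∑ i, 1 / (α i : ℚ) := by
    rw [hγ, ← abs_of_neg heneg]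
    field_simp [heneg.ne]
  rw [hsum]
  suffices (b₀ * γ - ∑ i, (k i + 1) : ℚ) = -2 by exact_mod_cast this
  push_cast
  simp only [hkQ, Finset.sum_add_distrib, Finset.sum_sub_distrib, ← Finset.mul_sum,
    Finset.sum_const, Finset.card_univ, Fintype.card_fin, nsmul_eq_mul, mul_one]
  linear_combination (γ : ℚ) * he + hγe

/-- Under the numerically Gorenstein congruence conditions,
`N(ℓ) + N(γ − ℓ) = −2` for every integer `ℓ`. -/
theorem stmt_1
    (d : ℕ) (hd : 3 ≤ d) (b₀ : ℤ)
    (α ω : Fin d → ℤ)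
    (hω : ∀ i, 0 < ω i ∧ ω i < α i)
    (hcop : ∀ i, IsCoprime (α i) (ω i))
    (e : ℚ) (he : e = -(b₀ : ℚ) + ∑ i, (ω i : ℚ) / (α i : ℚ)) (heneg : e < 0)
    (N : ℤ → ℤ)
    (hN : ∀ ℓ : ℤ, N ℓ = b₀ * ℓ - ∑ i, ⌈((ℓ * ω i : ℤ) : ℚ) / ((α i : ℤ) : ℚ)⌉)
    (γ : ℤ)
    (hγ : (γ : ℚ) = ((d : ℚ) - 2 - ∑ i, 1 / (α i : ℚ)) / |e|)
    (hGor : ∀ i, α i ∣ ω i * γ - 1) :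
    ∀ ℓ : ℤ, N ℓ + N (γ - ℓ) = -2 :=
  stmt_1_general d b₀ α ω hω e he heneg N hN γ hγ hGor
end

section
/- Fix Seifert data satisfying the numerically Gorenstein congruence conditions (γ ∈ ℤ and ωᵢ·γ ≡ 1 (mod αᵢ) for every i) and with γ ≥ 1 (the numerically Gorenstein non-ADE case). Then the largest integer ℓ with N(ℓ) ≤ −2 equals γ; i.e., N(γ) ≤ −2 and N(ℓ) ≥ −1 for every integer ℓ > γ. In other words, the Frobenius number of the module ℳ = {ℓ ∈ ℤ : N(ℓ) ≥ −1} equals γ. -/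
lemma floor_idiv (n a : ℤ) (ha : 0 < a) : ⌊(n : ℚ) / (a : ℚ)⌋ = n / a := by
  lift a to ℕ using ha.le
  exact_mod_cast Rat.floor_intCast_div_natCast n a

lemma ceil_succ_idiv (n a : ℤ) (ha : 0 < a) : ⌈((n + 1 : ℤ) : ℚ) / (a : ℚ)⌉ = n / a + 1 := by
  have haq : (0 : ℚ) < (a : ℚ) := by exact_mod_cast ha
  rw [Int.ceil_eq_iff]
  have hq := Int.mul_ediv_add_emod n a
  have hr0 := Int.emod_nonneg n (ne_of_gt ha)
  have hr1 := Int.emod_lt_of_pos n ha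
  have hqQ : (a : ℚ) * ((n / a : ℤ) : ℚ) + ((n % a : ℤ) : ℚ) = (n : ℚ) := by exact_mod_cast hq
  constructor
  · rw [lt_div_iff₀ haq]
    push_cast
    nlinarith [hqQ, (show ((n % a : ℤ) : ℚ) ≥ 0 by exact_mod_cast hr0)]
  · rw [div_le_iff₀ haq]
    push_cast
    nlinarith [hqQ, (show ((n % a : ℤ) : ℚ) ≤ (a : ℚ) - 1 by exact_mod_cast (by omega : n % a ≤ a - 1))]

/-- Numerically Gorenstein non-ADE case: the Frobenius number of the module
`ℳ = {ℓ : N(ℓ) ≥ −1}` equals `γ`, i.e. `N(γ) ≤ −2` and `N(ℓ) ≥ −1` for `ℓ > γ`. -/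
theorem stmt_2
    (d : ℕ) (hd : 3 ≤ d) (b₀ : ℤ)
    (α ω : Fin d → ℤ)
    (hω : ∀ i, 0 < ω i ∧ ω i < α i)
    (hcop : ∀ i, IsCoprime (α i) (ω i))
    (e : ℚ) (he : e = -(b₀ : ℚ) + ∑ i, (ω i : ℚ) / (α i : ℚ)) (heneg : e < 0)
    (N : ℤ → ℤ)
    (hN : ∀ ℓ : ℤ, N ℓ = b₀ * ℓ - ∑ i, ⌈((ℓ * ω i : ℤ) : ℚ) / ((α i : ℤ) : ℚ)⌉)
    (γ : ℤ)
    (hγ : (γ : ℚ) = ((d : ℚ) - 2 - ∑ i, 1 / (α i : ℚ)) / |e|)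
    (hGor : ∀ i, α i ∣ ω i * γ - 1)
    (hγ1 : 1 ≤ γ) :
    N γ ≤ -2 ∧ ∀ ℓ : ℤ, γ < ℓ → -1 ≤ N ℓ := by
  have hαpos : ∀ i, 0 < α i := fun i => lt_trans (hω i).1 (hω i).2
  have hαQ : ∀ i, (0:ℚ) < (α i : ℚ) := fun i => by exact_mod_cast hαpos i
  choose k hk using hGor
  -- key identity b₀ γ = d - 2 + ∑ k
  have hene : |e| = -e := abs_of_neg heneg
  have h0 : (γ : ℚ) * (-e) = (d:ℚ) - 2 - ∑ i, 1 / (α i : ℚ) := by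
    have hne : e ≠ 0 := ne_of_lt heneg
    rw [hγ, hene]
    field_simp
  have h1 : (γ:ℚ) * ∑ i, (ω i:ℚ)/(α i:ℚ) = (∑ i, (k i : ℚ)) + ∑ i, 1/(α i:ℚ) := by
    rw [Finset.mul_sum, ← Finset.sum_add_distrib]
    refine Finset.sum_congr rfl (fun i _ => ?_)
    have hki : ((ω i : ℚ)) * (γ:ℚ) - 1 = (α i : ℚ) * ((k i : ℚ)) := by exact_mod_cast hk i
    have hαne := ne_of_gt (hαQ i)
    field_simp
    linear_combination hki
  have hQ : ((b₀ * γ : ℤ) : ℚ) = (((d:ℤ) - 2 + ∑ i, k i : ℤ) : ℚ) := by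
    push_cast
    linear_combination h0 + h1 + (γ:ℚ) * he
  have hkey : b₀ * γ = (d:ℤ) - 2 + ∑ i, k i := by exact_mod_cast hQ
  -- Σ ω/α < b₀
  have hsublt : ∑ i, (ω i:ℚ)/(α i:ℚ) < (b₀:ℚ) := by
    have := heneg; rw [he] at this; linarith
  constructor
  · rw [hN γ]
    have hceil : ∀ i ∈ Finset.univ, ⌈((γ * ω i : ℤ):ℚ)/((α i : ℤ):ℚ)⌉ = k i + 1 := by
      intro i _
      have h2 : γ * ω i = α i * k i + 1 := by linear_combination hk i
      rw [h2, ceil_succ_idiv (α i * k i) (α i) (hαpos i),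
        Int.mul_ediv_cancel_left _ (ne_of_gt (hαpos i))]
    rw [Finset.sum_congr rfl hceil, Finset.sum_add_distrib, Finset.sum_const]
    simp only [Finset.card_univ, Fintype.card_fin, nsmul_eq_mul, mul_one]
    linarith [hkey]
  · intro ℓ hℓ
    set m : ℤ := ℓ - γ with hmdef
    have hm : ℓ = γ + m := by omega
    have hm1 : 1 ≤ m := by omega
    rw [hN ℓ]
    have hceil : ∀ i ∈ Finset.univ, ⌈((ℓ * ω i : ℤ):ℚ)/((α i : ℤ):ℚ)⌉
        = m * ω i / α i + k i + 1 := by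
      intro i _
      have h2 : ℓ * ω i = (m * ω i + α i * k i) + 1 := by
        linear_combination hk i + ω i * hm
      rw [h2, ceil_succ_idiv _ (α i) (hαpos i),
        Int.add_mul_ediv_left _ _ (ne_of_gt (hαpos i))]
    rw [Finset.sum_congr rfl hceil]
    have hsum : ∑ i, (m * ω i / α i + k i + 1)
        = (∑ i, m * ω i / α i) + (∑ i, k i) + d := by
      rw [Finset.sum_add_distrib, Finset.sum_add_distrib, Finset.sum_const]
      simp only [Finset.card_univ, Fintype.card_fin, nsmul_eq_mul, mul_one]
    rw [hsum]
    -- bound the ediv sum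
    have hbound : (∑ i, m * ω i / α i) < b₀ * m := by
      have hQ2 : ((∑ i, m * ω i / α i : ℤ):ℚ) < ((b₀ * m : ℤ):ℚ) := by
        push_cast
        have hle : ∑ i, ((m * ω i / α i : ℤ):ℚ) ≤ ∑ i, ((m:ℚ) * (ω i:ℚ))/(α i:ℚ) := by
          refine Finset.sum_le_sum (fun i _ => ?_)
          have := floor_idiv (m * ω i) (α i) (hαpos i)
          have hfl := Int.floor_le (((m * ω i : ℤ):ℚ) / ((α i : ℤ):ℚ))
          rw [this] at hfl
          push_cast at hfl
          exact hfl
        have heq : ∑ i, ((m:ℚ) * (ω i:ℚ))/(α i:ℚ) = (m:ℚ) * ∑ i, (ω i:ℚ)/(α i:ℚ) := by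
          rw [Finset.mul_sum]
          exact Finset.sum_congr rfl (fun i _ => by ring)
        have hmQ : (1:ℚ) ≤ (m:ℚ) := by exact_mod_cast hm1
        calc ∑ i, ((m * ω i / α i : ℤ):ℚ) ≤ (m:ℚ) * ∑ i, (ω i:ℚ)/(α i:ℚ) := by
              rw [← heq]; exact hle
          _ < (m:ℚ) * (b₀:ℚ) := by
              exact mul_lt_mul_of_pos_left hsublt (by linarith)
          _ = (b₀:ℚ) * (m:ℚ) := by ring
      exact_mod_cast hQ2
    have hbℓ : b₀ * ℓ = b₀ * γ + b₀ * m := by rw [hm]; ring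
    linarith [hkey, hbound]
end

section
/- Fix Seifert data satisfying the numerically Gorenstein congruence conditions (γ ∈ ℤ and ωᵢ·γ ≡ 1 (mod αᵢ) for every i), with γ ≥ 1, and assume additionally 𝔬 := α·|e| = 1. Then the largest integer ℓ with N(ℓ) ≤ −1 equals α + γ; i.e., N(α+γ) ≤ −1 and N(ℓ) ≥ 0 for every integer ℓ > α + γ. In other words, the Frobenius number of the semigroup 𝒮 = {ℓ ∈ ℤ : N(ℓ) ≥ 0} equals α + γ. -/
/-!
Since `⌈a / b⌉ ≤ (a + b - 1) / b`, with equality when `a ≡ 1 (mod b)`, summing over the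
exceptional fibres gives the Riemann–Roch type estimate `N ℓ ≥ |e| (ℓ - γ) - 2`, which is an
equality whenever `ℓ ωᵢ ≡ 1 (mod αᵢ)` for all `i`. With `|e| = 1 / α`, the bound exceeds `-1`
as soon as `ℓ > α + γ`, while at `ℓ = α + γ` the congruence conditions make it exact and equal to `-1`.
-/

section CeilDiv

variable {K : Type*} [Field K] [LinearOrder K] [IsStrictOrderedRing K] [FloorRing K]

theorem Int.ceil_intCast_div_le (a b : ℤ) (hb : 0 < b) :
    (⌈(a : K) / b⌉ : K) ≤ (a + b - 1) / b := by
  have hbK : (0 : K) < b := by exact_mod_cast hb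
  have hlt : ((⌈(a : K) / b⌉ - 1 : ℤ) : K) < a / b := by
    push_cast; linarith [Int.ceil_lt_add_one ((a : K) / b)]
  have hmul : (⌈(a : K) / b⌉ - 1) * b < a := by
    exact_mod_cast (lt_div_iff₀ hbK).1 hlt
  rw [le_div_iff₀ hbK]
  exact_mod_cast (by linarith : ⌈(a : K) / b⌉ * b ≤ a + b - 1)

theorem Int.ceil_intCast_div_eq_of_dvd_sub_one {a b : ℤ} (hb : 0 < b) (h : b ∣ a - 1) :
    (⌈(a : K) / b⌉ : K) = (a + b - 1) / b := by
  obtain ⟨k, hk⟩ := h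
  have hbK : (0 : K) < b := by exact_mod_cast hb
  have hq : (a : K) / b = k + 1 / b := by
    rw [show a = b * k + 1 by linarith]; push_cast; field_simp
  have hceil : ⌈(a : K) / b⌉ = k + 1 := by
    rw [Int.ceil_eq_iff, hq]; push_cast
    constructor
    · linarith [one_div_pos.2 hbK]
    · linarith [(div_le_one hbK).2 (by exact_mod_cast hb : (1 : K) ≤ b)]
  rw [hceil, show a = b * k + 1 by linarith]; push_cast; field_simp; ring

end CeilDiv

section Seifert

variable {d : ℕ} {b₀ : ℤ} {α ω : Fin d → ℤ} {e : ℚ} {γ : ℤ}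

theorem linear_bound_eq (hα : ∀ i, α i ≠ 0) (he : e = -(b₀ : ℚ) + ∑ i, (ω i : ℚ) / (α i : ℚ))
    (heneg : e < 0) (hγ : (γ : ℚ) = ((d : ℚ) - 2 - ∑ i, 1 / (α i : ℚ)) / |e|) (ℓ : ℤ) :
    b₀ * ℓ - ∑ i, (((ℓ * ω i : ℤ) : ℚ) + α i - 1) / α i = |e| * (ℓ - γ) - 2 := by
  have hterm : ∀ i, (((ℓ * ω i : ℤ) : ℚ) + α i - 1) / α i = ℓ * ((ω i : ℚ) / α i) + 1 - 1 / α i :=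
    fun i => by
      have : (α i : ℚ) ≠ 0 := by exact_mod_cast hα i
      push_cast; field_simp
  have hγe : |e| * γ = d - 2 - ∑ i, 1 / (α i : ℚ) := by
    rw [hγ, mul_div_cancel₀ _ (abs_pos.2 heneg.ne).ne']
  rw [abs_of_neg heneg] at hγe ⊢
  simp only [hterm, Finset.sum_sub_distrib, Finset.sum_add_distrib, ← Finset.mul_sum,
    Finset.sum_const, Finset.card_univ, Fintype.card_fin, nsmul_eq_mul, mul_one]
  linear_combination (ℓ : ℚ) * he + hγe

variable {N : ℤ → ℤ}

theorem linear_bound_le_N (hα : ∀ i, 0 < α i)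
    (he : e = -(b₀ : ℚ) + ∑ i, (ω i : ℚ) / (α i : ℚ)) (heneg : e < 0)
    (hN : ∀ ℓ : ℤ, N ℓ = b₀ * ℓ - ∑ i, ⌈((ℓ * ω i : ℤ) : ℚ) / ((α i : ℤ) : ℚ)⌉)
    (hγ : (γ : ℚ) = ((d : ℚ) - 2 - ∑ i, 1 / (α i : ℚ)) / |e|) (ℓ : ℤ) :
    |e| * (ℓ - γ) - 2 ≤ N ℓ := by
  rw [← linear_bound_eq (fun i => (hα i).ne') he heneg hγ, hN]
  rw [Int.cast_sub, Int.cast_mul, Int.cast_sum]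
  gcongr with i
  exact Int.ceil_intCast_div_le (ℓ * ω i) (α i) (hα i)

theorem N_eq_linear_bound (hα : ∀ i, 0 < α i)
    (he : e = -(b₀ : ℚ) + ∑ i, (ω i : ℚ) / (α i : ℚ)) (heneg : e < 0)
    (hN : ∀ ℓ : ℤ, N ℓ = b₀ * ℓ - ∑ i, ⌈((ℓ * ω i : ℤ) : ℚ) / ((α i : ℤ) : ℚ)⌉)
    (hγ : (γ : ℚ) = ((d : ℚ) - 2 - ∑ i, 1 / (α i : ℚ)) / |e|) {ℓ : ℤ}
    (hℓ : ∀ i, α i ∣ ℓ * ω i - 1) :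
    N ℓ = |e| * (ℓ - γ) - 2 := by
  rw [← linear_bound_eq (fun i => (hα i).ne') he heneg hγ, hN]
  rw [Int.cast_sub, Int.cast_mul, Int.cast_sum]
  congr 1
  refine Finset.sum_congr rfl fun i _ => ?_
  exact Int.ceil_intCast_div_eq_of_dvd_sub_one (hα i) (hℓ i)

end Seifert

theorem stmt_3_general
    (d : ℕ) (b₀ : ℤ)
    (α ω : Fin d → ℤ)
    (hω : ∀ i, 0 < ω i ∧ ω i < α i)
    (e : ℚ) (he : e = -(b₀ : ℚ) + ∑ i, (ω i : ℚ) / (α i : ℚ)) (heneg : e < 0)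
    (N : ℤ → ℤ)
    (hN : ∀ ℓ : ℤ, N ℓ = b₀ * ℓ - ∑ i, ⌈((ℓ * ω i : ℤ) : ℚ) / ((α i : ℤ) : ℚ)⌉)
    (γ : ℤ)
    (hγ : (γ : ℚ) = ((d : ℚ) - 2 - ∑ i, 1 / (α i : ℚ)) / |e|)
    (hGor : ∀ i, α i ∣ ω i * γ - 1)
    (A : ℤ) (hA : A = Finset.univ.lcm α)
    (ho : (A : ℚ) * |e| = 1) :
    N (A + γ) ≤ -1 ∧ ∀ ℓ : ℤ, A + γ < ℓ → 0 ≤ N ℓ := by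
  have hα : ∀ i, 0 < α i := fun i => (hω i).1.trans (hω i).2
  have hAe : |e| * A = 1 := by rw [mul_comm, ho]
  constructor
  · have hdvd : ∀ i, α i ∣ (A + γ) * ω i - 1 := fun i => by
      have hαA : α i ∣ A := hA ▸ Finset.dvd_lcm (Finset.mem_univ i)
      rw [show (A + γ) * ω i - 1 = A * ω i + (ω i * γ - 1) by ring]
      exact (hαA.mul_right _).add (hGor i)
    have hNeq : (N (A + γ) : ℚ) = -1 := by
      rw [N_eq_linear_bound hα he heneg hN hγ hdvd, Int.cast_add, add_sub_cancel_right, hAe]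
      norm_num
    exact_mod_cast hNeq.le
  · intro ℓ hℓ
    have hℓ' : (A : ℚ) < ℓ - γ := by
      rw [lt_sub_iff_add_lt]; exact_mod_cast hℓ
    have hgt : 1 < |e| * (ℓ - γ) := hAe ▸ mul_lt_mul_of_pos_left hℓ' (abs_pos.2 heneg.ne)
    have hNgt : (-1 : ℚ) < N ℓ := by linarith [linear_bound_le_N hα he heneg hN hγ ℓ]
    have : (-1 : ℤ) < N ℓ := by exact_mod_cast hNgt
    omega

/-- Numerically Gorenstein non-ADE case with `𝔬 = α·|e| = 1`: the Frobenius number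
of the semigroup `𝒮 = {ℓ : N(ℓ) ≥ 0}` equals `α + γ`. -/
theorem stmt_3
    (d : ℕ) (hd : 3 ≤ d) (b₀ : ℤ)
    (α ω : Fin d → ℤ)
    (hω : ∀ i, 0 < ω i ∧ ω i < α i)
    (hcop : ∀ i, IsCoprime (α i) (ω i))
    (e : ℚ) (he : e = -(b₀ : ℚ) + ∑ i, (ω i : ℚ) / (α i : ℚ)) (heneg : e < 0)
    (N : ℤ → ℤ)
    (hN : ∀ ℓ : ℤ, N ℓ = b₀ * ℓ - ∑ i, ⌈((ℓ * ω i : ℤ) : ℚ) / ((α i : ℤ) : ℚ)⌉)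
    (γ : ℤ)
    (hγ : (γ : ℚ) = ((d : ℚ) - 2 - ∑ i, 1 / (α i : ℚ)) / |e|)
    (hGor : ∀ i, α i ∣ ω i * γ - 1)
    (hγ1 : 1 ≤ γ)
    (A : ℤ) (hA : A = Finset.univ.lcm α)
    (ho : (A : ℚ) * |e| = 1) :
    N (A + γ) ≤ -1 ∧ ∀ ℓ : ℤ, A + γ < ℓ → 0 ≤ N ℓ :=
  stmt_3_general d b₀ α ω hω e he heneg N hN γ hγ hGor A hA ho
end

section
/- Fix Seifert data satisfying the numerically Gorenstein congruence conditions (γ ∈ ℤ and ωᵢ·γ ≡ 1 (mod αᵢ) for every i) with γ ≥ 1. Then for every integer ℓ: (i) ℓ ∈ ℳ if and only if γ − ℓ ∉ 𝒮 (i.e., N(ℓ) ≥ −1 ⟺ N(γ−ℓ) ≤ −1); (ii) N(ℓ) = −1 if and only if ℓ ∉ 𝒮 and γ − ℓ ∉ 𝒮, i.e., {ℓ : N(ℓ) = −1} = ℤ \ ((γ − 𝒮) ∪ 𝒮). In particular, min{ℓ ∈ ℤ : N(ℓ) ≥ −1} + max{ℓ ∈ ℤ : N(ℓ) ≤ −1}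 = γ. -/
private lemma ceil_div_eq' (m a c : ℤ) (ha : 0 < a) (h1 : a * (c - 1) < m)
    (h2 : m ≤ a * c) : ⌈((m : ℤ) : ℚ) / ((a : ℤ) : ℚ)⌉ = c := by
  have haQ : (0 : ℚ) < (a : ℚ) := by exact_mod_cast ha
  rw [Int.ceil_eq_iff]
  constructor
  · rw [lt_div_iff₀ haQ]
    have : (a : ℚ) * ((c : ℚ) - 1) < (m : ℚ) := by exact_mod_cast h1
    linarith
  · rw [div_le_iff₀ haQ]
    have : (m : ℚ) ≤ (a : ℚ) * (c : ℚ) := by exact_mod_cast h2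
    linarith

/-- Numerically Gorenstein non-ADE case:
(i) `ℓ ∈ ℳ ↔ γ − ℓ ∉ 𝒮`;
(ii) `N(ℓ) = −1 ↔ ℓ ∉ 𝒮 ∧ γ − ℓ ∉ 𝒮`;
and in particular `min ℳ + f_𝒮 = γ`. -/
theorem stmt_4
    (d : ℕ) (hd : 3 ≤ d) (b₀ : ℤ)
    (α ω : Fin d → ℤ)
    (hω : ∀ i, 0 < ω i ∧ ω i < α i)
    (hcop : ∀ i, IsCoprime (α i) (ω i))
    (e : ℚ) (he : e = -(b₀ : ℚ) + ∑ i, (ω i : ℚ) / (α i : ℚ)) (heneg : e < 0)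
    (N : ℤ → ℤ)
    (hN : ∀ ℓ : ℤ, N ℓ = b₀ * ℓ - ∑ i, ⌈((ℓ * ω i : ℤ) : ℚ) / ((α i : ℤ) : ℚ)⌉)
    (γ : ℤ)
    (hγ : (γ : ℚ) = ((d : ℚ) - 2 - ∑ i, 1 / (α i : ℚ)) / |e|)
    (hGor : ∀ i, α i ∣ ω i * γ - 1)
    (hγ1 : 1 ≤ γ) :
    (∀ ℓ : ℤ, -1 ≤ N ℓ ↔ N (γ - ℓ) ≤ -1)
    ∧ (∀ ℓ : ℤ, N ℓ = -1 ↔ (N ℓ ≤ -1 ∧ N (γ - ℓ) ≤ -1))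
    ∧ (∀ mmin Mmax : ℤ, IsLeast {ℓ : ℤ | -1 ≤ N ℓ} mmin →
        IsGreatest {ℓ : ℤ | N ℓ ≤ -1} Mmax → mmin + Mmax = γ) := by
  have hapos : ∀ i, 0 < α i := fun i => (hω i).1.trans (hω i).2
  have haQ : ∀ i, (α i : ℚ) ≠ 0 := fun i => by
    have := hapos i; positivity
  -- the integers k i with α i * k i = ω i * γ - 1
  set k : Fin d → ℤ := fun i => (ω i * γ - 1) / α i with hk
  have hak : ∀ i, α i * k i = ω i * γ - 1 := fun i =>
    Int.mul_ediv_cancel' (hGor i)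
  -- rational identity : b₀ * γ - ∑ k i = d - 2
  have hsum : b₀ * γ - ∑ i, k i = (d : ℤ) - 2 := by
    have hene : |e| = -e := abs_of_neg heneg
    have hγe : (γ : ℚ) * (-e) = (d : ℚ) - 2 - ∑ i, 1 / (α i : ℚ) := by
      have hne : -e ≠ 0 := by linarith
      rw [hγ, hene, div_mul_cancel₀ _ hne]
    have hkQ : ∀ i, (k i : ℚ) = (ω i : ℚ) * (γ : ℚ) / (α i : ℚ) - 1 / (α i : ℚ) := by
      intro i
      have h := hak i
      have h' : ((α i : ℚ)) * (k i : ℚ) = (ω i : ℚ) * (γ : ℚ) - 1 := by exact_mod_cast h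
      have h2 : (k i : ℚ) = ((ω i : ℚ) * (γ : ℚ) - 1) / (α i : ℚ) := by
        rw [eq_div_iff (haQ i)]
        linarith [h']
      rw [h2, sub_div]
    have key : ((b₀ * γ - ∑ i, k i : ℤ) : ℚ) = ((d : ℤ) - 2 : ℤ) := by
      push_cast
      rw [Finset.sum_congr rfl (fun i _ => hkQ i), Finset.sum_sub_distrib]
      rw [he] at hγe
      have h1 : ∑ i, (ω i : ℚ) * (γ : ℚ) / (α i : ℚ)
          = (γ : ℚ) * ∑ i, (ω i : ℚ) / (α i : ℚ) := by
        rw [Finset.mul_sum]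
        exact Finset.sum_congr rfl (fun i _ => by ring)
      rw [h1]
      linarith
    exact_mod_cast key
  -- ceiling reflection per index
  have hceil : ∀ (ℓ : ℤ) (i : Fin d),
      ⌈(((γ - ℓ) * ω i : ℤ) : ℚ) / ((α i : ℤ) : ℚ)⌉
        = k i + 1 - ⌈((ℓ * ω i : ℤ) : ℚ) / ((α i : ℤ) : ℚ)⌉ := by
    intro ℓ i
    set c := ⌈((ℓ * ω i : ℤ) : ℚ) / ((α i : ℤ) : ℚ)⌉ with hc
    have haQ' : (0 : ℚ) < (α i : ℚ) := by exact_mod_cast hapos i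
    have hub : ((ℓ * ω i : ℤ) : ℚ) / (α i : ℚ) ≤ (c : ℚ) := Int.le_ceil _
    have hlb : (c : ℚ) - 1 < ((ℓ * ω i : ℤ) : ℚ) / (α i : ℚ) := by
      have := Int.ceil_lt_add_one (((ℓ * ω i : ℤ) : ℚ) / (α i : ℚ))
      rw [← hc] at this
      linarith
    have hub' : ℓ * ω i ≤ α i * c := by
      rw [div_le_iff₀ haQ'] at hub
      exact_mod_cast (by linarith : ((ℓ * ω i : ℤ) : ℚ) ≤ (α i : ℚ) * (c : ℚ))
    have hlb' : α i * (c - 1) < ℓ * ω i := by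
      rw [lt_div_iff₀ haQ'] at hlb
      push_cast at hlb
      exact_mod_cast (by nlinarith [hlb] : ((α i : ℚ)) * ((c : ℚ) - 1) < (ℓ : ℚ) * (ω i : ℚ))
    have hval : (γ - ℓ) * ω i = α i * k i + 1 - ℓ * ω i := by
      have := hak i; ring_nf; ring_nf at this; linarith
    apply ceil_div_eq' _ _ _ (hapos i)
    · rw [hval]; nlinarith [hub']
    · rw [hval]; nlinarith [hlb']
  -- key identity : N ℓ + N (γ - ℓ) = -2
  have key : ∀ ℓ : ℤ, N ℓ + N (γ - ℓ) = -2 := by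
    intro ℓ
    rw [hN ℓ, hN (γ - ℓ)]
    rw [Finset.sum_congr rfl (fun i _ => hceil ℓ i)]
    rw [Finset.sum_sub_distrib]
    have hcard : ∑ _i : Fin d, (1 : ℤ) = (d : ℤ) := by simp
    have : ∑ i, (k i + 1) = (∑ i, k i) + (d : ℤ) := by
      rw [Finset.sum_add_distrib, hcard]
    rw [Finset.sum_add_distrib, hcard]
    linarith
  refine ⟨fun ℓ => by have := key ℓ; omega, fun ℓ => by have := key ℓ; omega, ?_⟩
  intro mmin Mmax h1 h2
  have hm1 : γ - Mmax ∈ {ℓ : ℤ | -1 ≤ N ℓ} := by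
    have hk1 := key (γ - Mmax)
    have : γ - (γ - Mmax) = Mmax := by ring
    rw [this] at hk1
    have := h2.1
    simp only [Set.mem_setOf_eq] at this ⊢
    omega
  have hm2 : γ - mmin ∈ {ℓ : ℤ | N ℓ ≤ -1} := by
    have hk1 := key mmin
    have := h1.1
    simp only [Set.mem_setOf_eq] at this ⊢
    omega
  have := h1.2 hm1
  have := h2.2 hm2
  omega
end

section
/- Fix Seifert data. For every integer ℓ with ℓ > γ one has N(ℓ) ≥ −1. -/
/-!
Since `⌈x/α⌉` is an integer, `α ⌈x/α⌉ ≤ x + α - 1` for integers `x` and `α > 0`, i.e. the ceiling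
exceeds `x/α` by at most `1 - 1/α`. Summing over the exceptional fibres gives
`N(ℓ) ≥ |e| ℓ - d + Σ 1/αᵢ`, and `|e| ℓ > |e| γ = d - 2 - Σ 1/αᵢ` for `ℓ > γ`.
So `N(ℓ) > -2`, and `N(ℓ) ≥ -1` by integrality.
-/

open Finset

lemma Int.cast_ceil_intCast_div_le {K : Type*} [Field K] [LinearOrder K] [IsStrictOrderedRing K]
    [FloorRing K] {a b : ℤ} (hb : 0 < b) :
    (⌈(a : K) / b⌉ : K) ≤ a / b + 1 - 1 / b := by
  have hbK : (0 : K) < b := Int.cast_pos.mpr hb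
  have hlt : (⌈(a : K) / b⌉ : K) * b < a + b := by
    have := mul_lt_mul_of_pos_right (Int.ceil_lt_add_one ((a : K) / b)) hbK
    rwa [add_mul, div_mul_cancel₀ _ hbK.ne', one_mul] at this
  have hle : ⌈(a : K) / b⌉ * b ≤ a + b - 1 := by
    have : ⌈(a : K) / b⌉ * b < a + b := by exact_mod_cast hlt
    omega
  calc (⌈(a : K) / b⌉ : K) ≤ (a + b - 1) / b := by
        rw [le_div_iff₀ hbK]; exact_mod_cast hle
    _ = a / b + 1 - 1 / b := by field_simp

lemma sum_cast_ceil_mul_div_le {ι : Type*} (s : Finset ι) (α ω : ι → ℤ)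
    (hα : ∀ i ∈ s, 0 < α i) (ℓ : ℤ) :
    ((∑ i ∈ s, ⌈((ℓ * ω i : ℤ) : ℚ) / (α i : ℚ)⌉ : ℤ) : ℚ) ≤
      ℓ * ∑ i ∈ s, (ω i : ℚ) / α i + #s - ∑ i ∈ s, 1 / (α i : ℚ) := by
  calc ((∑ i ∈ s, ⌈((ℓ * ω i : ℤ) : ℚ) / (α i : ℚ)⌉ : ℤ) : ℚ)
      ≤ ∑ i ∈ s, (((ℓ * ω i : ℤ) : ℚ) / α i + 1 - 1 / (α i : ℚ)) := by
        push_cast only [Int.cast_sum]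
        exact sum_le_sum fun i hi => Int.cast_ceil_intCast_div_le (hα i hi)
    _ = ℓ * ∑ i ∈ s, (ω i : ℚ) / α i + #s - ∑ i ∈ s, 1 / (α i : ℚ) := by
        simp only [sum_sub_distrib, sum_add_distrib, mul_sum, Int.cast_mul, mul_div_assoc,
          sum_const, nsmul_one]

theorem stmt_5_general
    (d : ℕ) (b₀ : ℤ)
    (α ω : Fin d → ℤ)
    (hω : ∀ i, 0 < ω i ∧ ω i < α i)
    (e : ℚ) (he : e = -(b₀ : ℚ) + ∑ i, (ω i : ℚ) / (α i : ℚ)) (heneg : e < 0)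
    (N : ℤ → ℤ)
    (hN : ∀ ℓ : ℤ, N ℓ = b₀ * ℓ - ∑ i, ⌈((ℓ * ω i : ℤ) : ℚ) / ((α i : ℤ) : ℚ)⌉)
    (γ : ℚ)
    (hγ : γ = ((d : ℚ) - 2 - ∑ i, 1 / (α i : ℚ)) / |e|) :
    ∀ ℓ : ℤ, γ < (ℓ : ℚ) → -1 ≤ N ℓ := by
  intro ℓ hℓ
  have hsum := sum_cast_ceil_mul_div_le univ α ω (fun i _ => (hω i).1.trans (hω i).2) ℓ
  rw [card_univ, Fintype.card_fin] at hsum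
  have hepos : 0 < |e| := abs_pos.mpr heneg.ne
  have hγe : |e| * γ = d - 2 - ∑ i, 1 / (α i : ℚ) := by
    rw [hγ, mul_div_cancel₀ _ hepos.ne']
  have hℓe : |e| * γ < |e| * ℓ := mul_lt_mul_of_pos_left hℓ hepos
  have hNℓ : (N ℓ : ℚ) = -e * ℓ + ℓ * ∑ i, (ω i : ℚ) / α i -
      ((∑ i, ⌈((ℓ * ω i : ℤ) : ℚ) / (α i : ℚ)⌉ : ℤ) : ℚ) := by
    rw [hN ℓ, he]; push_cast; ring
  rw [abs_of_neg heneg] at hγe hℓe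
  have : (-2 : ℚ) < N ℓ := by linarith
  have : (-2 : ℤ) < N ℓ := by exact_mod_cast this
  omega

/-- For any Seifert data, `N(ℓ) ≥ −1` for every integer `ℓ > γ`. -/
theorem stmt_5
    (d : ℕ) (hd : 3 ≤ d) (b₀ : ℤ)
    (α ω : Fin d → ℤ)
    (hω : ∀ i, 0 < ω i ∧ ω i < α i)
    (hcop : ∀ i, IsCoprime (α i) (ω i))
    (e : ℚ) (he : e = -(b₀ : ℚ) + ∑ i, (ω i : ℚ) / (α i : ℚ)) (heneg : e < 0)
    (N : ℤ → ℤ)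
    (hN : ∀ ℓ : ℤ, N ℓ = b₀ * ℓ - ∑ i, ⌈((ℓ * ω i : ℤ) : ℚ) / ((α i : ℤ) : ℚ)⌉)
    (γ : ℚ)
    (hγ : γ = ((d : ℚ) - 2 - ∑ i, 1 / (α i : ℚ)) / |e|) :
    ∀ ℓ : ℤ, γ < (ℓ : ℚ) → -1 ≤ N ℓ :=
  stmt_5_general d b₀ α ω hω e he heneg N hN γ hγ
end

section
/- Fix Seifert data. For every integer ℓ with ℓ > α + γ one has N(ℓ) ≥ 0. -/
lemma ceil_int_div_le (a b : ℤ) (hb : 0 < b) :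
    (⌈(a : ℚ) / (b : ℚ)⌉ : ℚ) ≤ (a : ℚ) / b + 1 - 1 / b := by
  have hbQ : (0 : ℚ) < (b : ℚ) := by exact_mod_cast hb
  have h1 : (⌈(a : ℚ) / b⌉ : ℚ) < (a : ℚ) / b + 1 := Int.ceil_lt_add_one _
  have h2 : (⌈(a : ℚ) / b⌉ : ℚ) * b < (a : ℚ) + b := by
    have := mul_lt_mul_of_pos_right h1 hbQ
    calc (⌈(a : ℚ) / b⌉ : ℚ) * b < ((a : ℚ) / b + 1) * b := this
      _ = (a : ℚ) + b := by field_simp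
  have h3 : ⌈(a : ℚ) / b⌉ * b < a + b := by exact_mod_cast h2
  have h4 : ⌈(a : ℚ) / b⌉ * b ≤ a + b - 1 := by omega
  have h5 : (⌈(a : ℚ) / b⌉ : ℚ) * b ≤ (a : ℚ) + b - 1 := by exact_mod_cast h4
  calc (⌈(a : ℚ) / b⌉ : ℚ) = (⌈(a : ℚ) / b⌉ : ℚ) * b / b := by field_simp
    _ ≤ ((a : ℚ) + b - 1) / b := by gcongr
    _ = (a : ℚ) / b + 1 - 1 / b := by field_simp

/-- For any Seifert data, `N(ℓ) ≥ 0` for every integer `ℓ > α + γ`. -/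
theorem stmt_7
    (d : ℕ) (hd : 3 ≤ d) (b₀ : ℤ)
    (α ω : Fin d → ℤ)
    (hω : ∀ i, 0 < ω i ∧ ω i < α i)
    (hcop : ∀ i, IsCoprime (α i) (ω i))
    (e : ℚ) (he : e = -(b₀ : ℚ) + ∑ i, (ω i : ℚ) / (α i : ℚ)) (heneg : e < 0)
    (N : ℤ → ℤ)
    (hN : ∀ ℓ : ℤ, N ℓ = b₀ * ℓ - ∑ i, ⌈((ℓ * ω i : ℤ) : ℚ) / ((α i : ℤ) : ℚ)⌉)
    (A : ℤ) (hA : A = Finset.univ.lcm α)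
    (γ : ℚ)
    (hγ : γ = ((d : ℚ) - 2 - ∑ i, 1 / (α i : ℚ)) / |e|) :
    ∀ ℓ : ℤ, (A : ℚ) + γ < (ℓ : ℚ) → 0 ≤ N ℓ := by
  intro ℓ hℓ
  have hαpos : ∀ i, (0 : ℤ) < α i := fun i => lt_trans (hω i).1 (hω i).2
  have hαQ : ∀ i, (0 : ℚ) < (α i : ℚ) := fun i => by exact_mod_cast hαpos i
  have hdvd : ∀ i, α i ∣ A := fun i => hA ▸ Finset.dvd_lcm (Finset.mem_univ i)
  -- positivity of A
  have hAne : A ≠ 0 := by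
    rw [hA]
    intro h
    rw [Finset.lcm_eq_zero_iff] at h
    obtain ⟨i, _, hi⟩ := h
    exact (hαpos i).ne' hi
  have hAnn : 0 ≤ A := by
    have := Finset.normalize_lcm (s := (Finset.univ : Finset (Fin d))) (f := α)
    rw [← hA, ← Int.abs_eq_normalize] at this
    rw [← this]; exact abs_nonneg A
  have hApos : 0 < A := lt_of_le_of_ne hAnn (Ne.symm hAne)
  -- e * A is a negative integer, hence ≤ -1
  set m : ℤ := -(b₀ * A) + ∑ i, ω i * (A / α i) with hm
  have hmQ : (m : ℚ) = e * A := by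
    rw [hm, he]
    push_cast
    rw [add_mul, neg_mul, Finset.sum_mul]
    congr 1
    apply Finset.sum_congr rfl
    intro i _
    rw [Int.cast_div (hdvd i) (by exact_mod_cast (hαpos i).ne' : ((α i : ℚ)) ≠ 0)]
    ring
  have hmneg : (m : ℚ) < 0 := by
    rw [hmQ]
    exact mul_neg_of_neg_of_pos heneg (by exact_mod_cast hApos)
  have hmle : (m : ℚ) ≤ -1 := by
    have : m < 0 := by exact_mod_cast hmneg
    have : m ≤ -1 := by omega
    exact_mod_cast this
  have heA : e * (A : ℚ) ≤ -1 := hmQ ▸ hmle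
  -- the crude ceiling bound
  have hsum : ((∑ i, ⌈((ℓ * ω i : ℤ) : ℚ) / ((α i : ℤ) : ℚ)⌉ : ℤ) : ℚ)
      ≤ ∑ i, ((ℓ : ℚ) * ω i / α i + 1 - 1 / α i) := by
    push_cast
    apply Finset.sum_le_sum
    intro i _
    have := ceil_int_div_le (ℓ * ω i) (α i) (hαpos i)
    push_cast at this ⊢
    convert this using 2
  have hNQ : ((N ℓ : ℤ) : ℚ) ≥ (b₀ : ℚ) * ℓ - ∑ i, ((ℓ : ℚ) * ω i / α i + 1 - 1 / α i) := by
    rw [hN ℓ]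
    push_cast
    have := hsum
    push_cast at this
    linarith
  have hsplit : ∑ i, ((ℓ : ℚ) * ω i / α i + 1 - 1 / α i)
      = (ℓ : ℚ) * ∑ i, (ω i : ℚ) / α i + d - ∑ i, 1 / (α i : ℚ) := by
    rw [Finset.sum_sub_distrib, Finset.sum_add_distrib, Finset.mul_sum]
    simp [mul_div_assoc]
  have hNe : ((N ℓ : ℤ) : ℚ) ≥ -e * ℓ - d + ∑ i, 1 / (α i : ℚ) := by
    rw [he]
    have := hNQ
    rw [hsplit] at this
    linarith
  -- γ * |e| = d - 2 - ∑ 1/α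
  have habs : |e| = -e := abs_of_neg heneg
  have hγe : γ * (-e) = (d : ℚ) - 2 - ∑ i, 1 / (α i : ℚ) := by
    rw [hγ, habs, div_mul_cancel₀]
    linarith
  have hkey : -e * (ℓ : ℚ) > -e * A + ((d : ℚ) - 2 - ∑ i, 1 / (α i : ℚ)) := by
    have hepos : 0 < -e := by linarith
    have := mul_lt_mul_of_pos_left hℓ hepos
    calc -e * (ℓ : ℚ) > -e * ((A : ℚ) + γ) := this
      _ = -e * A + γ * (-e) := by ring
      _ = -e * A + ((d : ℚ) - 2 - ∑ i, 1 / (α i : ℚ)) := by rw [hγe]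
  have hfin : ((N ℓ : ℤ) : ℚ) > -1 := by
    have h1 : -e * (A : ℚ) ≥ 1 := by nlinarith
    calc ((N ℓ : ℤ) : ℚ) ≥ -e * ℓ - d + ∑ i, 1 / (α i : ℚ) := hNe
      _ > (-e * A + ((d : ℚ) - 2 - ∑ i, 1 / (α i : ℚ))) - d + ∑ i, 1 / (α i : ℚ) := by linarith
      _ = -e * A - 2 := by ring
      _ ≥ -1 := by linarith
  have : N ℓ > -1 := by exact_mod_cast hfin
  omega
end

section
/- Fix Seifert integral homology sphere data. Then N(ℓ) + N(α + γ − ℓ) = −1 for every integer ℓ. -/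
/-- Ceiling of an integer over a positive integer, as an ediv. -/
lemma ceil_int_div (s n : ℤ) (hn : 0 < n) :
    ⌈((s : ℚ)) / (n : ℚ)⌉ = -((-s) / n) := by
  have hn' : ((n.toNat : ℤ)) = n := Int.toNat_of_nonneg hn.le
  have hnq : ((n.toNat : ℕ) : ℚ) = (n : ℚ) := by exact_mod_cast congrArg (fun z : ℤ => (z : ℚ)) hn'
  rw [show ((s : ℚ)) / (n : ℚ) = -(((-s : ℤ) : ℚ) / ((n.toNat : ℕ) : ℚ)) from by
    rw [hnq]; push_cast; ring, Int.ceil_neg, Rat.floor_intCast_div_natCast, hn']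

/-- Key pairing lemma for ceilings. -/
lemma ceil_pair (n s t k : ℤ) (h2 : 2 ≤ n) (h : s + t - 1 = n * k) :
    ⌈((s : ℚ)) / (n : ℚ)⌉ + ⌈((t : ℚ)) / (n : ℚ)⌉ = k + 1 := by
  have hn : 0 < n := by omega
  rw [ceil_int_div s n hn, ceil_int_div t n hn]
  have e1 := Int.mul_ediv_add_emod (-s) n
  have e2 := Int.mul_ediv_add_emod (-t) n
  have r1nn := Int.emod_nonneg (-s) (by omega : n ≠ 0)
  have r2nn := Int.emod_nonneg (-t) (by omega : n ≠ 0)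
  have r1lt := Int.emod_lt_of_pos (-s) hn
  have r2lt := Int.emod_lt_of_pos (-t) hn
  set q1 := (-s) / n
  set q2 := (-t) / n
  set r1 := (-s) % n
  set r2 := (-t) % n
  have hc : n * (-(q1 + q2 + k)) = r1 + r2 + 1 := by linarith
  set c := -(q1 + q2 + k) with hcdef
  have hc1 : 1 ≤ c := by nlinarith
  have hc2 : c ≤ 1 := by nlinarith
  have hc3 : c = 1 := le_antisymm hc2 hc1
  omega

/-- For Seifert integral homology sphere data,
`N(ℓ) + N(α + γ − ℓ) = −1` for every integer `ℓ`. -/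
theorem stmt_8
    (d : ℕ) (hd : 3 ≤ d)
    (α : Fin d → ℤ) (hα2 : ∀ i, 2 ≤ α i)
    (hcop : ∀ i j, i ≠ j → IsCoprime (α i) (α j))
    (A : ℤ) (hA : A = ∏ i, α i)
    (a : Fin d → ℤ) (ha : ∀ i, a i = A / α i)
    (b₀ : ℤ) (ω : Fin d → ℤ)
    (hω : ∀ i, 0 < ω i ∧ ω i < α i)
    (hdio : A * b₀ - ∑ i, ω i * a i = 1)
    (N : ℤ → ℤ)
    (hN : ∀ ℓ : ℤ, N ℓ = b₀ * ℓ - ∑ i, ⌈((ℓ * ω i : ℤ) : ℚ) / ((α i : ℤ) : ℚ)⌉)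
    (γ : ℤ) (hγ : γ = A * ((d : ℤ) - 2) - ∑ i, a i) :
    ∀ ℓ : ℤ, N ℓ + N (A + γ - ℓ) = -1 := by
  have hα0 : ∀ i, (0 : ℤ) < α i := fun i => by have := hα2 i; omega
  have ha' : ∀ i, a i = ∏ j ∈ Finset.univ.erase i, α j := by
    intro i
    rw [ha, hA, ← Finset.mul_prod_erase _ _ (Finset.mem_univ i),
      Int.mul_ediv_cancel_left _ (hα0 i).ne']
  have hAa : ∀ i, A = α i * a i := by
    intro i
    rw [ha' i, hA, ← Finset.mul_prod_erase _ _ (Finset.mem_univ i)]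
  have hdvd : ∀ i j, j ≠ i → α i ∣ a j := by
    intro i j hij
    rw [ha' j]
    exact Finset.dvd_prod_of_mem _ (Finset.mem_erase.mpr ⟨fun h => hij h.symm, Finset.mem_univ i⟩)
  have hApos : (0 : ℤ) < A := by
    rw [hA]; exact Finset.prod_pos fun i _ => hα0 i
  -- divisibility: α i ∣ (A + γ) * ω i - 1
  have hsum1 : ∀ i : Fin d, ∑ j, (ω j - ω i) * a j
      = (∑ j, ω j * a j) - ω i * ∑ j, a j := by
    intro i
    rw [Finset.mul_sum, ← Finset.sum_sub_distrib]
    exact Finset.sum_congr rfl fun j _ => by ring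
  have hdvdL : ∀ i, α i ∣ (A + γ) * ω i - 1 := by
    intro i
    have key : (A + γ) * ω i - 1
        = A * (((d : ℤ) - 1) * ω i - b₀) + ∑ j, (ω j - ω i) * a j := by
      rw [hsum1 i]
      linear_combination (ω i) * hγ + hdio
    rw [key]
    apply dvd_add
    · exact Dvd.dvd.mul_right ⟨a i, hAa i⟩ _
    · refine Finset.dvd_sum fun j _ => ?_
      by_cases hji : j = i
      · subst hji; simp
      · exact Dvd.dvd.mul_left (hdvd i j hji) _
  set k : Fin d → ℤ := fun i => ((A + γ) * ω i - 1) / α i with hkdef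
  have hk : ∀ i, α i * k i = (A + γ) * ω i - 1 :=
    fun i => Int.mul_ediv_cancel' (hdvdL i)
  -- sum of k
  have hKA : A * (∑ i, k i) = A * (b₀ * (A + γ) - (d : ℤ) + 1) := by
    have step : ∀ i : Fin d, A * k i = (A + γ) * (ω i * a i) - a i := by
      intro i
      linear_combination (k i) * hAa i + (a i) * hk i
    rw [Finset.mul_sum]
    rw [Finset.sum_congr rfl fun i _ => step i]
    rw [Finset.sum_sub_distrib, ← Finset.mul_sum]
    linear_combination (-(A + γ)) * hdio - hγ
  have hKsum : (∑ i, k i) = b₀ * (A + γ) - (d : ℤ) + 1 :=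
    mul_left_cancel₀ hApos.ne' hKA
  intro ℓ
  rw [hN ℓ, hN (A + γ - ℓ)]
  have hceil : ∀ i : Fin d,
      ⌈((ℓ * ω i : ℤ) : ℚ) / ((α i : ℤ) : ℚ)⌉
        + ⌈(((A + γ - ℓ) * ω i : ℤ) : ℚ) / ((α i : ℤ) : ℚ)⌉ = k i + 1 := by
    intro i
    exact ceil_pair (α i) (ℓ * ω i) ((A + γ - ℓ) * ω i) (k i) (hα2 i)
      (by linear_combination (hk i).symm)
  have hsum2 : (∑ i, ⌈((ℓ * ω i : ℤ) : ℚ) / ((α i : ℤ) : ℚ)⌉)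
      + ∑ i, ⌈(((A + γ - ℓ) * ω i : ℤ) : ℚ) / ((α i : ℤ) : ℚ)⌉
      = (∑ i, k i) + d := by
    rw [← Finset.sum_add_distrib]
    rw [Finset.sum_congr rfl fun i _ => hceil i]
    rw [Finset.sum_add_distrib]
    simp
  linarith [hsum2, hKsum]
end

section
/- Fix Seifert integral homology sphere data. Then for every integer ℓ: ℓ ∈ 𝒮 if and only if α + γ − ℓ ∉ 𝒮 (i.e., N(ℓ) ≥ 0 ⟺ N(α + γ − ℓ) ≤ −1). In particular, the numerical semigroup 𝒮 is symmetric with Frobenius number α + γ. -/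
lemma myfloor (p q : ℤ) (hq : 0 < q) : ⌊(p:ℚ)/(q:ℚ)⌋ = p / q := by
  have h1 : ((q.toNat : ℕ) : ℤ) = q := Int.toNat_of_nonneg hq.le
  have h2 : ((q:ℤ):ℚ) = ((q.toNat : ℕ) : ℚ) := by exact_mod_cast h1.symm
  rw [h2, Rat.floor_intCast_div_natCast, h1]

lemma myceil (p q : ℤ) (hq : 0 < q) : ⌈(p:ℚ)/(q:ℚ)⌉ = -((-p) / q) := by
  have : ⌈(p:ℚ)/(q:ℚ)⌉ = -⌊-((p:ℚ)/(q:ℚ))⌋ := by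
    rw [Int.floor_neg]; ring
  rw [this, ← neg_div, ← Int.cast_neg, myfloor _ _ hq]

lemma ediv_small_neg (t q : ℤ) (h1 : -q ≤ t) (h2 : t < 0) : t / q = -1 := by
  have hq : 0 < q := by omega
  have : t = (t + q) + (-1) * q := by ring
  rw [this, Int.add_mul_ediv_right _ _ hq.ne',
    Int.ediv_eq_zero_of_lt (by omega) (by omega)]; ring

lemma ediv_pair (x q : ℤ) (hq : 0 < q) : (-x) / q + (x - 1) / q = -1 := by
  have hq' : q ≠ 0 := hq.ne'
  have hmod := Int.emod_nonneg x hq'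
  have hmod2 := Int.emod_lt_of_pos x hq
  have hx : x % q + (x / q) * q = x := by rw [mul_comm]; exact Int.emod_add_mul_ediv x q
  have e1 : (-x) / q = (-(x % q)) / q - x / q := by
    have : -x = (-(x % q)) + (-(x / q)) * q := by linarith
    rw [this, Int.add_mul_ediv_right _ _ hq']; ring
  have e2 : (x - 1) / q = (x % q - 1) / q + x / q := by
    have : x - 1 = (x % q - 1) + (x / q) * q := by linarith
    rw [this, Int.add_mul_ediv_right _ _ hq']
  rw [e1, e2]
  rcases eq_or_lt_of_le hmod with h | h
  · rw [← h]; simp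
    exact ediv_small_neg _ _ (by omega) (by omega)
  · have a1 : (-(x % q)) / q = -1 := ediv_small_neg _ _ (by omega) (by omega)
    have a2 : (x % q - 1) / q = 0 := Int.ediv_eq_zero_of_lt (by omega) (by omega)
    omega

lemma ceil_pair_s9 (x k q : ℤ) (hq : 0 < q) :
    ⌈(x:ℚ)/(q:ℚ)⌉ + ⌈((k*q+1-x : ℤ):ℚ)/(q:ℚ)⌉ = k + 1 := by
  rw [myceil _ _ hq, myceil _ _ hq]
  have h : -(k*q+1-x) = (x - 1) + (-k) * q := by ring
  rw [h, Int.add_mul_ediv_right _ _ hq.ne']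
  have := ediv_pair x q hq
  omega

/-- For Seifert integral homology sphere data, the semigroup `𝒮` is symmetric:
`ℓ ∈ 𝒮 ↔ α + γ − ℓ ∉ 𝒮`, with Frobenius number `α + γ`. -/
theorem stmt_9
    (d : ℕ) (hd : 3 ≤ d)
    (α : Fin d → ℤ) (hα2 : ∀ i, 2 ≤ α i)
    (hcop : ∀ i j, i ≠ j → IsCoprime (α i) (α j))
    (A : ℤ) (hA : A = ∏ i, α i)
    (a : Fin d → ℤ) (ha : ∀ i, a i = A / α i)
    (b₀ : ℤ) (ω : Fin d → ℤ)
    (hω : ∀ i, 0 < ω i ∧ ω i < α i)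
    (hdio : A * b₀ - ∑ i, ω i * a i = 1)
    (N : ℤ → ℤ)
    (hN : ∀ ℓ : ℤ, N ℓ = b₀ * ℓ - ∑ i, ⌈((ℓ * ω i : ℤ) : ℚ) / ((α i : ℤ) : ℚ)⌉)
    (γ : ℤ) (hγ : γ = A * ((d : ℤ) - 2) - ∑ i, a i) :
    (∀ ℓ : ℤ, 0 ≤ N ℓ ↔ N (A + γ - ℓ) ≤ -1)
    ∧ IsGreatest {ℓ : ℤ | N ℓ ≤ -1} (A + γ) := by
  have hαpos : ∀ i, (0:ℤ) < α i := fun i => lt_of_lt_of_le (by norm_num) (hα2 i)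
  have hdvd : ∀ i, α i ∣ A := fun i => hA ▸ Finset.dvd_prod_of_mem α (Finset.mem_univ i)
  have haA : ∀ i, a i * α i = A := fun i => by rw [ha i]; exact Int.ediv_mul_cancel (hdvd i)
  have hApos : 0 < A := hA ▸ Finset.prod_pos (fun i _ => hαpos i)
  have hija : ∀ i j, i ≠ j → α i ∣ a j := fun i j hij =>
    (hcop i j hij).dvd_of_dvd_mul_right (by rw [haA j]; exact hdvd i)
  -- key divisibility
  have hkey : ∀ i, α i ∣ (A + γ) * ω i - 1 := by
    intro i
    have h1 : (A + γ) * ω i - 1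
        = (A*((d:ℤ)-1)*ω i - A*b₀) + ∑ j, (ω j * a j - ω i * a j) := by
      rw [Finset.sum_sub_distrib, ← Finset.mul_sum]
      linear_combination (ω i) * hγ + hdio
    rw [h1]
    refine dvd_add (dvd_sub (((hdvd i).mul_right _).mul_right _) ((hdvd i).mul_right _))
      (Finset.dvd_sum fun j _ => ?_)
    by_cases hji : j = i
    · subst hji; simp
    · have : ω j * a j - ω i * a j = (ω j - ω i) * a j := by ring
      rw [this]
      exact (hija i j fun h => hji h.symm).mul_left _
  set k : Fin d → ℤ := fun i => ((A + γ) * ω i - 1) / α i with hkdef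
  have hk : ∀ i, k i * α i = (A + γ) * ω i - 1 :=
    fun i => Int.ediv_mul_cancel (hkey i)
  have hpair : ∀ (ℓ : ℤ) (i : Fin d),
      ⌈((ℓ * ω i : ℤ):ℚ)/((α i : ℤ):ℚ)⌉ + ⌈(((A+γ-ℓ) * ω i : ℤ):ℚ)/((α i : ℤ):ℚ)⌉
        = k i + 1 := by
    intro ℓ i
    have h1 : (A+γ-ℓ) * ω i = k i * α i + 1 - ℓ * ω i := by rw [hk i]; ring
    rw [h1]
    exact ceil_pair_s9 (ℓ * ω i) (k i) (α i) (hαpos i)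
  -- the fundamental symmetry identity
  have hNN : ∀ ℓ : ℤ, N ℓ + N (A + γ - ℓ) = -1 := by
    intro ℓ
    have hs : ∑ i, ⌈((ℓ * ω i : ℤ):ℚ)/((α i : ℤ):ℚ)⌉
        + ∑ i, ⌈(((A+γ-ℓ) * ω i : ℤ):ℚ)/((α i : ℤ):ℚ)⌉ = ∑ i, (k i + 1) := by
      rw [← Finset.sum_add_distrib]
      exact Finset.sum_congr rfl fun i _ => hpair ℓ i
    have hAk : ∀ i, A * k i = ((A+γ) * ω i - 1) * a i := by
      intro i
      have : A * k i = a i * (k i * α i) := by rw [← haA i]; ring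
      rw [this, hk i]; ring
    have hbig : A * (b₀ * (A+γ) - ∑ i, k i) = A * ((d:ℤ) - 1) := by
      have h2 : A * ∑ i, k i = ∑ i, ((A+γ) * ω i - 1) * a i := by
        rw [Finset.mul_sum]; exact Finset.sum_congr rfl fun i _ => hAk i
      have h3 : ∑ i, ((A+γ) * ω i - 1) * a i
          = (A+γ) * ∑ i, ω i * a i - ∑ i, a i := by
        rw [Finset.mul_sum, ← Finset.sum_sub_distrib]
        exact Finset.sum_congr rfl fun i _ => by ring
      have h4 : ∑ i, ω i * a i = A * b₀ - 1 := by linarith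
      have h5 : ∑ i, a i = A * ((d:ℤ)-2) - γ := by linarith
      rw [mul_sub, h2, h3, h4, h5]; ring
    have hmain : b₀ * (A+γ) - ∑ i, k i = (d:ℤ) - 1 :=
      mul_left_cancel₀ hApos.ne' hbig
    have hcard : ∑ i : Fin d, (k i + 1) = (∑ i, k i) + (d:ℤ) := by
      rw [Finset.sum_add_distrib]; simp [mul_comm]
    rw [hN ℓ, hN (A + γ - ℓ)]
    have := hs
    rw [hcard] at this
    linarith
  -- negativity on negative integers
  have hneg : ∀ m : ℤ, m < 0 → N m ≤ -1 := by
    intro m hm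
    have hAQ : ((A:ℤ):ℚ) ≠ 0 := Int.cast_ne_zero.mpr hApos.ne'
    have hterm : ∀ i : Fin d,
        ((m * ω i : ℤ):ℚ)/((α i : ℤ):ℚ) = ((m * (ω i * a i) : ℤ):ℚ)/((A:ℤ):ℚ) := by
      intro i
      have hαQ : ((α i :ℤ):ℚ) ≠ 0 := Int.cast_ne_zero.mpr (hαpos i).ne'
      rw [div_eq_div_iff hαQ hAQ]
      have hint : (m * ω i) * A = (m * (ω i * a i)) * α i := by rw [← haA i]; ring
      exact_mod_cast hint
    have h2 : ∑ i, ((m * ω i : ℤ):ℚ)/((α i : ℤ):ℚ)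
        = ((m * (A * b₀ - 1) : ℤ):ℚ)/((A:ℤ):ℚ) := by
      rw [Finset.sum_congr rfl fun i _ => hterm i, ← Finset.sum_div]
      congr 1
      have h4 : ∑ i, ω i * a i = A * b₀ - 1 := by linarith
      push_cast [← h4, Finset.mul_sum]
      ring
    have h1 : ∑ i, ((m * ω i : ℤ):ℚ)/((α i : ℤ):ℚ)
        ≤ ∑ i, ((⌈((m * ω i : ℤ):ℚ)/((α i : ℤ):ℚ)⌉ : ℤ):ℚ) :=
      Finset.sum_le_sum fun i _ => Int.le_ceil _
    have hle : ((N m : ℤ):ℚ) ≤ (m:ℚ)/((A:ℤ):ℚ) := by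
      rw [hN m]
      push_cast
      rw [h2] at h1
      have heq : (b₀:ℚ) * (m:ℚ) - ((m * (A * b₀ - 1) : ℤ):ℚ)/((A:ℤ):ℚ)
          = (m:ℚ)/((A:ℤ):ℚ) := by
        field_simp
        push_cast
        ring
      push_cast at h1 heq ⊢
      linarith
    have hlt : ((N m : ℤ):ℚ) < 0 := by
      refine lt_of_le_of_lt hle (div_neg_of_neg_of_pos ?_ ?_)
      · exact_mod_cast hm
      · exact_mod_cast hApos
    have : N m < 0 := by exact_mod_cast hlt
    omega
  have h0 : N 0 = 0 := by rw [hN 0]; simp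
  refine ⟨fun ℓ => ?_, ?_, ?_⟩
  · have := hNN ℓ; omega
  · show N (A + γ) ≤ -1
    have := hNN 0
    rw [sub_zero] at this
    omega
  · intro ℓ hℓ
    simp only [Set.mem_setOf_eq] at hℓ
    by_contra hlt
    push_neg at hlt
    have h1 := hneg (A + γ - ℓ) (by omega)
    have h2 := hNN ℓ
    omega
end

section
/- Fix Seifert integral homology sphere data. Then ℳ = −α + 𝒮, i.e., {ℓ ∈ ℤ : N(ℓ) ≥ −1} = {−α + s : s ∈ ℤ, N(s) ≥ 0}; in other words, the 𝒮-module ℳ is generated over 𝒮 by the single element −α. In particular, min ℳ = −α and max{ℓ ∈ ℤ : N(ℓ) ≤ −2} = γ. -/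
/-- For Seifert integral homology sphere data, `ℳ = −α + 𝒮`; in particular
`min ℳ = −α` and the Frobenius number of `ℳ` (largest `ℓ` with `N(ℓ) ≤ −2`) is `γ`. -/
theorem stmt_10
    (d : ℕ) (hd : 3 ≤ d)
    (α : Fin d → ℤ) (hα2 : ∀ i, 2 ≤ α i)
    (hcop : ∀ i j, i ≠ j → IsCoprime (α i) (α j))
    (A : ℤ) (hA : A = ∏ i, α i)
    (a : Fin d → ℤ) (ha : ∀ i, a i = A / α i)
    (b₀ : ℤ) (ω : Fin d → ℤ)
    (hω : ∀ i, 0 < ω i ∧ ω i < α i)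
    (hdio : A * b₀ - ∑ i, ω i * a i = 1)
    (N : ℤ → ℤ)
    (hN : ∀ ℓ : ℤ, N ℓ = b₀ * ℓ - ∑ i, ⌈((ℓ * ω i : ℤ) : ℚ) / ((α i : ℤ) : ℚ)⌉)
    (γ : ℤ) (hγ : γ = A * ((d : ℤ) - 2) - ∑ i, a i) :
    ({ℓ : ℤ | -1 ≤ N ℓ} = (fun s : ℤ => -A + s) '' {s : ℤ | 0 ≤ N s})
    ∧ IsLeast {ℓ : ℤ | -1 ≤ N ℓ} (-A)
    ∧ IsGreatest {ℓ : ℤ | N ℓ ≤ -2} γ := by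
  have hαpos : ∀ i, (0:ℤ) < α i := fun i => lt_of_lt_of_le two_pos (hα2 i)
  have hdvdA : ∀ i, α i ∣ A := fun i => hA ▸ Finset.dvd_prod_of_mem α (Finset.mem_univ i)
  have hAprod : ∀ i, A = α i * a i := by
    intro i
    rw [ha i, Int.mul_ediv_cancel' (hdvdA i)]
  have hApos : 0 < A := hA ▸ Finset.prod_pos (fun i _ => hαpos i)
  have hapos : ∀ i, 0 < a i := by
    intro i
    nlinarith [hApos, hαpos i, hAprod i]
  -- a j as a product over erase j
  have haprod : ∀ j, a j = ∏ k ∈ Finset.univ.erase j, α k := by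
    intro j
    have h1 : α j * a j = α j * ∏ k ∈ Finset.univ.erase j, α k := by
      rw [← hAprod j, hA, Finset.mul_prod_erase _ _ (Finset.mem_univ j)]
    exact mul_left_cancel₀ (ne_of_gt (hαpos j)) h1
  have hdvda : ∀ i j, i ≠ j → α i ∣ a j := by
    intro i j hij
    rw [haprod j]
    exact Finset.dvd_prod_of_mem α (Finset.mem_erase.mpr ⟨hij, Finset.mem_univ i⟩)
  -- ceiling bounds, termwise
  have hceil_lb : ∀ (ℓ : ℤ) (i : Fin d),
      ℓ * ω i ≤ α i * ⌈((ℓ * ω i : ℤ) : ℚ) / ((α i : ℤ) : ℚ)⌉ := by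
    intro ℓ i
    have h0 : (0:ℚ) < ((α i : ℤ) : ℚ) := by exact_mod_cast hαpos i
    have h := Int.le_ceil (((ℓ * ω i : ℤ) : ℚ) / ((α i : ℤ) : ℚ))
    rw [div_le_iff₀ h0] at h
    have h' : ((ℓ * ω i : ℤ) : ℚ) ≤ ((α i * ⌈((ℓ * ω i : ℤ) : ℚ) / ((α i : ℤ) : ℚ)⌉ : ℤ) : ℚ) := by
      push_cast at h ⊢
      linarith
    exact_mod_cast h'
  have hceil_ub : ∀ (ℓ : ℤ) (i : Fin d),
      α i * ⌈((ℓ * ω i : ℤ) : ℚ) / ((α i : ℤ) : ℚ)⌉ ≤ ℓ * ω i + α i - 1 := by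
    intro ℓ i
    have h0 : (0:ℚ) < ((α i : ℤ) : ℚ) := by exact_mod_cast hαpos i
    have h := Int.ceil_lt_add_one (((ℓ * ω i : ℤ) : ℚ) / ((α i : ℤ) : ℚ))
    set c : ℤ := ⌈((ℓ * ω i : ℤ) : ℚ) / ((α i : ℤ) : ℚ)⌉ with hc
    have h1 : ((c : ℚ) - 1) < ((ℓ * ω i : ℤ) : ℚ) / ((α i : ℤ) : ℚ) := by linarith
    rw [lt_div_iff₀ h0] at h1
    have h2 : (((c - 1) * α i : ℤ) : ℚ) < ((ℓ * ω i : ℤ) : ℚ) := by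
      push_cast at h1 ⊢; linarith
    have h3 : (c - 1) * α i < ℓ * ω i := by exact_mod_cast h2
    nlinarith [h3]
  -- A * ceil bounds
  have hAceil_lb : ∀ (ℓ : ℤ) (i : Fin d),
      ℓ * ω i * a i ≤ A * ⌈((ℓ * ω i : ℤ) : ℚ) / ((α i : ℤ) : ℚ)⌉ := by
    intro ℓ i
    have h := mul_le_mul_of_nonneg_right (hceil_lb ℓ i) (le_of_lt (hapos i))
    calc ℓ * ω i * a i ≤ α i * ⌈((ℓ * ω i : ℤ) : ℚ) / ((α i : ℤ) : ℚ)⌉ * a i := h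
      _ = A * ⌈((ℓ * ω i : ℤ) : ℚ) / ((α i : ℤ) : ℚ)⌉ := by rw [hAprod i]; ring
  have hAceil_ub : ∀ (ℓ : ℤ) (i : Fin d),
      A * ⌈((ℓ * ω i : ℤ) : ℚ) / ((α i : ℤ) : ℚ)⌉ ≤ (ℓ * ω i + α i - 1) * a i := by
    intro ℓ i
    have h := mul_le_mul_of_nonneg_right (hceil_ub ℓ i) (le_of_lt (hapos i))
    calc A * ⌈((ℓ * ω i : ℤ) : ℚ) / ((α i : ℤ) : ℚ)⌉
        = α i * ⌈((ℓ * ω i : ℤ) : ℚ) / ((α i : ℤ) : ℚ)⌉ * a i := by rw [hAprod i]; ring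
      _ ≤ (ℓ * ω i + α i - 1) * a i := h
  have hsumαa : ∑ i, α i * a i = (d : ℤ) * A := by
    rw [Finset.sum_congr rfl (fun i _ => (hAprod i).symm)]
    simp [Finset.sum_const, Fintype.card_fin, mul_comm]
  -- key bounds on A * N ℓ
  have key1 : ∀ ℓ : ℤ, A * N ℓ ≤ ℓ := by
    intro ℓ
    rw [hN ℓ]
    have hsum : ∑ i, ℓ * ω i * a i ≤ ∑ i, A * ⌈((ℓ * ω i : ℤ) : ℚ) / ((α i : ℤ) : ℚ)⌉ :=
      Finset.sum_le_sum (fun i _ => hAceil_lb ℓ i)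
    have e1 : ∑ i, ℓ * ω i * a i = ℓ * ∑ i, ω i * a i := by
      rw [Finset.mul_sum]; exact Finset.sum_congr rfl (fun i _ => by ring)
    rw [e1] at hsum
    rw [mul_sub, Finset.mul_sum]
    have e : A * (b₀ * ℓ) - ℓ * (∑ i, ω i * a i) = ℓ := by linear_combination ℓ * hdio
    linarith [hsum, e]
  have key2 : ∀ ℓ : ℤ, ℓ + (∑ i, a i) - (d : ℤ) * A ≤ A * N ℓ := by
    intro ℓ
    rw [hN ℓ]
    have hsum : ∑ i, A * ⌈((ℓ * ω i : ℤ) : ℚ) / ((α i : ℤ) : ℚ)⌉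
        ≤ ∑ i, (ℓ * ω i + α i - 1) * a i :=
      Finset.sum_le_sum (fun i _ => hAceil_ub ℓ i)
    have e1 : ∑ i, (ℓ * ω i + α i - 1) * a i
        = ℓ * (∑ i, ω i * a i) + (∑ i, α i * a i) - ∑ i, a i := by
      rw [Finset.mul_sum, ← Finset.sum_add_distrib, ← Finset.sum_sub_distrib]
      exact Finset.sum_congr rfl (fun i _ => by ring)
    rw [e1, hsumαa] at hsum
    rw [mul_sub, Finset.mul_sum]
    have e : A * (b₀ * ℓ) - ℓ * (∑ i, ω i * a i) = ℓ := by linear_combination ℓ * hdio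
    linarith [hsum, e]
  -- shift lemma
  have hshift : ∀ ℓ : ℤ, N (ℓ + A) = N ℓ + 1 := by
    intro ℓ
    rw [hN (ℓ + A), hN ℓ]
    have hterm : ∀ i : Fin d,
        ⌈(((ℓ + A) * ω i : ℤ) : ℚ) / ((α i : ℤ) : ℚ)⌉
        = ⌈((ℓ * ω i : ℤ) : ℚ) / ((α i : ℤ) : ℚ)⌉ + ω i * a i := by
      intro i
      have h0 : ((α i : ℤ) : ℚ) ≠ 0 := by
        have : (0:ℚ) < ((α i : ℤ) : ℚ) := by exact_mod_cast hαpos i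
        linarith
      have hq : ((A : ℤ) : ℚ) = ((α i : ℤ) : ℚ) * ((a i : ℤ) : ℚ) := by exact_mod_cast hAprod i
      have harg : (((ℓ + A) * ω i : ℤ) : ℚ) / ((α i : ℤ) : ℚ)
          = ((ℓ * ω i : ℤ) : ℚ) / ((α i : ℤ) : ℚ) + ((ω i * a i : ℤ) : ℚ) := by
        push_cast
        field_simp
        linear_combination ((ω i : ℚ)) * hq
      rw [harg, Int.ceil_add_intCast]
    rw [Finset.sum_congr rfl (fun i _ => hterm i), Finset.sum_add_distrib]
    linear_combination hdio
  -- N 0 = 0 and N (-A) = -1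
  have hN0 : N 0 = 0 := by
    rw [hN 0]; simp
  have hNnegA : N (-A) = -1 := by
    have := hshift (-A)
    rw [show -A + A = 0 by ring, hN0] at this
    omega
  -- N γ = -2
  have hNγ : N γ = -2 := by
    have hterm : ∀ i : Fin d,
        α i * ⌈((γ * ω i : ℤ) : ℚ) / ((α i : ℤ) : ℚ)⌉ = γ * ω i - 1 + α i := by
      intro i
      have hdvd1 : α i ∣ γ + a i := by
        have h1 : γ + a i = A * ((d : ℤ) - 2) - ∑ j ∈ Finset.univ.erase i, a j := by
          rw [hγ, ← Finset.add_sum_erase _ a (Finset.mem_univ i)]; ring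
        rw [h1]
        exact dvd_sub (Dvd.dvd.mul_right (hdvdA i) _)
          (Finset.dvd_sum (fun j hj => hdvda i j (Ne.symm (Finset.mem_erase.mp hj).1)))
      have hdvd2 : α i ∣ ω i * a i + 1 := by
        have h1 : ω i * a i + 1 = A * b₀ - ∑ j ∈ Finset.univ.erase i, ω j * a j := by
          rw [← hdio, ← Finset.add_sum_erase _ (fun j => ω j * a j) (Finset.mem_univ i)]
          ring
        rw [h1]
        exact dvd_sub (Dvd.dvd.mul_right (hdvdA i) _)
          (Finset.dvd_sum (fun j hj =>
            Dvd.dvd.mul_left (hdvda i j (Ne.symm (Finset.mem_erase.mp hj).1)) _))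
      have hdvd3 : α i ∣ γ * ω i - 1 := by
        have h1 : γ * ω i - 1 = ω i * (γ + a i) - (ω i * a i + 1) := by ring
        rw [h1]
        exact dvd_sub (Dvd.dvd.mul_left hdvd1 _) hdvd2
      have hlb := hceil_lb γ i
      have hub := hceil_ub γ i
      set c : ℤ := ⌈((γ * ω i : ℤ) : ℚ) / ((α i : ℤ) : ℚ)⌉ with hc
      have hdvdt : α i ∣ α i * c - (γ * ω i - 1) :=
        dvd_sub (Dvd.dvd.mul_right dvd_rfl _) hdvd3
      have htpos : 0 < α i * c - (γ * ω i - 1) := by omega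
      have := Int.le_of_dvd htpos hdvdt
      omega
    have hAN : A * N γ = A * (-2) := by
      rw [hN γ, mul_sub, Finset.mul_sum]
      have e1 : ∀ i : Fin d, A * ⌈((γ * ω i : ℤ) : ℚ) / ((α i : ℤ) : ℚ)⌉
          = (γ * ω i - 1 + α i) * a i := by
        intro i
        calc A * ⌈((γ * ω i : ℤ) : ℚ) / ((α i : ℤ) : ℚ)⌉
            = (α i * ⌈((γ * ω i : ℤ) : ℚ) / ((α i : ℤ) : ℚ)⌉) * a i := by
              rw [hAprod i]; ring
          _ = (γ * ω i - 1 + α i) * a i := by rw [hterm i]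
      rw [Finset.sum_congr rfl (fun i _ => e1 i)]
      have e2 : ∑ i, (γ * ω i - 1 + α i) * a i
          = γ * (∑ i, ω i * a i) - (∑ i, a i) + ∑ i, α i * a i := by
        rw [Finset.mul_sum, ← Finset.sum_sub_distrib, ← Finset.sum_add_distrib]
        exact Finset.sum_congr rfl (fun i _ => by ring)
      rw [e2, hsumαa, hγ]
      linear_combination (A * ((d : ℤ) - 2) - ∑ i, a i) * hdio
    exact mul_left_cancel₀ (ne_of_gt hApos) hAN
  refine ⟨?_, ⟨?_, ?_⟩, ⟨?_, ?_⟩⟩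
  · ext ℓ
    simp only [Set.mem_setOf_eq, Set.mem_image]
    constructor
    · intro h
      refine ⟨ℓ + A, ?_, by ring⟩
      have := hshift ℓ
      omega
    · rintro ⟨s, hs, rfl⟩
      have := hshift (-A + s)
      rw [show -A + s + A = s by ring] at this
      omega
  · show -1 ≤ N (-A)
    omega
  · intro ℓ hℓ
    simp only [Set.mem_setOf_eq] at hℓ
    have := key1 ℓ
    nlinarith [hApos]
  · show N γ ≤ -2
    omega
  · intro ℓ hℓ
    simp only [Set.mem_setOf_eq] at hℓ
    have := key2 ℓ
    nlinarith [hApos, hγ]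
end

section
/- Let I be an n×n symmetric negative definite matrix with integer entries whose off-diagonal entries are nonnegative, fix an index v₀ ∈ {1,…,n}, and fix r ∈ ℚⁿ with 0 ≤ r_v < 1 for every v. For x, y ∈ ℚⁿ write (x,y) := xᵀIy and x ≥ y for componentwise inequality, and let E_v denote the standard basis vectors. Then: (1) for every integer ℓ ≥ 0, the set A_ℓ := {x ∈ r + ℤⁿ : x_{v₀} = r_{v₀} + ℓ and (x, E_v) ≤ 0 for all v ≠ v₀} is nonempty and possesses a (unique) least element x^ℓ, i.e., x^ℓ ∈ A_ℓ and x^ℓ ≤ x for every x ∈ A_ℓ; (2) x⁰ ≥ r, and x^{ℓ+1} ≥ x^ℓ + E_{v₀} for every ℓ ≥ 0. -/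
open Matrix

/-- The set of cycles in the coset `r + ℤⁿ` with prescribed `v₀`-coordinate
`r_{v₀} + ℓ` which are anti-nef at all vertices other than `v₀`. -/
def antiNefSlice (n : ℕ) (I : Matrix (Fin n) (Fin n) ℤ) (v₀ : Fin n)
    (r : Fin n → ℚ) (ℓ : ℕ) : Set (Fin n → ℚ) :=
  {x | (∀ v, ∃ k : ℤ, x v - r v = (k : ℚ)) ∧ x v₀ = r v₀ + (ℓ : ℚ) ∧
    ∀ v, v ≠ v₀ → x ⬝ᵥ (I.map ((↑) : ℤ → ℚ)).mulVec (Pi.single v 1) ≤ 0}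

namespace Stmt11Aux

variable {n : ℕ}

/-- The pairing `(x, E_v)`. -/
def B (I : Matrix (Fin n) (Fin n) ℤ) (x : Fin n → ℚ) (v : Fin n) : ℚ :=
  ∑ w, x w * (I w v : ℚ)

lemma pair_eq (I : Matrix (Fin n) (Fin n) ℤ) (x : Fin n → ℚ) (v : Fin n) :
    x ⬝ᵥ (I.map ((↑) : ℤ → ℚ)).mulVec (Pi.single v 1) = B I x v := by
  unfold B
  simp only [dotProduct, Matrix.mulVec, Matrix.map_apply]
  refine Finset.sum_congr rfl fun w _ => ?_
  congr 1
  rw [Finset.sum_eq_single v]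
  · simp
  · intro b _ hb; simp [Pi.single_apply, hb]
  · simp

lemma B_add (I : Matrix (Fin n) (Fin n) ℤ) (x y : Fin n → ℚ) (v : Fin n) :
    B I (x + y) v = B I x v + B I y v := by
  unfold B
  rw [← Finset.sum_add_distrib]
  exact Finset.sum_congr rfl fun w _ => by simp [add_mul]

lemma B_sub (I : Matrix (Fin n) (Fin n) ℤ) (x y : Fin n → ℚ) (v : Fin n) :
    B I (x - y) v = B I x v - B I y v := by
  unfold B
  rw [← Finset.sum_sub_distrib]
  exact Finset.sum_congr rfl fun w _ => by simp [sub_mul]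

lemma B_single (I : Matrix (Fin n) (Fin n) ℤ) (v₀ v : Fin n) :
    B I (Pi.single v₀ 1) v = (I v₀ v : ℚ) := by
  unfold B
  rw [Finset.sum_eq_single v₀]
  · simp
  · intro b _ hb; simp [Pi.single_apply, hb]
  · simp

lemma symm_cast (I : Matrix (Fin n) (Fin n) ℤ) (hsym : I.IsSymm) (v w : Fin n) :
    (I v w : ℚ) = (I w v : ℚ) := by
  have := hsym.apply v w
  exact_mod_cast congrArg (fun z : ℤ => (z : ℚ)) this.symm

lemma quad_eq (I : Matrix (Fin n) (Fin n) ℤ) (hsym : I.IsSymm) (x : Fin n → ℚ) :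
    x ⬝ᵥ (I.map ((↑) : ℤ → ℚ)).mulVec x = ∑ v, x v * B I x v := by
  unfold B
  refine Finset.sum_congr rfl fun v _ => ?_
  simp only [Matrix.mulVec, dotProduct, Matrix.map_apply]
  congr 1
  refine Finset.sum_congr rfl fun w _ => ?_
  rw [mul_comm, symm_cast I hsym v w]

/-- Every element of the slice is componentwise nonnegative. -/
lemma mem_nonneg (I : Matrix (Fin n) (Fin n) ℤ) (hsym : I.IsSymm)
    (hoff : ∀ v w, v ≠ w → 0 ≤ I v w)
    (hnegdef : ∀ x : Fin n → ℚ, x ≠ 0 → x ⬝ᵥ (I.map ((↑) : ℤ → ℚ)).mulVec x < 0)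
    (v₀ : Fin n) (r : Fin n → ℚ) (hr0 : 0 ≤ r v₀) (ℓ : ℕ)
    {x : Fin n → ℚ} (hx : x ∈ antiNefSlice n I v₀ r ℓ) (v : Fin n) : 0 ≤ x v := by
  by_contra hneg
  push_neg at hneg
  set m : Fin n → ℚ := fun w => max (-(x w)) 0 with hm
  have hm0 : ∀ w, 0 ≤ m w := fun w => le_max_right _ _
  have hmne : m ≠ 0 := by
    intro h
    have h2 := congrFun h v
    have h3 : -(x v) ≤ m v := le_max_left _ _
    rw [h2] at h3
    simp at h3
    linarith
  have hxv0 : 0 ≤ x v₀ := by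
    rw [hx.2.1]; positivity
  have hQ : (∑ w, m w * B I m w) < 0 := by
    rw [← quad_eq I hsym m]; exact hnegdef m hmne
  have hBx : ∀ w, 0 < m w → B I x w ≤ 0 := by
    intro w hw
    have hxw : x w < 0 := by
      by_contra h
      push_neg at h
      have : m w = 0 := max_eq_right (by linarith)
      rw [this] at hw; exact absurd hw (lt_irrefl 0)
    have hwv₀ : w ≠ v₀ := by intro h; rw [h] at hxw; linarith
    have := hx.2.2 w hwv₀
    rwa [pair_eq] at this
  have h1 : ∑ w, m w * B I x w ≤ 0 := by
    apply Finset.sum_nonpos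
    intro w _
    rcases eq_or_lt_of_le (hm0 w) with h | h
    · rw [← h]; simp
    · exact mul_nonpos_of_nonneg_of_nonpos (hm0 w) (hBx w h)
  have hxm : ∀ w, 0 ≤ (x + m) w := by
    intro w
    have := le_max_left (-(x w)) 0
    simp only [Pi.add_apply, hm]
    linarith
  have hxm0 : ∀ w, m w * (x + m) w = 0 := by
    intro w
    rcases le_or_gt 0 (x w) with h | h
    · have : m w = 0 := max_eq_right (by linarith)
      rw [this, zero_mul]
    · have : m w = -(x w) := max_eq_left (by linarith)
      simp only [Pi.add_apply, this]
      ring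
  have hS : 0 ≤ ∑ w, m w * B I (x + m) w := by
    unfold B
    apply Finset.sum_nonneg
    intro w _
    rw [Finset.mul_sum]
    apply Finset.sum_nonneg
    intro u _
    rcases eq_or_ne u w with h | h
    · subst h
      rw [← mul_assoc, hxm0 u, zero_mul]
    · have h1 : (0:ℚ) ≤ (I u w : ℚ) := by exact_mod_cast hoff u w h
      have := hxm u
      positivity
  have heq : ∑ w, m w * B I x w
      = (∑ w, m w * B I (x + m) w) - ∑ w, m w * B I m w := by
    rw [← Finset.sum_sub_distrib]
    refine Finset.sum_congr rfl fun w _ => ?_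
    rw [B_add]; ring
  linarith

/-- Every element of the slice dominates `r`. -/
lemma mem_ge_r (I : Matrix (Fin n) (Fin n) ℤ) (hsym : I.IsSymm)
    (hoff : ∀ v w, v ≠ w → 0 ≤ I v w)
    (hnegdef : ∀ x : Fin n → ℚ, x ≠ 0 → x ⬝ᵥ (I.map ((↑) : ℤ → ℚ)).mulVec x < 0)
    (v₀ : Fin n) (r : Fin n → ℚ) (hr : ∀ v, 0 ≤ r v ∧ r v < 1) (ℓ : ℕ)
    {x : Fin n → ℚ} (hx : x ∈ antiNefSlice n I v₀ r ℓ) : r ≤ x := by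
  intro v
  obtain ⟨k, hk⟩ := hx.1 v
  have h0 := mem_nonneg I hsym hoff hnegdef v₀ r (hr v₀).1 ℓ hx v
  by_contra hlt
  push_neg at hlt
  have hk0 : (k : ℚ) < 0 := by linarith
  have hk1 : k < 0 := by exact_mod_cast hk0
  have hk2 : (k : ℚ) ≤ -1 := by exact_mod_cast (by omega : k ≤ -1)
  linarith [(hr v).2]

/-- Monotone comparison of pairings when `z ≤ x` and they agree at `v`. -/
lemma B_le_of_le (I : Matrix (Fin n) (Fin n) ℤ)
    (hoff : ∀ v w, v ≠ w → 0 ≤ I v w) {z x : Fin n → ℚ} (hle : ∀ w, z w ≤ x w)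
    (v : Fin n) (hv : z v = x v) : B I z v ≤ B I x v := by
  have heq : B I z v - B I x v = ∑ w, (z w - x w) * (I w v : ℚ) := by
    unfold B
    rw [← Finset.sum_sub_distrib]
    exact Finset.sum_congr rfl fun w _ => by ring
  have hle' : ∑ w, (z w - x w) * (I w v : ℚ) ≤ 0 := by
    apply Finset.sum_nonpos
    intro w _
    rcases eq_or_ne w v with h | h
    · subst h; rw [hv]; simp
    · have h1 : (0:ℚ) ≤ (I w v : ℚ) := by exact_mod_cast hoff w v h
      have h2 : z w - x w ≤ 0 := by linarith [hle w]
      exact mul_nonpos_of_nonpos_of_nonneg h2 h1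
  linarith

/-- The slice is closed under componentwise minimum. -/
lemma inf_mem (I : Matrix (Fin n) (Fin n) ℤ)
    (hoff : ∀ v w, v ≠ w → 0 ≤ I v w)
    (v₀ : Fin n) (r : Fin n → ℚ) (ℓ : ℕ)
    {x y : Fin n → ℚ} (hx : x ∈ antiNefSlice n I v₀ r ℓ)
    (hy : y ∈ antiNefSlice n I v₀ r ℓ) : x ⊓ y ∈ antiNefSlice n I v₀ r ℓ := by
  have hinf : ∀ v, (x ⊓ y) v = min (x v) (y v) := fun v => rfl
  refine ⟨?_, ?_, ?_⟩
  · intro v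
    obtain ⟨k, hk⟩ := hx.1 v
    obtain ⟨k', hk'⟩ := hy.1 v
    rcases le_total (x v) (y v) with h | h
    · exact ⟨k, by rw [hinf, min_eq_left h]; exact hk⟩
    · exact ⟨k', by rw [hinf, min_eq_right h]; exact hk'⟩
  · rw [hinf, hx.2.1, hy.2.1, min_self]
  · intro v hv
    rw [pair_eq]
    rcases le_total (x v) (y v) with h | h
    · have hBx : B I x v ≤ 0 := by have := hx.2.2 v hv; rwa [pair_eq] at this
      have := B_le_of_le I hoff (z := x ⊓ y) (x := x)
        (fun w => by rw [hinf]; exact min_le_left _ _) v (by rw [hinf, min_eq_left h])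
      linarith
    · have hBy : B I y v ≤ 0 := by have := hy.2.2 v hv; rwa [pair_eq] at this
      have := B_le_of_le I hoff (z := x ⊓ y) (x := y)
        (fun w => by rw [hinf]; exact min_le_right _ _) v (by rw [hinf, min_eq_right h])
      linarith


variable {n : ℕ}

/-- Existence of a vector vanishing at `v₀` whose pairing with every other
basis vector is `-1`. -/
lemma exists_z (I : Matrix (Fin n) (Fin n) ℤ) (hsym : I.IsSymm)
    (hnegdef : ∀ x : Fin n → ℚ, x ≠ 0 → x ⬝ᵥ (I.map ((↑) : ℤ → ℚ)).mulVec x < 0)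
    (v₀ : Fin n) : ∃ z : Fin n → ℚ, z v₀ = 0 ∧ ∀ v, v ≠ v₀ → B I z v = -1 := by
  classical
  set J : Matrix {v : Fin n // v ≠ v₀} {v : Fin n // v ≠ v₀} ℚ :=
    fun a b => (I a.1 b.1 : ℚ) with hJ
  set ext : ({v : Fin n // v ≠ v₀} → ℚ) → (Fin n → ℚ) :=
    fun y v => if h : v = v₀ then 0 else y ⟨v, h⟩ with hextdef
  have hext_v₀ : ∀ y, ext y v₀ = 0 := fun y => dif_pos rfl
  have hext_a : ∀ y (a : {v : Fin n // v ≠ v₀}), ext y a.1 = y a :=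
    fun y a => dif_neg a.2
  have hBext : ∀ (y : {v : Fin n // v ≠ v₀} → ℚ) (b : {v : Fin n // v ≠ v₀}),
      B I (ext y) b.1 = J.mulVec y b := by
    intro y b
    unfold B
    have h0 : ext y v₀ * (I v₀ b.1 : ℚ) = 0 := by rw [hext_v₀, zero_mul]
    rw [← Finset.sum_erase (f := fun w => ext y w * (I w b.1 : ℚ)) Finset.univ h0]
    rw [Finset.sum_subtype (p := fun v => v ≠ v₀) (Finset.univ.erase v₀)
      (fun x => by simp [Finset.mem_erase]) (fun w => ext y w * (I w b.1 : ℚ))]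
    simp only [Matrix.mulVec, dotProduct, hJ]
    refine Finset.sum_congr rfl fun a _ => ?_
    rw [hext_a, mul_comm, symm_cast I hsym a.1 b.1]
  have hker : ∀ y, J.mulVec y = 0 → y = 0 := by
    intro y hy
    have hx0 : ext y = 0 := by
      by_contra hne
      have hlt := hnegdef (ext y) hne
      have hq : (ext y) ⬝ᵥ (I.map ((↑) : ℤ → ℚ)).mulVec (ext y) = 0 := by
        rw [quad_eq I hsym]
        apply Finset.sum_eq_zero
        intro v _
        rcases eq_or_ne v v₀ with h | h
        · subst h; rw [hext_v₀, zero_mul]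
        · have := hBext y ⟨v, h⟩
          rw [this, hy]
          simp
      linarith
    funext a
    have := congrFun hx0 a.1
    rw [hext_a] at this
    simpa using this
  have hinj : Function.Injective J.mulVecLin := by
    rw [← LinearMap.ker_eq_bot, LinearMap.ker_eq_bot']
    intro y hy
    exact hker y (by simpa [Matrix.mulVecLin_apply] using hy)
  have hsurj : Function.Surjective J.mulVecLin :=
    LinearMap.injective_iff_surjective.mp hinj
  obtain ⟨y, hy⟩ := hsurj (fun _ => -1)
  refine ⟨ext y, hext_v₀ y, fun v hv => ?_⟩
  have := hBext y ⟨v, hv⟩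
  rw [this]
  have : J.mulVec y = fun _ => -1 := by simpa [Matrix.mulVecLin_apply] using hy
  rw [this]

/-- The slice is nonempty. -/
lemma slice_nonempty (I : Matrix (Fin n) (Fin n) ℤ) (hsym : I.IsSymm)
    (hoff : ∀ v w, v ≠ w → 0 ≤ I v w)
    (hnegdef : ∀ x : Fin n → ℚ, x ≠ 0 → x ⬝ᵥ (I.map ((↑) : ℤ → ℚ)).mulVec x < 0)
    (v₀ : Fin n) (r : Fin n → ℚ) (ℓ : ℕ) :
    (antiNefSlice n I v₀ r ℓ).Nonempty := by
  classical
  obtain ⟨z, hz0, hzB⟩ := exists_z I hsym hnegdef v₀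
  set x₀ : Fin n → ℚ := fun v => r v + if v = v₀ then (ℓ : ℚ) else 0 with hx₀
  set K : ℚ := ∑ v, (|B I x₀ v| + ∑ w, |(I w v : ℚ)|) with hK
  set m : Fin n → ℚ := fun w => if h : w = v₀ then 0 else ((⌈K * z w⌉ : ℤ) : ℚ) with hmdef
  have hδ : ∀ w, 0 ≤ m w - K * z w ∧ m w - K * z w ≤ 1 := by
    intro w
    by_cases h : w = v₀
    · subst h
      simp only [hmdef, dif_pos, hz0, mul_zero, sub_zero]
      exact ⟨le_refl 0, zero_le_one⟩
    · simp only [hmdef, dif_neg h]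
      constructor
      · linarith [Int.le_ceil (K * z w)]
      · linarith [Int.ceil_lt_add_one (K * z w)]
  refine ⟨x₀ + m, ?_, ?_, ?_⟩
  · intro v
    by_cases h : v = v₀
    · subst h
      refine ⟨(ℓ : ℤ), ?_⟩
      simp [hx₀, hmdef]
    · refine ⟨⌈K * z v⌉, ?_⟩
      simp [hx₀, hmdef, h]
  · simp [hx₀, hmdef]
  · intro v hv
    rw [pair_eq, B_add]
    have hBm : B I m v ≤ -K + ∑ w, |(I w v : ℚ)| := by
      have heq : B I m v - K * B I z v = ∑ w, (m w - K * z w) * (I w v : ℚ) := by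
        unfold B
        rw [Finset.mul_sum, ← Finset.sum_sub_distrib]
        exact Finset.sum_congr rfl fun w _ => by ring
      have hbound : ∑ w, (m w - K * z w) * (I w v : ℚ) ≤ ∑ w, |(I w v : ℚ)| := by
        apply Finset.sum_le_sum
        intro w _
        obtain ⟨hd0, hd1⟩ := hδ w
        rcases le_or_gt 0 ((I w v : ℚ)) with h | h
        · calc (m w - K * z w) * (I w v : ℚ) ≤ 1 * (I w v : ℚ) :=
                mul_le_mul_of_nonneg_right hd1 h
            _ = (I w v : ℚ) := one_mul _
            _ ≤ |(I w v : ℚ)| := le_abs_self _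
        · calc (m w - K * z w) * (I w v : ℚ) ≤ 0 :=
                mul_nonpos_of_nonneg_of_nonpos hd0 (le_of_lt h)
            _ ≤ |(I w v : ℚ)| := abs_nonneg _
      rw [hzB v hv] at heq
      linarith
    have hKge : B I x₀ v + ∑ w, |(I w v : ℚ)| ≤ K := by
      have h1 : |B I x₀ v| + ∑ w, |(I w v : ℚ)|
          ≤ ∑ u, (|B I x₀ u| + ∑ w, |(I w u : ℚ)|) := by
        apply Finset.single_le_sum (f := fun u => |B I x₀ u| + ∑ w, |(I w u : ℚ)|)
          (fun u _ => by positivity) (Finset.mem_univ v)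
      have h2 : B I x₀ v ≤ |B I x₀ v| := le_abs_self _
      rw [hK]
      linarith
    linarith


/-- The slice has a least element. -/
lemma exists_least (I : Matrix (Fin n) (Fin n) ℤ) (hsym : I.IsSymm)
    (hoff : ∀ v w, v ≠ w → 0 ≤ I v w)
    (hnegdef : ∀ x : Fin n → ℚ, x ≠ 0 → x ⬝ᵥ (I.map ((↑) : ℤ → ℚ)).mulVec x < 0)
    (v₀ : Fin n) (r : Fin n → ℚ) (hr : ∀ v, 0 ≤ r v ∧ r v < 1) (ℓ : ℕ) :
    ∃ xmin : Fin n → ℚ, IsLeast (antiNefSlice n I v₀ r ℓ) xmin := by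
  classical
  obtain ⟨x₀, hx₀⟩ := slice_nonempty I hsym hoff hnegdef v₀ r ℓ
  have key : ∀ v : Fin n, ∃ y, y ∈ antiNefSlice n I v₀ r ℓ ∧
      ∀ x ∈ antiNefSlice n I v₀ r ℓ, y v ≤ x v := by
    intro v
    set P : ℤ → Prop := fun k => ∃ x, x ∈ antiNefSlice n I v₀ r ℓ ∧ x v - r v = (k : ℚ)
      with hP
    have Hinh : ∃ k, P k := by
      obtain ⟨k, hk⟩ := hx₀.1 v
      exact ⟨k, x₀, hx₀, hk⟩
    have Hbdd : ∃ b : ℤ, ∀ k : ℤ, P k → b ≤ k := by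
      refine ⟨0, fun k hk => ?_⟩
      obtain ⟨x, hx, hkx⟩ := hk
      have hge := mem_ge_r I hsym hoff hnegdef v₀ r hr ℓ hx v
      have : (0 : ℚ) ≤ (k : ℚ) := by linarith
      exact_mod_cast this
    obtain ⟨k₀, ⟨y, hy, hyk⟩, hmin⟩ := Int.exists_least_of_bdd Hbdd Hinh
    refine ⟨y, hy, fun x hx => ?_⟩
    obtain ⟨k, hk⟩ := hx.1 v
    have hk0 : k₀ ≤ k := hmin k ⟨x, hx, hk⟩
    have : (k₀ : ℚ) ≤ (k : ℚ) := by exact_mod_cast hk0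
    linarith
  choose y hyA hymin using key
  have hne : (Finset.univ : Finset (Fin n)).Nonempty := ⟨v₀, Finset.mem_univ _⟩
  refine ⟨Finset.univ.inf' hne y, ?_, ?_⟩
  · exact Finset.inf'_mem (antiNefSlice n I v₀ r ℓ)
      (fun a ha b hb => inf_mem I hoff v₀ r ℓ ha hb) Finset.univ hne y
      (fun i _ => hyA i)
  · intro x hx v
    have h1 : Finset.univ.inf' hne y ≤ y v := Finset.inf'_le y (Finset.mem_univ v)
    exact le_trans (h1 v) (hymin v x hx)

end Stmt11Aux

/-- Existence and monotonicity of the minimal cycles `x^ℓ` with prescribed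
`v₀`-coordinate (generalized Laufer minimal cycles). -/
theorem stmt_11
    (n : ℕ) (I : Matrix (Fin n) (Fin n) ℤ) (hsym : I.IsSymm)
    (hoff : ∀ v w, v ≠ w → 0 ≤ I v w)
    (hnegdef : ∀ x : Fin n → ℚ, x ≠ 0 → x ⬝ᵥ (I.map ((↑) : ℤ → ℚ)).mulVec x < 0)
    (v₀ : Fin n) (r : Fin n → ℚ) (hr : ∀ v, 0 ≤ r v ∧ r v < 1) :
    (∀ ℓ : ℕ, ∃ xmin : Fin n → ℚ, IsLeast (antiNefSlice n I v₀ r ℓ) xmin)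
    ∧ (∀ x0 : Fin n → ℚ, IsLeast (antiNefSlice n I v₀ r 0) x0 → r ≤ x0)
    ∧ (∀ ℓ : ℕ, ∀ xl xl1 : Fin n → ℚ, IsLeast (antiNefSlice n I v₀ r ℓ) xl →
        IsLeast (antiNefSlice n I v₀ r (ℓ + 1)) xl1 → xl + Pi.single v₀ 1 ≤ xl1) := by
  open Stmt11Aux in
  refine ⟨fun ℓ => exists_least I hsym hoff hnegdef v₀ r hr ℓ, ?_, ?_⟩
  · intro x0 h0
    exact mem_ge_r I hsym hoff hnegdef v₀ r hr 0 h0.1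
  · intro ℓ xl xl1 hl hl1
    have hmem : xl1 - (Pi.single v₀ 1 : Fin n → ℚ) ∈ antiNefSlice n I v₀ r ℓ := by
      obtain ⟨h1, h2, h3⟩ := hl1.1
      refine ⟨?_, ?_, ?_⟩
      · intro v
        obtain ⟨k, hk⟩ := h1 v
        by_cases hv : v = v₀
        · subst hv
          refine ⟨k - 1, ?_⟩
          simp only [Pi.sub_apply, Pi.single_eq_same]
          push_cast
          linarith
        · refine ⟨k, ?_⟩
          have h0 : (Pi.single v₀ 1 : Fin n → ℚ) v = 0 := by simp [Pi.single_apply, hv]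
          simp only [Pi.sub_apply, h0]
          linarith
      · have : (xl1 - (Pi.single v₀ 1 : Fin n → ℚ)) v₀ = xl1 v₀ - 1 := by
          simp [Pi.sub_apply]
        rw [this, h2]
        push_cast
        ring
      · intro v hv
        rw [Stmt11Aux.pair_eq, Stmt11Aux.B_sub, Stmt11Aux.B_single]
        have hx := h3 v hv
        rw [Stmt11Aux.pair_eq] at hx
        have hI : (0 : ℚ) ≤ (I v₀ v : ℚ) := by
          exact_mod_cast hoff v₀ v (Ne.symm hv)
        linarith
    have hle := hl.2 hmem
    intro v
    have := hle v
    simp only [Pi.add_apply, Pi.sub_apply] at this ⊢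
    linarith
end

section
/- Let I be an n×n symmetric negative definite matrix with integer entries whose off-diagonal entries are nonnegative, and fix r ∈ ℚⁿ. For x, y ∈ ℚⁿ write (x,y) := xᵀIy and x ≥ y for componentwise inequality, and let E_v denote the standard basis vectors. Then the set {x ∈ r + ℤⁿ : (x, E_v) ≤ 0 for all v} is nonempty and possesses a (unique) least element s(r), i.e., s(r) belongs to the set and s(r) ≤ x componentwise for every x in the set. -/
/-!
Write `J` for the intersection form over `ℚ` and `𝒮'` for the Lipman cone `{x | x ᵥ* J ≤ 0}`.
Since the off-diagonal entries of `J` are nonnegative, lowering the other coordinates of `x`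
can only lower `(x ᵥ* J) v`, so `𝒮'` and the coset `r + ℤⁿ` are both closed under coordinatewise
minima. Every `x ∈ 𝒮'` is nonnegative: with `x = x⁺ - x⁻`, the cross term `x⁺ ⬝ᵥ J *ᵥ x⁻` is
nonnegative, so `x⁻ ⬝ᵥ J *ᵥ x⁻ ≥ -(x ᵥ* J ⬝ᵥ x⁻) ≥ 0`, and negative definiteness forces `x⁻ = 0`.
Hence each coordinate attains a minimum on `(r + ℤⁿ) ∩ 𝒮'`, and the minimum of the finitely many
minimizers is the least element. Nonemptiness comes from the adjugate: `z = -(det I) • 𝟙 ᵥ* adj I`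
is integral with `z ᵥ* I = -(det I)² • 𝟙`, and `r + k • z` lies in the set once `k` is large.
-/

open Matrix

theorem exists_isLeast_of_forall_sub_eq_intCast {R : Type*} [Ring R] [LinearOrder R]
    [IsStrictOrderedRing R] [FloorRing R] {T : Set R} (c : R) (hT : ∀ t ∈ T, ∃ k : ℤ, t - c = k)
    (hne : T.Nonempty) (hbdd : BddBelow T) : ∃ a, IsLeast T a := by
  obtain ⟨b, hb⟩ := hbdd
  obtain ⟨t, ht⟩ := hne
  obtain ⟨k₀, hk₀⟩ := hT t ht
  obtain ⟨l, hl, hmin⟩ := Int.exists_least_of_bdd (P := fun k : ℤ => c + k ∈ T)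
    ⟨⌈b - c⌉, fun k hk => Int.ceil_le.2 (sub_le_iff_le_add'.2 (hb hk))⟩
    ⟨k₀, by rwa [← hk₀, add_sub_cancel]⟩
  refine ⟨c + l, hl, fun s hs => ?_⟩
  obtain ⟨k, hk⟩ := hT s hs
  have hlk : (l : R) ≤ k := by exact_mod_cast hmin k (by rwa [← hk, add_sub_cancel])
  calc c + l ≤ c + k := by gcongr
    _ = s := by rw [← hk, add_sub_cancel]

theorem InfClosed.exists_isLeast_pi {ι α : Type*} [Fintype ι] [SemilatticeInf α]
    {S : Set (ι → α)} (hS : InfClosed S) (hne : S.Nonempty)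
    (hcoord : ∀ i, ∃ x ∈ S, ∀ y ∈ S, x i ≤ y i) : ∃ s, IsLeast S s := by
  rcases isEmpty_or_nonempty ι with hι | hι
  · obtain ⟨x, hx⟩ := hne
    exact ⟨x, hx, fun _ _ i => isEmptyElim i⟩
  choose x hxS hx using hcoord
  exact ⟨Finset.univ.inf' Finset.univ_nonempty x, hS.finsetInf'_mem _ fun i _ => hxS i,
    fun y hy i => (Finset.inf'_le x (Finset.mem_univ i) i).trans (hx i y hy)⟩

section IntegralCoset

variable {ι R : Type*} [Ring R]

def integralCoset (r : ι → R) : Set (ι → R) :=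
  {x | ∀ v, ∃ k : ℤ, x v - r v = k}

theorem infClosed_integralCoset [LinearOrder R] (r : ι → R) : InfClosed (integralCoset r) :=
  fun x hx y hy v => by
    change ∃ k : ℤ, min (x v) (y v) - r v = k
    rcases min_choice (x v) (y v) with h | h <;> rw [h]
    exacts [hx v, hy v]

theorem exists_forall_apply_le_of_subset_integralCoset [LinearOrder R] [IsStrictOrderedRing R]
    [FloorRing R] {S : Set (ι → R)} {r : ι → R} (hS : S ⊆ integralCoset r) (hne : S.Nonempty)
    (hbdd : BddBelow S) (v : ι) : ∃ x ∈ S, ∀ y ∈ S, x v ≤ y v := by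
  obtain ⟨_, ⟨x, hx, rfl⟩, hmin⟩ := exists_isLeast_of_forall_sub_eq_intCast (T := (· v) '' S)
    (r v) (by rintro _ ⟨x, hx, rfl⟩; exact hS hx v) (hne.image _)
    ((Function.monotone_eval v).map_bddBelow hbdd)
  exact ⟨x, hx, fun y hy => hmin ⟨y, hy, rfl⟩⟩

end IntegralCoset

namespace Matrix

variable {ι R : Type*} [Fintype ι]

/-- `(x ᵥ* A) v` is the pairing `(x, E_v) = xᵀ A E_v`. -/
def lipmanCone [Ring R] [PartialOrder R] (A : Matrix ι ι R) : Set (ι → R) :=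
  {x | x ᵥ* A ≤ 0}

section OrderedRing

variable [Ring R] [LinearOrder R] [IsStrictOrderedRing R] {A : Matrix ι ι R}

theorem vecMul_apply_le_of_le_of_eq (hA : ∀ v w, v ≠ w → 0 ≤ A v w) {x y : ι → R}
    (hxy : x ≤ y) {v : ι} (hv : x v = y v) : (x ᵥ* A) v ≤ (y ᵥ* A) v := by
  refine Finset.sum_le_sum fun w _ => ?_
  rcases eq_or_ne w v with rfl | hwv
  · rw [hv]
  · exact mul_le_mul_of_nonneg_right (hxy w) (hA w v hwv)

theorem vecMul_inf_apply_le (hA : ∀ v w, v ≠ w → 0 ≤ A v w) (x y : ι → R) (v : ι) :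
    ((x ⊓ y) ᵥ* A) v ≤ max ((x ᵥ* A) v) ((y ᵥ* A) v) := by
  rcases le_total (x v) (y v) with h | h
  · exact (vecMul_apply_le_of_le_of_eq hA inf_le_left (inf_eq_left.2 h)).trans (le_max_left _ _)
  · exact (vecMul_apply_le_of_le_of_eq hA inf_le_right (inf_eq_right.2 h)).trans (le_max_right _ _)

theorem infClosed_lipmanCone (hA : ∀ v w, v ≠ w → 0 ≤ A v w) : InfClosed A.lipmanCone :=
  fun x hx y hy v => (vecMul_inf_apply_le hA x y v).trans (max_le (hx v) (hy v))

theorem dotProduct_mulVec_nonneg_of_disjoint (hA : ∀ v w, v ≠ w → 0 ≤ A v w) {p q : ι → R}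
    (hp : 0 ≤ p) (hq : 0 ≤ q) (hpq : ∀ v, p v * q v = 0) : 0 ≤ p ⬝ᵥ A *ᵥ q := by
  refine Finset.sum_nonneg fun v _ => ?_
  rcases mul_eq_zero.1 (hpq v) with hpv | hqv
  · simp [hpv]
  refine mul_nonneg (hp v) (Finset.sum_nonneg fun w _ => ?_)
  rcases eq_or_ne v w with rfl | hvw
  · simp [hqv]
  · exact mul_nonneg (hA v w hvw) (hq w)

theorem nonneg_of_mem_lipmanCone (hA : ∀ v w, v ≠ w → 0 ≤ A v w)
    (hneg : ∀ x : ι → R, x ≠ 0 → x ⬝ᵥ A *ᵥ x < 0) {x : ι → R} (hx : x ∈ A.lipmanCone) :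
    0 ≤ x := by
  have hsplit : x ᵥ* A ⬝ᵥ x⁻ = x⁺ ⬝ᵥ A *ᵥ x⁻ - x⁻ ⬝ᵥ A *ᵥ x⁻ := by
    rw [← sub_dotProduct, posPart_sub_negPart, dotProduct_mulVec]
  have hdisj : ∀ v, x⁺ v * x⁻ v = 0 := fun v => by
    rcases le_total (x v) 0 with h | h <;> simp [h]
  have hcross := dotProduct_mulVec_nonneg_of_disjoint hA (posPart_nonneg x) (negPart_nonneg x) hdisj
  have hpair : x ᵥ* A ⬝ᵥ x⁻ ≤ 0 := by
    simpa using dotProduct_le_dotProduct_of_nonneg_right hx (negPart_nonneg x)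
  have hneg_zero : x⁻ = 0 := by
    by_contra h
    exact (hneg _ h).not_ge (hcross.trans (sub_nonpos.1 (hsplit ▸ hpair)))
  simpa using hneg_zero

end OrderedRing

theorem det_ne_zero_of_dotProduct_mulVec_neg [CommRing R] [LinearOrder R] [IsStrictOrderedRing R]
    [DecidableEq ι] {A : Matrix ι ι R} (hneg : ∀ x : ι → R, x ≠ 0 → x ⬝ᵥ A *ᵥ x < 0) :
    A.det ≠ 0 := fun h => by
  obtain ⟨x, hx, hAx⟩ := exists_mulVec_eq_zero_iff.2 h
  simpa [hAx] using hneg x hx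

theorem exists_vecMul_le_neg_one [DecidableEq ι] {I : Matrix ι ι ℤ} (hdet : I.det ≠ 0) :
    ∃ z : ι → ℤ, ∀ v, (z ᵥ* I) v ≤ -1 := by
  refine ⟨(fun _ => -I.det) ᵥ* I.adjugate, fun v => ?_⟩
  have : 0 < I.det * I.det := mul_self_pos.2 hdet
  simp [vecMul_vecMul, adjugate_mul]
  linarith

theorem nonempty_integralCoset_inter_lipmanCone [DecidableEq ι] {I : Matrix ι ι ℤ}
    (hdet : I.det ≠ 0) (r : ι → ℚ) :
    (integralCoset r ∩ (I.map ((↑) : ℤ → ℚ)).lipmanCone).Nonempty := by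
  obtain ⟨z, hz⟩ := exists_vecMul_le_neg_one hdet
  obtain ⟨m, hm⟩ := (Set.finite_range (r ᵥ* I.map ((↑) : ℤ → ℚ))).bddAbove
  obtain ⟨k, hk⟩ := exists_nat_ge m
  refine ⟨r + (k : ℚ) • ((↑) ∘ z), fun v => ⟨k * z v, by simp⟩, fun v => ?_⟩
  have hzv : (((↑) ∘ z) ᵥ* I.map ((↑) : ℤ → ℚ)) v ≤ -1 := by
    have h := RingHom.map_vecMul (Int.castRingHom ℚ) I z v
    simp only [Int.coe_castRingHom] at h
    rw [← h]
    exact_mod_cast hz v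
  have hrv : (r ᵥ* I.map ((↑) : ℤ → ℚ)) v ≤ k := (hm ⟨v, rfl⟩).trans hk
  simp only [add_vecMul, smul_vecMul, Pi.add_apply, Pi.smul_apply, smul_eq_mul, Pi.zero_apply]
  nlinarith [k.cast_nonneg (α := ℚ)]

end Matrix

theorem stmt_12_general
    (n : ℕ) (I : Matrix (Fin n) (Fin n) ℤ)
    (hoff : ∀ v w, v ≠ w → 0 ≤ I v w)
    (hnegdef : ∀ x : Fin n → ℚ, x ≠ 0 → x ⬝ᵥ (I.map ((↑) : ℤ → ℚ)).mulVec x < 0)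
    (r : Fin n → ℚ) :
    ∃ s : Fin n → ℚ, IsLeast
      {x : Fin n → ℚ | (∀ v, ∃ k : ℤ, x v - r v = (k : ℚ)) ∧
        ∀ v, x ⬝ᵥ (I.map ((↑) : ℤ → ℚ)).mulVec (Pi.single v 1) ≤ 0} s := by
  set J := I.map ((↑) : ℤ → ℚ)
  have hJoff : ∀ v w, v ≠ w → 0 ≤ J v w := fun v w h => Int.cast_nonneg (hoff v w h)
  have hdet : I.det ≠ 0 := by
    have hJdet := det_ne_zero_of_dotProduct_mulVec_neg hnegdef
    rwa [show J.det = I.det from (RingHom.map_det (Int.castRingHom ℚ) I).symm,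
      Int.cast_ne_zero] at hJdet
  have hset : {x : Fin n → ℚ | (∀ v, ∃ k : ℤ, x v - r v = (k : ℚ)) ∧
      ∀ v, x ⬝ᵥ J *ᵥ Pi.single v 1 ≤ 0} = integralCoset r ∩ J.lipmanCone := by
    ext x
    simp only [Set.mem_ofPred_eq, Set.mem_inter_iff, integralCoset, lipmanCone,
      dotProduct_mulVec, dotProduct_single_one, Pi.le_def, Pi.zero_apply]
  rw [hset]
  have hne := nonempty_integralCoset_inter_lipmanCone hdet r
  exact ((infClosed_integralCoset r).inter (infClosed_lipmanCone hJoff)).exists_isLeast_pi hne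
    fun v => exists_forall_apply_le_of_subset_integralCoset Set.inter_subset_left hne
      ⟨0, fun x hx => nonneg_of_mem_lipmanCone hJoff hnegdef hx.2⟩ v

/-- The intersection of the coset `r + ℤⁿ` with the Lipman cone of anti-nef cycles
has a unique least element. -/
theorem stmt_12
    (n : ℕ) (I : Matrix (Fin n) (Fin n) ℤ) (hsym : I.IsSymm)
    (hoff : ∀ v w, v ≠ w → 0 ≤ I v w)
    (hnegdef : ∀ x : Fin n → ℚ, x ≠ 0 → x ⬝ᵥ (I.map ((↑) : ℤ → ℚ)).mulVec x < 0)
    (r : Fin n → ℚ) :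
    ∃ s : Fin n → ℚ, IsLeast
      {x : Fin n → ℚ | (∀ v, ∃ k : ℤ, x v - r v = (k : ℚ)) ∧
        ∀ v, x ⬝ᵥ (I.map ((↑) : ℤ → ℚ)).mulVec (Pi.single v 1) ≤ 0} s :=
  stmt_12_general n I hoff hnegdef r
end

section
/- Fix Seifert data and the associated star-shaped plumbing lattice. Let r* ∈ [0,1)^𝒱 be the unique representative of the coset Z_K + ℤ^𝒱 with all coordinates in [0,1), and set Δ := (Z_K − r*)_{v₀} ∈ ℤ. For ℓ ∈ ℤ≥0, let x(ℓ) be the least element of {x ∈ ℤ^𝒱 : x_{v₀} = ℓ and (x, E_v) ≤ 0 for all v ≠ v₀}, and let x*(ℓ) be the least element of {x ∈ r* + ℤ^𝒱 : x_{v₀} = r*_{v₀} + ℓ and (x, E_v) ≤ 0 for all v ≠ v₀}. Define χ(y) := −(y − Z_K, y)/2 and N*(ℓ) := −(x*(ℓ), E_{v₀}). Then: (a) χ(x*(ℓ)) = χ(x(Δ − ℓ)) for every 0 ≤ ℓ ≤ Δ; (b) N(ℓ) + N*(Δ − 1 − ℓ) = −2 for every 0 ≤ ℓ ≤ Δ −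 1, where N(ℓ) := b₀·ℓ − Σᵢ ⌈ℓ·ωᵢ/αᵢ⌉. -/
/-!
Let `S(m)` be the integral cycles with `v₀`-coordinate `m` that are anti-nef off `v₀`, so
that `x(m) = min S(m)`, and `G(m)` the integral cycles `z` with `z_{v₀} = m` and
`(z, E_v) ≥ (Z_K, E_v)` off `v₀`. The reflection `y ↦ Z_K − y` preserves `χ` and maps `G(Δ − ℓ)`
onto the set defining `x*(ℓ)`, hence `x*(ℓ) = Z_K − W(Δ − ℓ)` with `W(m) = max G(m)`.

On a leg the constraints are three-term recurrences, which are compared with the numerators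
`N_t` of the tails of the continued fraction (`N_0 = α`, `N_1 = ω`) through the Wronskian
`Y_t N_{t+1} − Y_{t+1} N_t`. This shows that `W(m)` is given by a greedy floor recursion, that
`W(m) ≤ x(m)`, and that `W(m)` equals `⌈(m − 1)ω/α⌉` at the first vertex of each leg, which is
(b) once `(Z_K, E_{v₀})` is substituted.

For (a), Laufer's argument (adding `E_v` where `(z, E_v) ≥ 1` does not increase `χ`) gives
`χ(x(m)) ≤ χ(z)` for every `z ≤ x(m)` in the same fibre and class. Applied to `W(m) ≤ x(m)`,
and after reflection to `Z_K − x(m) ≤ x*(ℓ)`, it gives the two inequalities between `χ(x(m))`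
and `χ(W(m)) = χ(x*(ℓ))`.
-/

open Matrix

/-- Negative (Hirzebruch) continued fraction `[b₁,…,b_k] = b₁ − 1/(b₂ − 1/(⋯))`
(with the convention `1/0 = 0`, so that `ncf [b] = b`). -/
def ncf : List ℚ → ℚ
  | [] => 0
  | b :: rest => b - 1 / ncf rest

/-- For `k ≤ L.length`, `chainNum L k / chainNum L (k + 1)` is `ncf (L.drop k)` in lowest terms;
`chainNum L (L.length + 1) = 0`. -/
def chainNum : List ℤ → ℕ → ℤ
  | [], 0 => 1
  | [], _ + 1 => 0
  | b :: L, 0 => b * chainNum L 0 - chainNum L 1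
  | _ :: L, k + 1 => chainNum L k

theorem chainNum_length (L : List ℤ) : chainNum L L.length = 1 := by
  induction L with
  | nil => rfl
  | cons _ L ih => exact ih

theorem chainNum_length_add_one (L : List ℤ) : chainNum L (L.length + 1) = 0 := by
  induction L with
  | nil => rfl
  | cons _ L ih => exact ih

theorem chainNum_eq_getElem_mul_sub (L : List ℤ) (k : ℕ) (hk : k < L.length) :
    chainNum L k = L[k] * chainNum L (k + 1) - chainNum L (k + 2) := by
  induction L generalizing k with
  | nil => simp at hk
  | cons b L ih =>
    cases k with
    | zero => rfl
    | succ k => exact ih k (by simpa using hk)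

theorem chainNum_one_nonneg_and_lt {L : List ℤ} (hL : ∀ z ∈ L, 2 ≤ z) :
    0 ≤ chainNum L 1 ∧ chainNum L 1 < chainNum L 0 := by
  induction L with
  | nil => exact ⟨le_rfl, one_pos⟩
  | cons b L ih =>
    obtain ⟨h1, h2⟩ := ih fun z hz => hL z (List.mem_cons_of_mem _ hz)
    have hb := hL b List.mem_cons_self
    exact ⟨by simp only [chainNum]; omega, by simp only [chainNum]; nlinarith⟩

theorem chainNum_pos {L : List ℤ} (hL : ∀ z ∈ L, 2 ≤ z) {k : ℕ} (hk : k ≤ L.length) :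
    0 < chainNum L k := by
  induction L generalizing k with
  | nil =>
    obtain rfl : k = 0 := by simpa using hk
    exact one_pos
  | cons b L ih =>
    cases k with
    | zero => have := chainNum_one_nonneg_and_lt hL; omega
    | succ k => exact ih (fun z hz => hL z (List.mem_cons_of_mem _ hz)) (by simpa using hk)

theorem isCoprime_chainNum (L : List ℤ) : IsCoprime (chainNum L 0) (chainNum L 1) := by
  induction L with
  | nil => exact isCoprime_one_left
  | cons b L ih =>
    simpa [chainNum, neg_add_eq_sub, mul_comm] using ih.symm.neg_left.add_mul_left_left b

theorem ncf_map_intCast_eq_chainNum {L : List ℤ} (hL : ∀ z ∈ L, 2 ≤ z) :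
    ncf (L.map Int.cast) = chainNum L 0 / chainNum L 1 := by
  induction L with
  | nil => simp [ncf, chainNum]
  | cons b L ih =>
    have hL' : ∀ z ∈ L, 2 ≤ z := fun z hz => hL z (List.mem_cons_of_mem _ hz)
    have h0 : (chainNum L 0 : ℚ) ≠ 0 := by exact_mod_cast (chainNum_pos hL' (Nat.zero_le _)).ne'
    rw [List.map_cons, ncf, ih hL', one_div_div]
    simp only [chainNum]
    push_cast
    field_simp

theorem chainNum_ofFn_eq_of_ncf_eq {ν : ℕ} {b : Fin ν → ℤ} (hb : ∀ k, 2 ≤ b k)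
    {α ω : ℤ} (hα : 0 < α) (hω : 0 < ω) (hcop : IsCoprime α ω)
    (h : ncf (List.ofFn fun k => (b k : ℚ)) = α / ω) :
    chainNum (List.ofFn b) 0 = α ∧ chainNum (List.ofFn b) 1 = ω := by
  have hL := List.forall_mem_ofFn_iff.2 hb
  rw [show (List.ofFn fun k => (b k : ℚ)) = (List.ofFn b).map Int.cast from
    List.map_ofFn.symm, ncf_map_intCast_eq_chainNum hL] at h
  have h1 : chainNum (List.ofFn b) 1 ≠ 0 := by
    intro h1
    rw [h1, Int.cast_zero, div_zero, eq_comm, div_eq_zero_iff] at h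
    rcases h with h | h <;> norm_cast at h <;> omega
  exact Rat.div_int_inj (lt_of_le_of_ne (chainNum_one_nonneg_and_lt hL).1 (Ne.symm h1)) hω
    (Int.isCoprime_iff_gcd_eq_one.mp (isCoprime_chainNum _))
    (Int.isCoprime_iff_gcd_eq_one.mp hcop) h

structure IsChainNumerators {ν : ℕ} (b : Fin ν → ℤ) (N : ℕ → ℤ) : Prop where
  recurrence : ∀ k : Fin ν, N k = b k * N (k + 1) - N (k + 2)
  top : N ν = 1
  succ_top : N (ν + 1) = 0
  pos : ∀ k ≤ ν, 0 < N k

def chainPairing {ν : ℕ} (b : Fin ν → ℤ) (Y : ℕ → ℤ) (k : Fin ν) : ℤ :=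
  Y k - b k * Y (k + 1) + Y (k + 2)

def chainWronskian (N Y : ℕ → ℤ) (t : ℕ) : ℤ := Y t * N (t + 1) - Y (t + 1) * N t

theorem chainPairing_add_const {ν : ℕ} (b : Fin ν → ℤ) (Y : ℕ → ℤ) (c : ℤ)
    (k : Fin ν) :
    chainPairing b (fun t => Y t + c) k = chainPairing b Y k + (2 - b k) * c := by
  simp only [chainPairing]; ring

/-- `chainMax N a (t + 1)` is the greatest `Y` with `Y * N t < chainMax N a t * N (t + 1)`. -/
def chainMax (N : ℕ → ℤ) (a : ℤ) : ℕ → ℤ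
  | 0 => a
  | t + 1 => (chainMax N a t * N (t + 1) - 1) / N t

namespace IsChainNumerators

variable {ν : ℕ} {b : Fin ν → ℤ} {N : ℕ → ℤ}

theorem nonneg (hN : IsChainNumerators b N) {k : ℕ} (hk : k ≤ ν + 1) : 0 ≤ N k := by
  rcases Nat.lt_or_eq_of_le hk with hk | rfl
  · exact (hN.pos k (by omega)).le
  · exact hN.succ_top.ge

theorem chainWronskian_sub_succ (hN : IsChainNumerators b N) (Y : ℕ → ℤ) (k : Fin ν) :
    chainWronskian N Y k - chainWronskian N Y (k + 1) = N (k + 1) * chainPairing b Y k := by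
  rw [chainWronskian, chainWronskian, chainPairing, hN.recurrence k]
  ring_nf

theorem chainWronskian_top (hN : IsChainNumerators b N) (Y : ℕ → ℤ) :
    chainWronskian N Y ν = -Y (ν + 1) := by
  simp [chainWronskian, hN.top, hN.succ_top]

theorem le_chainWronskian (hN : IsChainNumerators b N) {Y : ℕ → ℤ}
    (hY : ∀ k, 0 ≤ chainPairing b Y k) {t : ℕ} (ht : t ≤ ν) :
    -Y (ν + 1) ≤ chainWronskian N Y t := by
  refine Nat.decreasingInduction (fun k hk ih => ?_) (hN.chainWronskian_top Y).ge ht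
  have hsub := hN.chainWronskian_sub_succ Y ⟨k, hk⟩
  have hnn := mul_nonneg (hN.nonneg (k := k + 1) (by omega)) (hY ⟨k, hk⟩)
  dsimp only at hsub
  linarith

theorem chainWronskian_le (hN : IsChainNumerators b N) {Z : ℕ → ℤ}
    (hZ : ∀ k, chainPairing b Z k ≤ 0) {t : ℕ} (ht : t ≤ ν) :
    chainWronskian N Z t ≤ -Z (ν + 1) := by
  have hneg (k : Fin ν) : 0 ≤ chainPairing b (-Z) k := by
    have := hZ k
    simp only [chainPairing, Pi.neg_apply] at this ⊢
    linarith
  have := hN.le_chainWronskian hneg ht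
  simp only [chainWronskian, Pi.neg_apply] at this ⊢
  linarith

theorem chainWronskian_chainMax (hN : IsChainNumerators b N) (a : ℤ) {t : ℕ} (ht : t ≤ ν) :
    1 ≤ chainWronskian N (chainMax N a) t ∧ chainWronskian N (chainMax N a) t ≤ N t := by
  have hpos := hN.pos t ht
  have h1 := Int.ediv_mul_le (chainMax N a t * N (t + 1) - 1) hpos.ne'
  have h2 := Int.lt_ediv_add_one_mul_self (chainMax N a t * N (t + 1) - 1) hpos
  rw [chainWronskian, chainMax]
  constructor <;> linarith

theorem chainMax_succ_top (hN : IsChainNumerators b N) (a : ℤ) : chainMax N a (ν + 1) = -1 := by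
  simp [chainMax, hN.top, hN.succ_top]

theorem chainPairing_chainMax_nonneg (hN : IsChainNumerators b N) (a : ℤ) (k : Fin ν) :
    0 ≤ chainPairing b (chainMax N a) k := by
  have hk := hN.chainWronskian_chainMax a k.isLt.le
  have hk1 := hN.chainWronskian_chainMax a (t := k + 1) k.isLt
  have hsub := hN.chainWronskian_sub_succ (chainMax N a) k
  have hpos := hN.pos (k + 1) k.isLt
  by_contra! h
  have := mul_le_mul_of_nonneg_left (Int.le_sub_one_of_lt h) hpos.le
  linarith

theorem le_chainMax (hN : IsChainNumerators b N) {a : ℤ} {Y : ℕ → ℤ} (hY0 : Y 0 ≤ a)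
    (hYtop : Y (ν + 1) = -1) (hY : ∀ k, 0 ≤ chainPairing b Y k) {t : ℕ} (ht : t ≤ ν + 1) :
    Y t ≤ chainMax N a t := by
  induction t with
  | zero => exact hY0
  | succ t ih =>
    have hW := hN.le_chainWronskian hY (t := t) (by omega)
    have hmono := mul_le_mul_of_nonneg_right (ih (by omega)) (hN.nonneg (k := t + 1) ht)
    rw [hYtop, chainWronskian] at hW
    rw [chainMax, Int.le_ediv_iff_mul_le (hN.pos t (by omega))]
    linarith

theorem chainMax_lt (hN : IsChainNumerators b N) {a : ℤ} {Z : ℕ → ℤ} (hZ0 : a < Z 0)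
    (hZtop : Z (ν + 1) = 0) (hZ : ∀ k, chainPairing b Z k ≤ 0) {t : ℕ} (ht : t ≤ ν + 1) :
    chainMax N a t < Z t := by
  induction t with
  | zero => exact hZ0
  | succ t ih =>
    have hW := hN.chainWronskian_le hZ (t := t) (by omega)
    have hmax := (hN.chainWronskian_chainMax a (t := t) (by omega)).1
    have hmono := mul_le_mul_of_nonneg_right (ih (by omega)).le (hN.nonneg (k := t + 1) ht)
    rw [hZtop, chainWronskian] at hW
    rw [chainWronskian] at hmax
    exact lt_of_mul_lt_mul_right (by linarith) (hN.pos t (by omega)).le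

end IsChainNumerators

theorem isChainNumerators_chainNum {ν : ℕ} {b : Fin ν → ℤ} (hb : ∀ k, 2 ≤ b k) :
    IsChainNumerators b (chainNum (List.ofFn b)) where
  recurrence k := by rw [chainNum_eq_getElem_mul_sub _ _ (by simp), List.getElem_ofFn]
  top := by simpa using chainNum_length (List.ofFn b)
  succ_top := by simpa using chainNum_length_add_one (List.ofFn b)
  pos k hk := chainNum_pos (List.forall_mem_ofFn_iff.2 hb) (by simpa using hk)

theorem ceil_intCast_div_intCast (n a : ℤ) (ha : 0 < a) :
    ⌈(n : ℚ) / a⌉ = (n - 1) / a + 1 := by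
  have h1 := Int.ediv_mul_le (n - 1) ha.ne'
  have h2 := Int.lt_ediv_add_one_mul_self (n - 1) ha
  have haq : (0 : ℚ) < a := by exact_mod_cast ha
  rw [Int.ceil_eq_iff, lt_div_iff₀ haq, div_le_iff₀ haq]
  push_cast
  constructor
  · have : ((n - 1) / a * a : ℤ) < n := by linarith
    simpa using (by exact_mod_cast this : (((n - 1) / a : ℤ) : ℚ) * a < n)
  · have : n ≤ (((n - 1) / a + 1) * a : ℤ) := by linarith
    exact_mod_cast this

theorem chainMax_one_add_one {N : ℕ → ℤ} (hN0 : 0 < N 0) (a : ℤ) :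
    chainMax N a 1 + 1 = ⌈((a * N 1 : ℤ) : ℚ) / (N 0 : ℚ)⌉ := by
  rw [ceil_intCast_div_intCast _ _ hN0]
  rfl

theorem add_one_le_of_lt_of_sub_int {a b c : ℚ} (ha : ∃ k : ℤ, a - c = k)
    (hb : ∃ k : ℤ, b - c = k) (h : b < a) : b + 1 ≤ a := by
  obtain ⟨k, hk⟩ := ha
  obtain ⟨l, hl⟩ := hb
  have : l < k := by exact_mod_cast (show (l : ℚ) < k by linarith)
  have : (l : ℚ) + 1 ≤ k := by exact_mod_cast this
  linarith

theorem exists_eq_intCast {V : Type*} {y : V → ℚ} (h : ∀ v, ∃ k : ℤ, y v = k) :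
    ∃ f : V → ℤ, y = fun v => (f v : ℚ) :=
  ⟨fun v => (h v).choose, funext fun v => (h v).choose_spec⟩

theorem exists_int_add_single_sub {V : Type*} [DecidableEq V] {c z : V → ℚ}
    (hz : ∀ u, ∃ k : ℤ, z u - c u = k) (v u : V) :
    ∃ k : ℤ, (z + Pi.single v 1 : V → ℚ) u - c u = k := by
  obtain ⟨k, hk⟩ := hz u
  refine ⟨k + if u = v then 1 else 0, ?_⟩
  rw [Pi.add_apply, add_sub_right_comm, hk, Pi.single_apply]
  split_ifs <;> simp

section Lattice

variable {V : Type*} [Fintype V]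

structure IsPlumbingMatrix (I : Matrix V V ℚ) : Prop where
  symm : I.IsSymm
  int : ∀ u v, ∃ k : ℤ, I u v = k
  nonneg : ∀ u v, u ≠ v → 0 ≤ I u v

def chi (I : Matrix V V ℚ) (ZK y : V → ℚ) : ℚ := -((y - ZK) ⬝ᵥ I *ᵥ y) / 2

theorem dotProduct_mulVec_comm {I : Matrix V V ℚ} (hI : I.IsSymm) (x y : V → ℚ) :
    x ⬝ᵥ I *ᵥ y = y ⬝ᵥ I *ᵥ x := by
  rw [dotProduct_mulVec, ← mulVec_transpose, hI.eq, dotProduct_comm]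

theorem chi_sub {I : Matrix V V ℚ} (hI : I.IsSymm) (ZK y : V → ℚ) :
    chi I ZK (ZK - y) = chi I ZK y := by
  simp only [chi, sub_sub_cancel_left, mulVec_sub, neg_dotProduct, dotProduct_sub,
    sub_dotProduct, dotProduct_mulVec_comm hI ZK y]
  ring

variable [DecidableEq V]

def antiNefSet (I : Matrix V V ℚ) (c : V → ℚ) (v₀ : V) (q : ℚ) : Set (V → ℚ) :=
  {y | (∀ v, ∃ k : ℤ, y v - c v = k) ∧ y v₀ = q ∧
    ∀ v, v ≠ v₀ → y ⬝ᵥ I *ᵥ Pi.single v 1 ≤ 0}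

def dualAntiNefSet (I : Matrix V V ℚ) (v₀ : V) (q : ℚ) : Set (V → ℚ) :=
  {y | (∀ v, ∃ k : ℤ, y v = k) ∧ y v₀ = q ∧
    ∀ v, v ≠ v₀ → I v v + 2 ≤ y ⬝ᵥ I *ᵥ Pi.single v 1}

variable {I : Matrix V V ℚ}

theorem antiNefSet_zero (v₀ : V) (q : ℚ) :
    antiNefSet I 0 v₀ q = {y | (∀ v, ∃ k : ℤ, y v = (k : ℚ)) ∧ y v₀ = q ∧
      ∀ v, v ≠ v₀ → y ⬝ᵥ I *ᵥ Pi.single v 1 ≤ 0} := by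
  simp [antiNefSet]

theorem dotProduct_mulVec_single (y : V → ℚ) (v : V) :
    y ⬝ᵥ I *ᵥ Pi.single v 1 = ∑ u, y u * I u v := by
  simp [dotProduct]

theorem chi_add_single (hI : I.IsSymm) {ZK : V → ℚ}
    (hZK : ∀ v, ZK ⬝ᵥ I *ᵥ Pi.single v 1 = I v v + 2) (y : V → ℚ) (v : V) :
    chi I ZK (y + Pi.single v 1) = chi I ZK y + 1 - y ⬝ᵥ I *ᵥ Pi.single v 1 := by
  have hvv : Pi.single v 1 ⬝ᵥ I *ᵥ Pi.single v 1 = I v v := by simp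
  simp only [chi, add_sub_right_comm y, mulVec_add, dotProduct_add, add_dotProduct,
    sub_dotProduct, hvv, hZK, dotProduct_mulVec_comm hI (Pi.single v 1) y]
  ring

theorem dotProduct_mulVec_single_le (hI : IsPlumbingMatrix I) {x z : V → ℚ} (hzx : z ≤ x)
    {v : V} (hv : z v = x v) : z ⬝ᵥ I *ᵥ Pi.single v 1 ≤ x ⬝ᵥ I *ᵥ Pi.single v 1 := by
  rw [dotProduct_mulVec_single, dotProduct_mulVec_single]
  refine Finset.sum_le_sum fun u _ => ?_
  rcases eq_or_ne u v with rfl | huv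
  · rw [hv]
  · exact mul_le_mul_of_nonneg_right (hzx u) (hI.nonneg u v huv)

theorem exists_int_dotProduct_mulVec_single (hI : IsPlumbingMatrix I) {c z : V → ℚ}
    (hz : ∀ u, ∃ k : ℤ, z u - c u = k) {v : V}
    (hc : ∃ k : ℤ, c ⬝ᵥ I *ᵥ Pi.single v 1 = k) :
    ∃ k : ℤ, z ⬝ᵥ I *ᵥ Pi.single v 1 = k := by
  choose f hf using hz
  choose g hg using fun u => hI.int u v
  obtain ⟨k, hk⟩ := hc
  refine ⟨k + ∑ u, f u * g u, ?_⟩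
  rw [← add_sub_cancel c z, add_dotProduct, hk, dotProduct_mulVec_single]
  push_cast
  simp only [Pi.sub_apply, hf, hg]

theorem exists_lt_one_le_of_isLeast (hI : IsPlumbingMatrix I) {c : V → ℚ}
    (hc : ∀ v, ∃ k : ℤ, c ⬝ᵥ I *ᵥ Pi.single v 1 = k) {v₀ : V} {q : ℚ} {x z : V → ℚ}
    (hx : IsLeast (antiNefSet I c v₀ q) x) (hz : ∀ u, ∃ k : ℤ, z u - c u = k)
    (hzv₀ : z v₀ = q) (hzx : z ≤ x) (hne : z ≠ x) : ∃ v, z v < x v ∧ 1 ≤ z ⬝ᵥ I *ᵥ Pi.single v 1 := by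
  by_contra! h
  refine hne (le_antisymm hzx (hx.2 ⟨hz, hzv₀, fun v hv => ?_⟩))
  rcases (hzx v).lt_or_eq with hlt | heq
  · obtain ⟨k, hk⟩ := exists_int_dotProduct_mulVec_single hI hz (hc v)
    have := h v hlt
    rw [hk] at this ⊢
    have : k < 1 := by exact_mod_cast this
    exact_mod_cast (by omega : k ≤ 0)
  · exact (dotProduct_mulVec_single_le hI hzx heq).trans (hx.1.2.2 v hv)

theorem chi_le_of_isLeast (hI : IsPlumbingMatrix I) {ZK : V → ℚ}
    (hZK : ∀ v, ZK ⬝ᵥ I *ᵥ Pi.single v 1 = I v v + 2) {c : V → ℚ}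
    (hc : ∀ v, ∃ k : ℤ, c ⬝ᵥ I *ᵥ Pi.single v 1 = k) {v₀ : V} {q : ℚ} {x z : V → ℚ}
    (hx : IsLeast (antiNefSet I c v₀ q) x) (hz : ∀ u, ∃ k : ℤ, z u - c u = k)
    (hzv₀ : z v₀ = q) (hzx : z ≤ x) : chi I ZK x ≤ chi I ZK z := by
  suffices ∀ n : ℕ, ∀ z : V → ℚ, (∀ u, ∃ k : ℤ, z u - c u = k) → z v₀ = q → z ≤ x →
      ∑ u, (x u - z u) < n → chi I ZK x ≤ chi I ZK z from
    this (⌊∑ u, (x u - z u)⌋₊ + 1) z hz hzv₀ hzx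
      (by push_cast; exact Nat.lt_floor_add_one _)
  intro n
  induction n with
  | zero =>
    intro z _ _ hzx hsum
    exact absurd hsum (by simpa using Finset.sum_nonneg fun u _ => sub_nonneg.2 (hzx u))
  | succ n ih =>
    intro z hz hzv₀ hzx hsum
    obtain rfl | hne := eq_or_ne z x
    · exact le_rfl
    obtain ⟨v, hlt, hpos⟩ := exists_lt_one_le_of_isLeast hI hc hx hz hzv₀ hzx hne
    have hstep := add_one_le_of_lt_of_sub_int (hx.1.1 v) (hz v) hlt
    have hv₀ : v ≠ v₀ := by rintro rfl; exact hlt.ne (hzv₀.trans hx.1.2.1.symm)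
    calc chi I ZK x ≤ chi I ZK (z + Pi.single v 1) := by
          refine ih _ (exists_int_add_single_sub hz v) (by simp [hv₀.symm, hzv₀])
            (fun u => ?_) ?_
          · rcases eq_or_ne u v with rfl | huv
            · simpa using hstep
            · simpa [huv] using hzx u
          · simp only [Pi.add_apply, ← sub_sub, Finset.sum_sub_distrib, Finset.sum_pi_single',
              Finset.mem_univ, if_true]
            rw [Finset.sum_sub_distrib] at hsum
            push_cast at hsum
            linarith
      _ = chi I ZK z + 1 - z ⬝ᵥ I *ᵥ Pi.single v 1 := chi_add_single hI.symm hZK z v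
      _ ≤ chi I ZK z := by linarith

theorem sub_mem_antiNefSet_iff {ZK : V → ℚ}
    (hZK : ∀ v, ZK ⬝ᵥ I *ᵥ Pi.single v 1 = I v v + 2)
    {c : V → ℚ} (hc : ∀ v, ∃ k : ℤ, ZK v - c v = k) (v₀ : V) (q : ℚ) (y : V → ℚ) :
    ZK - y ∈ antiNefSet I c v₀ (ZK v₀ - q) ↔ y ∈ dualAntiNefSet I v₀ q := by
  have hint : ∀ v, (∃ k : ℤ, ZK v - y v - c v = k) ↔ ∃ k : ℤ, y v = k := fun v => by
    obtain ⟨l, hl⟩ := hc v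
    constructor
    · rintro ⟨k, hk⟩; exact ⟨l - k, by push_cast; linarith⟩
    · rintro ⟨k, hk⟩; exact ⟨l - k, by push_cast; linarith⟩
  simp only [antiNefSet, dualAntiNefSet, Set.mem_ofPred_eq, Pi.sub_apply, hint, sub_right_inj,
    sub_dotProduct, hZK, sub_nonpos]

theorem IsGreatest.sub_isLeast_antiNefSet {ZK : V → ℚ}
    (hZK : ∀ v, ZK ⬝ᵥ I *ᵥ Pi.single v 1 = I v v + 2) {c : V → ℚ}
    (hc : ∀ v, ∃ k : ℤ, ZK v - c v = k) {v₀ : V} {q : ℚ} {W : V → ℚ}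
    (hW : IsGreatest (dualAntiNefSet I v₀ q) W) :
    IsLeast (antiNefSet I c v₀ (ZK v₀ - q)) (ZK - W) := by
  refine ⟨(sub_mem_antiNefSet_iff hZK hc v₀ q W).2 hW.1, fun y hy => ?_⟩
  rw [← sub_sub_cancel ZK y, sub_mem_antiNefSet_iff hZK hc] at hy
  exact sub_le_comm.1 (hW.2 hy)

theorem chi_eq_of_isGreatest_of_isLeast (hI : IsPlumbingMatrix I) {ZK : V → ℚ}
    (hZK : ∀ v, ZK ⬝ᵥ I *ᵥ Pi.single v 1 = I v v + 2) {v₀ : V} {q : ℚ} {W x : V → ℚ}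
    (hW : IsGreatest (dualAntiNefSet I v₀ q) W) (hx : IsLeast (antiNefSet I 0 v₀ q) x)
    (hWx : W ≤ x) : chi I ZK W = chi I ZK x := by
  refine le_antisymm ?_ (chi_le_of_isLeast hI hZK (fun v => ⟨0, by simp⟩) hx
    (by simpa using hW.1.1) hW.1.2.1 hWx)
  have hZKint : ∀ v, ∃ k : ℤ, ZK ⬝ᵥ I *ᵥ Pi.single v 1 = k := fun v => by
    obtain ⟨k, hk⟩ := hI.int v v
    exact ⟨k + 2, by rw [hZK, hk]; push_cast; ring⟩
  rw [← chi_sub hI.symm ZK W, ← chi_sub hI.symm ZK x]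
  refine chi_le_of_isLeast hI hZK hZKint (hW.sub_isLeast_antiNefSet hZK fun v => ⟨0, by simp⟩)
    (fun u => ?_) (by rw [Pi.sub_apply, hx.1.2.1]) (sub_le_sub_left hWx ZK)
  obtain ⟨k, hk⟩ := hx.1.1 u
  refine ⟨-k, ?_⟩
  simp only [Pi.sub_apply, Pi.zero_apply, sub_zero] at hk ⊢
  push_cast
  linarith

end Lattice

abbrev StarVertex {d : ℕ} (ν : Fin d → ℕ) := Option ((i : Fin d) × Fin (ν i))

section Star

variable {d : ℕ} {ν : Fin d → ℕ}

def legCoord {R : Type*} [Zero R] (y : StarVertex ν → R) (i : Fin d) : ℕ → R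
  | 0 => y none
  | t + 1 => if h : t < ν i then y (some ⟨i, ⟨t, h⟩⟩) else 0

theorem legCoord_val_add_one {R : Type*} [Zero R] (y : StarVertex ν → R) (i : Fin d)
    (j : Fin (ν i)) : legCoord y i (j + 1) = y (some ⟨i, j⟩) := by
  simp [legCoord]

theorem legCoord_add_one_of_le {R : Type*} [Zero R] (y : StarVertex ν → R) {i : Fin d} {t : ℕ}
    (ht : ν i ≤ t) : legCoord y i (t + 1) = 0 := by
  simp [legCoord, ht]

theorem legCoord_intCast (f : StarVertex ν → ℤ) (i : Fin d) (t : ℕ) :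
    legCoord (fun u => (f u : ℚ)) i t = legCoord f i t := by
  cases t
  · rfl
  · simp only [legCoord]; split_ifs <;> simp

theorem sum_ite_val_eq_legCoord (y : StarVertex ν → ℚ) (i : Fin d) (t : ℕ) :
    ∑ j : Fin (ν i), (if (j : ℕ) = t then y (some ⟨i, j⟩) else 0) =
      legCoord y i (t + 1) := by
  rw [legCoord]
  split_ifs with h
  · rw [Finset.sum_eq_single ⟨t, h⟩ (fun j _ hj => if_neg fun h' => hj (Fin.ext h'))
      (by simp)]
    simp
  · exact Finset.sum_eq_zero fun j _ => if_neg fun h' => h (by rw [← h']; exact j.isLt)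

theorem ite_add_sum_ite_eq_legCoord (y : StarVertex ν → ℚ) (i : Fin d) (t : ℕ) :
    ((if t = 0 then y none else 0) +
      ∑ j : Fin (ν i), if (j : ℕ) + 1 = t then y (some ⟨i, j⟩) else 0) =
      legCoord y i t := by
  cases t with
  | zero => simp [legCoord]
  | succ t => simp [sum_ite_val_eq_legCoord]

variable (b₀ : ℤ) (b : (i : Fin d) → Fin (ν i) → ℤ)

structure IsStarMatrix (I : Matrix (StarVertex ν) (StarVertex ν) ℚ) : Prop where
  symm : I.IsSymm
  center : I none none = -(b₀ : ℚ)
  diag : ∀ i j, I (some ⟨i, j⟩) (some ⟨i, j⟩) = -((b i j : ℤ) : ℚ)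
  center_leg : ∀ i (j : Fin (ν i)), I none (some ⟨i, j⟩) = if (j : ℕ) = 0 then 1 else 0
  leg : ∀ i (j j' : Fin (ν i)), j ≠ j' →
    I (some ⟨i, j⟩) (some ⟨i, j'⟩) =
      if (j : ℕ) + 1 = (j' : ℕ) ∨ (j' : ℕ) + 1 = (j : ℕ) then 1 else 0
  cross : ∀ i i', i ≠ i' → ∀ (j : Fin (ν i)) (j' : Fin (ν i')),
    I (some ⟨i, j⟩) (some ⟨i', j'⟩) = 0

variable {b₀ b} {I : Matrix (StarVertex ν) (StarVertex ν) ℚ}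

namespace IsStarMatrix

theorem eq_zero_or_one_of_ne (hI : IsStarMatrix b₀ b I) {u v : StarVertex ν} (huv : u ≠ v) :
    I u v = 0 ∨ I u v = 1 := by
  have hcenter (i) (j : Fin (ν i)) : I none (some ⟨i, j⟩) = 0 ∨ I none (some ⟨i, j⟩) = 1 :=
    by rw [hI.center_leg]; split_ifs <;> simp
  rcases u with _ | ⟨i, j⟩ <;> rcases v with _ | ⟨i', j'⟩
  · exact absurd rfl huv
  · exact hcenter i' j'
  · rw [hI.symm.apply]; exact hcenter i j
  · obtain rfl | hi := eq_or_ne i i'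
    · have hj : j ≠ j' := fun h => huv (h ▸ rfl)
      rw [hI.leg i j j' hj]; split_ifs <;> simp
    · exact Or.inl (hI.cross i i' hi j j')

theorem isPlumbingMatrix (hI : IsStarMatrix b₀ b I) : IsPlumbingMatrix I where
  symm := hI.symm
  int u v := by
    obtain rfl | huv := eq_or_ne u v
    · rcases u with _ | ⟨i, j⟩
      · exact ⟨-b₀, by rw [hI.center]; push_cast; rfl⟩
      · exact ⟨-b i j, by rw [hI.diag]; push_cast; rfl⟩
    · rcases hI.eq_zero_or_one_of_ne huv with h | h
      · exact ⟨0, by simp [h]⟩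
      · exact ⟨1, by simp [h]⟩
  nonneg u v huv := by rcases hI.eq_zero_or_one_of_ne huv with h | h <;> simp [h]

theorem leg_entry (hI : IsStarMatrix b₀ b I) (i : Fin d) (j j' : Fin (ν i)) :
    I (some ⟨i, j'⟩) (some ⟨i, j⟩) = (if j' = j then -((b i j : ℤ) : ℚ) else 0)
      + (if (j' : ℕ) = j + 1 then 1 else 0) + (if (j' : ℕ) + 1 = j then 1 else 0) := by
  obtain rfl | hj := eq_or_ne j' j
  · rw [hI.diag]; simp
  · have hj' : (j' : ℕ) ≠ j := fun h => hj (Fin.ext h)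
    rw [hI.leg i j' j hj, if_neg hj]
    split_ifs <;> first | omega | simp

theorem dotProduct_mulVec_single_leg (hI : IsStarMatrix b₀ b I) (y : StarVertex ν → ℚ)
    (i : Fin d) (j : Fin (ν i)) :
    y ⬝ᵥ I *ᵥ Pi.single (some ⟨i, j⟩) 1 = legCoord y i j
      - b i j * legCoord y i (j + 1) + legCoord y i (j + 2) := by
  have hcross (i') (hi' : i' ≠ i) :
      ∑ j' : Fin (ν i'), y (some ⟨i', j'⟩) * I (some ⟨i', j'⟩) (some ⟨i, j⟩) = 0 :=
    Finset.sum_eq_zero fun j' _ => by rw [hI.cross i' i hi', mul_zero]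
  rw [dotProduct_mulVec_single, Fintype.sum_option, Fintype.sum_sigma,
    Finset.sum_eq_single i (fun i' _ => hcross i') (by simp)]
  simp only [hI.leg_entry, mul_add, mul_ite, mul_zero, Finset.sum_add_distrib,
    Finset.sum_ite_eq', Finset.mem_univ, if_true, sum_ite_val_eq_legCoord, hI.center_leg, mul_one]
  rw [← ite_add_sum_ite_eq_legCoord y i j, legCoord_val_add_one]
  ring_nf

theorem dotProduct_mulVec_single_center (hI : IsStarMatrix b₀ b I)
    (y : StarVertex ν → ℚ) :
    y ⬝ᵥ I *ᵥ Pi.single none 1 = -b₀ * y none + ∑ i, legCoord y i 1 := by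
  rw [dotProduct_mulVec_single, Fintype.sum_option, Fintype.sum_sigma, hI.center]
  simp only [hI.symm.apply, hI.center_leg, mul_ite, mul_one, mul_zero, sum_ite_val_eq_legCoord]
  ring

theorem dotProduct_mulVec_single_leg_intCast (hI : IsStarMatrix b₀ b I)
    (f : StarVertex ν → ℤ) (i : Fin d) (j : Fin (ν i)) :
    (fun u => (f u : ℚ)) ⬝ᵥ I *ᵥ Pi.single (some ⟨i, j⟩) 1 =
      chainPairing (b i) (legCoord f i) j := by
  rw [hI.dotProduct_mulVec_single_leg, legCoord_intCast, legCoord_intCast, legCoord_intCast,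
    chainPairing]
  push_cast
  ring

end IsStarMatrix

/-- On each leg `starMax b m - 1` is the greedy sequence `chainMax` started at `m - 1`: the shift
by `1` turns the constraints `(y, E_v) ≥ 2 - b_v` of `dualAntiNefSet` into `chainPairing ≥ 0`. -/
def starMax (b : (i : Fin d) → Fin (ν i) → ℤ) (m : ℤ) : StarVertex ν → ℤ
  | none => m
  | some ⟨i, j⟩ => chainMax (chainNum (List.ofFn (b i))) (m - 1) (j + 1) + 1

theorem legCoord_starMax (hb : ∀ i j, 2 ≤ b i j) (m : ℤ) (i : Fin d) {t : ℕ}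
    (ht : t ≤ ν i + 1) :
    legCoord (starMax b m) i t = chainMax (chainNum (List.ofFn (b i))) (m - 1) t + 1 := by
  cases t with
  | zero => simp [legCoord, starMax, chainMax]
  | succ t =>
    by_cases h : t < ν i
    · simp [legCoord, starMax, h]
    · obtain rfl : t = ν i := by omega
      rw [legCoord_add_one_of_le _ le_rfl, (isChainNumerators_chainNum (hb i)).chainMax_succ_top]
      rfl

theorem chainPairing_legCoord_starMax (hb : ∀ i j, 2 ≤ b i j) (m : ℤ) (i : Fin d)
    (k : Fin (ν i)) :
    chainPairing (b i) (legCoord (starMax b m) i) k =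
      chainPairing (b i) (chainMax (chainNum (List.ofFn (b i))) (m - 1)) k + (2 - b i k) := by
  rw [← mul_one (2 - b i k), ← chainPairing_add_const, chainPairing, chainPairing,
    legCoord_starMax hb m i (by omega), legCoord_starMax hb m i (by omega),
    legCoord_starMax hb m i (by omega)]

theorem mem_dualAntiNefSet_starMax (hI : IsStarMatrix b₀ b I) (hb : ∀ i j, 2 ≤ b i j)
    (m : ℤ) :
    (fun u => (starMax b m u : ℚ)) ∈ dualAntiNefSet I none m := by
  refine ⟨fun u => ⟨_, rfl⟩, rfl, ?_⟩
  rintro (_ | ⟨i, j⟩) hv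
  · exact absurd rfl hv
  have := (isChainNumerators_chainNum (hb i)).chainPairing_chainMax_nonneg (m - 1) j
  rw [hI.dotProduct_mulVec_single_leg_intCast, hI.diag, chainPairing_legCoord_starMax hb]
  exact_mod_cast (by linarith : -b i j + 2 ≤ _ + (2 - b i j))

theorem le_starMax (hI : IsStarMatrix b₀ b I) (hb : ∀ i j, 2 ≤ b i j) {m : ℤ}
    {y : StarVertex ν → ℚ} (hy : y ∈ dualAntiNefSet I none m) :
    y ≤ fun u => (starMax b m u : ℚ) := by
  obtain ⟨f, rfl⟩ := exists_eq_intCast hy.1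
  have hf0 : f none = m := by simpa using hy.2.1
  rintro (_ | ⟨i, j⟩)
  · simp [starMax, hf0]
  have hpair (k : Fin (ν i)) : 0 ≤ chainPairing (b i) (fun t => legCoord f i t + -1) k := by
    have := hy.2.2 (some ⟨i, k⟩) (by simp)
    rw [hI.dotProduct_mulVec_single_leg_intCast, hI.diag] at this
    rw [chainPairing_add_const]
    have : -b i k + 2 ≤ chainPairing (b i) (legCoord f i) k := by exact_mod_cast this
    linarith
  have := (isChainNumerators_chainNum (hb i)).le_chainMax (a := m - 1)
    (by simp [legCoord, hf0]) (by simp [legCoord_add_one_of_le]) hpair (t := j + 1) (by omega)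
  rw [legCoord_val_add_one] at this
  simp only [starMax]
  exact_mod_cast (by linarith : f (some ⟨i, j⟩) ≤ _)

theorem starMax_le (hI : IsStarMatrix b₀ b I) (hb : ∀ i j, 2 ≤ b i j) {m : ℤ}
    {y : StarVertex ν → ℚ} (hy : y ∈ antiNefSet I 0 none m) :
    (fun u => (starMax b m u : ℚ)) ≤ y := by
  rw [antiNefSet_zero] at hy
  obtain ⟨f, rfl⟩ := exists_eq_intCast hy.1
  have hf0 : f none = m := by simpa using hy.2.1
  rintro (_ | ⟨i, j⟩)
  · simp [starMax, hf0]
  have hpair (k : Fin (ν i)) : chainPairing (b i) (legCoord f i) k ≤ 0 := by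
    have := hy.2.2 (some ⟨i, k⟩) (by simp)
    rw [hI.dotProduct_mulVec_single_leg_intCast] at this
    exact_mod_cast this
  have := (isChainNumerators_chainNum (hb i)).chainMax_lt (a := m - 1) (Z := legCoord f i)
    (by simp [legCoord, hf0]) (legCoord_add_one_of_le _ le_rfl) hpair (t := j + 1) (by omega)
  rw [legCoord_val_add_one] at this
  simp only [starMax]
  exact_mod_cast (by omega : _ ≤ f (some ⟨i, j⟩))

theorem isGreatest_starMax (hI : IsStarMatrix b₀ b I) (hb : ∀ i j, 2 ≤ b i j) (m : ℤ) :
    IsGreatest (dualAntiNefSet I none m) fun u => (starMax b m u : ℚ) :=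
  ⟨mem_dualAntiNefSet_starMax hI hb m, fun _ hy => le_starMax hI hb hy⟩

theorem dotProduct_mulVec_single_center_starMax (hI : IsStarMatrix b₀ b I)
    (hb : ∀ i j, 2 ≤ b i j) (m : ℤ) :
    (fun u => (starMax b m u : ℚ)) ⬝ᵥ I *ᵥ Pi.single none 1 = -b₀ * m + ∑ i,
      (⌈(((m - 1) * chainNum (List.ofFn (b i)) 1 : ℤ) : ℚ) /
        (chainNum (List.ofFn (b i)) 0 : ℚ)⌉ : ℚ) := by
  rw [hI.dotProduct_mulVec_single_center]
  refine congrArg₂ (· + ·) rfl (Finset.sum_congr rfl fun i _ => ?_)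
  rw [legCoord_intCast, legCoord_starMax hb m i (by omega),
    chainMax_one_add_one ((isChainNumerators_chainNum (hb i)).pos 0 (Nat.zero_le _))]

end Star

theorem stmt_14_general
    (d : ℕ) (b₀ : ℤ)
    (α ω : Fin d → ℤ)
    (hω : ∀ i, 0 < ω i ∧ ω i < α i)
    (hcop : ∀ i, IsCoprime (α i) (ω i))
    -- the legs: negative continued fraction expansions αᵢ/ωᵢ = [b_{i1},…,b_{iνᵢ}]
    (ν : Fin d → ℕ)
    (b : (i : Fin d) → Fin (ν i) → ℤ) (hb : ∀ i j, 2 ≤ b i j)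
    (hcf : ∀ i, ncf (List.ofFn fun j => ((b i j : ℤ) : ℚ)) = (α i : ℚ) / (ω i : ℚ))
    -- the intersection matrix of the star-shaped plumbing graph
    (I : Matrix (Option ((i : Fin d) × Fin (ν i))) (Option ((i : Fin d) × Fin (ν i))) ℚ)
    (hsym : I.IsSymm)
    (hI00 : I none none = -(b₀ : ℚ))
    (hIdiag : ∀ i j, I (some ⟨i, j⟩) (some ⟨i, j⟩) = -((b i j : ℤ) : ℚ))
    (hI0leg : ∀ i (j : Fin (ν i)),
      I none (some ⟨i, j⟩) = if (j : ℕ) = 0 then 1 else 0)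
    (hIleg : ∀ i (j j' : Fin (ν i)), j ≠ j' →
      I (some ⟨i, j⟩) (some ⟨i, j'⟩) =
        if (j : ℕ) + 1 = (j' : ℕ) ∨ (j' : ℕ) + 1 = (j : ℕ) then 1 else 0)
    (hIcross : ∀ i i', i ≠ i' → ∀ (j : Fin (ν i)) (j' : Fin (ν i')),
      I (some ⟨i, j⟩) (some ⟨i', j'⟩) = 0)
    -- the anticanonical cycle
    (ZK : Option ((i : Fin d) × Fin (ν i)) → ℚ)
    (hZK : ∀ v, ZK ⬝ᵥ I.mulVec (Pi.single v 1) = I v v + 2)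
    -- the representative r* ∈ [0,1)^𝒱 of the class of Z_K, and Δ
    (rs : Option ((i : Fin d) × Fin (ν i)) → ℚ)
    (hrs2 : ∀ v, ∃ k : ℤ, ZK v - rs v = (k : ℚ))
    (Δ : ℤ) (hΔ : (Δ : ℚ) = ZK none - rs none)
    -- the minimal cycles x(ℓ) (class h = 0) and x*(ℓ) (class of Z_K)
    (x xs : ℤ → Option ((i : Fin d) × Fin (ν i)) → ℚ)
    (hx : ∀ ℓ : ℤ, 0 ≤ ℓ → IsLeast
      {y | (∀ v, ∃ k : ℤ, y v = (k : ℚ)) ∧ y none = (ℓ : ℚ) ∧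
        ∀ v, v ≠ none → y ⬝ᵥ I.mulVec (Pi.single v 1) ≤ 0} (x ℓ))
    (hxs : ∀ ℓ : ℤ, 0 ≤ ℓ → IsLeast
      {y | (∀ v, ∃ k : ℤ, y v - rs v = (k : ℚ)) ∧ y none = rs none + (ℓ : ℚ) ∧
        ∀ v, v ≠ none → y ⬝ᵥ I.mulVec (Pi.single v 1) ≤ 0} (xs ℓ))
    -- the quasi-linear function N
    (N : ℤ → ℤ)
    (hN : ∀ ℓ : ℤ, N ℓ = b₀ * ℓ - ∑ i, ⌈((ℓ * ω i : ℤ) : ℚ) / ((α i : ℤ) : ℚ)⌉) :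
    -- (a) duality for χ(y) = −(y − Z_K, y)/2
    (∀ ℓ : ℤ, 0 ≤ ℓ → ℓ ≤ Δ →
      -((xs ℓ - ZK) ⬝ᵥ I.mulVec (xs ℓ)) / 2 =
      -((x (Δ - ℓ) - ZK) ⬝ᵥ I.mulVec (x (Δ - ℓ))) / 2)
    -- (b) N(ℓ) + N*(Δ − 1 − ℓ) = −2, with N*(ℓ) = −(x*(ℓ), E_{v₀})
    ∧ (∀ ℓ : ℤ, 0 ≤ ℓ → ℓ ≤ Δ - 1 →
      (N ℓ : ℚ) + (-(xs (Δ - 1 - ℓ) ⬝ᵥ I.mulVec (Pi.single none 1))) = -2) := by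
  have hI : IsStarMatrix b₀ b I := ⟨hsym, hI00, hIdiag, hI0leg, hIleg, hIcross⟩
  have hαω (i : Fin d) :
      chainNum (List.ofFn (b i)) 0 = α i ∧ chainNum (List.ofFn (b i)) 1 = ω i :=
    chainNum_ofFn_eq_of_ncf_eq (hb i) ((hω i).1.trans (hω i).2) (hω i).1 (hcop i) (hcf i)
  have hxs_eq (ℓ : ℤ) (hℓ : 0 ≤ ℓ) : xs ℓ = ZK - fun u => (starMax b (Δ - ℓ) u : ℚ) := by
    have h := (isGreatest_starMax hI hb (Δ - ℓ)).sub_isLeast_antiNefSet hZK hrs2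
    rw [show ZK none - ((Δ - ℓ : ℤ) : ℚ) = rs none + ℓ by push_cast; linarith] at h
    exact (hxs ℓ hℓ).unique h
  refine ⟨fun ℓ hℓ hℓΔ => ?_, fun ℓ hℓ hℓΔ => ?_⟩
  · have hxm : IsLeast (antiNefSet I 0 none (Δ - ℓ : ℤ)) (x (Δ - ℓ)) := by
      rw [antiNefSet_zero]; exact hx _ (by omega)
    change chi I ZK (xs ℓ) = chi I ZK (x (Δ - ℓ))
    rw [hxs_eq ℓ hℓ, chi_sub hsym]
    exact chi_eq_of_isGreatest_of_isLeast hI.isPlumbingMatrix hZK (isGreatest_starMax hI hb _)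
      hxm (starMax_le hI hb hxm.1)
  · rw [hxs_eq _ (by omega), show Δ - (Δ - 1 - ℓ) = ℓ + 1 by ring, sub_dotProduct, hZK, hI00,
      dotProduct_mulVec_single_center_starMax hI hb, add_sub_cancel_right, hN ℓ]
    simp only [hαω]
    push_cast
    ring

/-- Duality for the minimal cycles with prescribed `v₀`-coordinate:
(a) `χ(x*(ℓ)) = χ(x(Δ−ℓ))` for `0 ≤ ℓ ≤ Δ`;
(b) `N(ℓ) + N*(Δ−1−ℓ) = −2` for `0 ≤ ℓ ≤ Δ−1`. -/
theorem stmt_14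
    (d : ℕ) (hd : 3 ≤ d) (b₀ : ℤ)
    (α ω : Fin d → ℤ)
    (hω : ∀ i, 0 < ω i ∧ ω i < α i)
    (hcop : ∀ i, IsCoprime (α i) (ω i))
    (e : ℚ) (he : e = -(b₀ : ℚ) + ∑ i, (ω i : ℚ) / (α i : ℚ)) (heneg : e < 0)
    -- the legs: negative continued fraction expansions αᵢ/ωᵢ = [b_{i1},…,b_{iνᵢ}]
    (ν : Fin d → ℕ) (hν : ∀ i, 0 < ν i)
    (b : (i : Fin d) → Fin (ν i) → ℤ) (hb : ∀ i j, 2 ≤ b i j)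
    (hcf : ∀ i, ncf (List.ofFn fun j => ((b i j : ℤ) : ℚ)) = (α i : ℚ) / (ω i : ℚ))
    -- the intersection matrix of the star-shaped plumbing graph
    (I : Matrix (Option ((i : Fin d) × Fin (ν i))) (Option ((i : Fin d) × Fin (ν i))) ℚ)
    (hsym : I.IsSymm)
    (hI00 : I none none = -(b₀ : ℚ))
    (hIdiag : ∀ i j, I (some ⟨i, j⟩) (some ⟨i, j⟩) = -((b i j : ℤ) : ℚ))
    (hI0leg : ∀ i (j : Fin (ν i)),
      I none (some ⟨i, j⟩) = if (j : ℕ) = 0 then 1 else 0)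
    (hIleg : ∀ i (j j' : Fin (ν i)), j ≠ j' →
      I (some ⟨i, j⟩) (some ⟨i, j'⟩) =
        if (j : ℕ) + 1 = (j' : ℕ) ∨ (j' : ℕ) + 1 = (j : ℕ) then 1 else 0)
    (hIcross : ∀ i i', i ≠ i' → ∀ (j : Fin (ν i)) (j' : Fin (ν i')),
      I (some ⟨i, j⟩) (some ⟨i', j'⟩) = 0)
    (hnegdef : ∀ x : Option ((i : Fin d) × Fin (ν i)) → ℚ, x ≠ 0 → x ⬝ᵥ I.mulVec x < 0)
    -- the anticanonical cycle
    (ZK : Option ((i : Fin d) × Fin (ν i)) → ℚ)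
    (hZK : ∀ v, ZK ⬝ᵥ I.mulVec (Pi.single v 1) = I v v + 2)
    -- the representative r* ∈ [0,1)^𝒱 of the class of Z_K, and Δ
    (rs : Option ((i : Fin d) × Fin (ν i)) → ℚ)
    (hrs1 : ∀ v, 0 ≤ rs v ∧ rs v < 1)
    (hrs2 : ∀ v, ∃ k : ℤ, ZK v - rs v = (k : ℚ))
    (Δ : ℤ) (hΔ : (Δ : ℚ) = ZK none - rs none)
    -- the minimal cycles x(ℓ) (class h = 0) and x*(ℓ) (class of Z_K)
    (x xs : ℤ → Option ((i : Fin d) × Fin (ν i)) → ℚ)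
    (hx : ∀ ℓ : ℤ, 0 ≤ ℓ → IsLeast
      {y | (∀ v, ∃ k : ℤ, y v = (k : ℚ)) ∧ y none = (ℓ : ℚ) ∧
        ∀ v, v ≠ none → y ⬝ᵥ I.mulVec (Pi.single v 1) ≤ 0} (x ℓ))
    (hxs : ∀ ℓ : ℤ, 0 ≤ ℓ → IsLeast
      {y | (∀ v, ∃ k : ℤ, y v - rs v = (k : ℚ)) ∧ y none = rs none + (ℓ : ℚ) ∧
        ∀ v, v ≠ none → y ⬝ᵥ I.mulVec (Pi.single v 1) ≤ 0} (xs ℓ))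
    -- the quasi-linear function N
    (N : ℤ → ℤ)
    (hN : ∀ ℓ : ℤ, N ℓ = b₀ * ℓ - ∑ i, ⌈((ℓ * ω i : ℤ) : ℚ) / ((α i : ℤ) : ℚ)⌉) :
    -- (a) duality for χ(y) = −(y − Z_K, y)/2
    (∀ ℓ : ℤ, 0 ≤ ℓ → ℓ ≤ Δ →
      -((xs ℓ - ZK) ⬝ᵥ I.mulVec (xs ℓ)) / 2 =
      -((x (Δ - ℓ) - ZK) ⬝ᵥ I.mulVec (x (Δ - ℓ))) / 2)
    -- (b) N(ℓ) + N*(Δ − 1 − ℓ) = −2, with N*(ℓ) = −(x*(ℓ), E_{v₀})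
    ∧ (∀ ℓ : ℤ, 0 ≤ ℓ → ℓ ≤ Δ - 1 →
      (N ℓ : ℚ) + (-(xs (Δ - 1 - ℓ) ⬝ᵥ I.mulVec (Pi.single none 1))) = -2) :=
  stmt_14_general d b₀ α ω hω hcop ν b hb hcf I hsym hI00 hIdiag hI0leg hIleg hIcross ZK hZK rs hrs2
    Δ hΔ x xs hx hxs N hN
end

section
/- Fix Seifert data. Then there exists n₀ ∈ ℤ≥1 (with n₀ ≥ 1/|e|) such that for every integer n ≥ n₀ and every integer ℓ > 0: N(ℓ) − ⌈ℓ/n⌉ ≥ −1 if and only if N(ℓ) ≥ 0. (Here N(ℓ) − ⌈ℓ/n⌉ is the quasi-linear function N₍ₙ₎(ℓ) of the Seifert data obtained by adding one extra leg (n,1); thus for n large the module ℳ₍ₙ₎ of the new Seifert manifold coincides, on positive integers, with the semigroup 𝒮 of the original one and is independent of n.) -/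
/-- For `n` large enough, the module `ℳ₍ₙ₎` of the Seifert data enlarged by one
extra leg `(n,1)` coincides, on positive integers, with the semigroup `𝒮` of the
original Seifert data, and is independent of `n`. -/
theorem stmt_17
    (d : ℕ) (hd : 3 ≤ d) (b₀ : ℤ)
    (α ω : Fin d → ℤ)
    (hω : ∀ i, 0 < ω i ∧ ω i < α i)
    (hcop : ∀ i, IsCoprime (α i) (ω i))
    (e : ℚ) (he : e = -(b₀ : ℚ) + ∑ i, (ω i : ℚ) / (α i : ℚ)) (heneg : e < 0)
    (N : ℤ → ℤ)
    (hN : ∀ ℓ : ℤ, N ℓ = b₀ * ℓ - ∑ i, ⌈((ℓ * ω i : ℤ) : ℚ) / ((α i : ℤ) : ℚ)⌉) :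
    ∃ n₀ : ℤ, 1 ≤ n₀ ∧ 1 / |e| ≤ (n₀ : ℚ) ∧
      ∀ n : ℤ, n₀ ≤ n → ∀ ℓ : ℤ, 0 < ℓ →
        (-1 ≤ N ℓ - ⌈(ℓ : ℚ) / (n : ℚ)⌉ ↔ 0 ≤ N ℓ) := by
  set E : ℚ := -e with hE
  have hEpos : 0 < E := by simp only [hE]; linarith
  have habs : |e| = E := abs_of_neg heneg
  have hd3 : (3 : ℚ) ≤ (d : ℚ) := by exact_mod_cast hd
  set S : ℚ := ∑ i, (ω i : ℚ) / (α i : ℚ) with hS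
  -- key growth estimate : N ℓ ≥ E ℓ - d
  have key : ∀ ℓ : ℤ, E * ℓ - d ≤ (N ℓ : ℚ) := by
    intro ℓ
    have h2 : (∑ i, (⌈((ℓ * ω i : ℤ) : ℚ) / ((α i : ℤ) : ℚ)⌉ : ℚ))
        ≤ (ℓ : ℚ) * S + d := by
      have hterm : ∀ i ∈ Finset.univ,
          (⌈((ℓ * ω i : ℤ) : ℚ) / ((α i : ℤ) : ℚ)⌉ : ℚ)
            ≤ (ℓ : ℚ) * ((ω i : ℚ) / (α i : ℚ)) + 1 := by
        intro i _
        calc (⌈((ℓ * ω i : ℤ) : ℚ) / ((α i : ℤ) : ℚ)⌉ : ℚ)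
            ≤ ((ℓ * ω i : ℤ) : ℚ) / ((α i : ℤ) : ℚ) + 1 :=
              le_of_lt (Int.ceil_lt_add_one _)
          _ = (ℓ : ℚ) * ((ω i : ℚ) / (α i : ℚ)) + 1 := by push_cast; ring
      calc (∑ i, (⌈((ℓ * ω i : ℤ) : ℚ) / ((α i : ℤ) : ℚ)⌉ : ℚ))
          ≤ ∑ i, ((ℓ : ℚ) * ((ω i : ℚ) / (α i : ℚ)) + 1) :=
            Finset.sum_le_sum hterm
        _ = (ℓ : ℚ) * S + d := by
            rw [Finset.sum_add_distrib, ← Finset.mul_sum]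
            simp [hS, Finset.card_univ]
    have hNℓ : (N ℓ : ℚ) = (b₀ : ℚ) * ℓ
        - ∑ i, (⌈((ℓ * ω i : ℤ) : ℚ) / ((α i : ℤ) : ℚ)⌉ : ℚ) := by
      rw [hN ℓ]; push_cast; ring
    have hEeq : E = (b₀ : ℚ) - S := by rw [hE, he]; ring
    rw [hNℓ, hEeq]
    nlinarith [h2]
  have hdivpos : (0 : ℚ) < 2 * (d : ℚ) / E := by
    apply div_pos _ hEpos; linarith
  refine ⟨⌈2 * (d : ℚ) / E⌉, Int.ceil_pos.mpr hdivpos, ?_, ?_⟩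
  · rw [habs]
    have h1 : 1 / E ≤ 2 * (d : ℚ) / E := by gcongr; linarith
    exact h1.trans (Int.le_ceil _)
  · intro n hn ℓ hℓ
    have hnpos : (0 : ℤ) < n := lt_of_lt_of_le (Int.ceil_pos.mpr hdivpos) hn
    have hnQ : (0 : ℚ) < (n : ℚ) := by exact_mod_cast hnpos
    have hℓQ : (0 : ℚ) < (ℓ : ℚ) := by exact_mod_cast hℓ
    have hnE : 2 * (d : ℚ) ≤ E * n := by
      have h1 : 2 * (d : ℚ) / E ≤ (n : ℚ) := by
        calc 2 * (d : ℚ) / E ≤ (⌈2 * (d : ℚ) / E⌉ : ℚ) := Int.le_ceil _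
        _ ≤ (n : ℚ) := by exact_mod_cast hn
      rw [div_le_iff₀ hEpos] at h1; linarith
    constructor
    · intro h
      have hceil : 1 ≤ ⌈(ℓ : ℚ) / (n : ℚ)⌉ :=
        Int.ceil_pos.mpr (div_pos hℓQ hnQ)
      linarith
    · intro h
      by_cases hln : ℓ ≤ n
      · have h1 : (ℓ : ℚ) / (n : ℚ) ≤ 1 := by
          rw [div_le_one hnQ]; exact_mod_cast hln
        have h2 : ⌈(ℓ : ℚ) / (n : ℚ)⌉ ≤ 1 := by
          rw [show (1 : ℤ) = ⌈(1 : ℚ)⌉ by simp]; exact Int.ceil_le_ceil h1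
        linarith
      · push_neg at hln
        have hlnQ : (n : ℚ) < (ℓ : ℚ) := by exact_mod_cast hln
        -- show ⌈ℓ/n⌉ ≤ N ℓ + 1 via ℚ
        have hc : (⌈(ℓ : ℚ) / (n : ℚ)⌉ : ℚ) < (ℓ : ℚ) / (n : ℚ) + 1 :=
          Int.ceil_lt_add_one _
        have hdiv : (ℓ : ℚ) / (n : ℚ) ≤ E * ℓ - d + 1 := by
          rw [div_le_iff₀ hnQ]
          nlinarith [mul_le_mul_of_nonneg_right hnE hℓQ.le, key ℓ]
        have hkey := key ℓ
        have hQ : (⌈(ℓ : ℚ) / (n : ℚ)⌉ : ℚ) < (N ℓ : ℚ) + 2 := by nlinarith [hc, hdiv, hkey]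
        have hZ : ⌈(ℓ : ℚ) / (n : ℚ)⌉ < N ℓ + 2 := by exact_mod_cast hQ
        omega
end

section
/- (Brieskorn–Hamm rational homology spheres, case (i).) Let n ≥ 3, let p₁,…,p_n ≥ 2 be pairwise coprime integers, and let m ≥ 1 be an integer with gcd(m, pᵢ) = 1 for every i ≥ 3; set P := p₁⋯p_n. Let ω₁, ω₂ and ωᵢ (3 ≤ i ≤ n) be the unique integers with 0 < ωᵢ < pᵢ satisfying ω₁·(P/p₁) ≡ −1 (mod p₁), ω₂·(P/p₂) ≡ −1 (mod p₂), and ωᵢ·(mP/pᵢ) ≡ −1 (mod pᵢ) for i ≥ 3, and let b₀ := 1/P + ω₁/p₁ + ω₂/p₂ + m·Σ_{i=3}^n ωᵢ/pᵢ (which is a positive integer). Consider the Seifert data with d = 2 + (n−2)m legs consisting of (p₁,ω₁), (p₂,ω₂), and m copies of (pᵢ,ωᵢ) for each 3 ≤ i ≤ n, and let N(ℓ) := b₀·ℓ − ⌈ℓω₁/p₁⌉ − ⌈ℓω₂/p₂⌉ − m·Σ_{i=3}^n ⌈ℓωᵢ/pᵢ⌉. Then the numerical semigroup 𝒮 = {ℓ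 ∈ ℤ≥0 : N(ℓ) ≥ 0} has minimal system of generators {P/p₁, P/p₂} ∪ {m·P/pᵢ : 3 ≤ i ≤ n}; in particular 𝒮 is the additive submonoid of ℤ≥0 generated by these elements. -/
/-!
Write `P = ∏ pᵢ`, `Qᵢ = P / pᵢ` and `gᵢ = cᵢ Qᵢ`, where `cᵢ ∈ {1, m}` is the multiplicity of the
`i`-th leg. Multiplying `N(ℓ)` by `P` and using `pᵢ ⌈x/pᵢ⌉ = x + (-x mod pᵢ)` together with
`b₀ P = 1 + Σ cᵢ ωᵢ Qᵢ` gives the exact identity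
`N(ℓ) P = ℓ - Σ rᵢ(ℓ) gᵢ`, with `rᵢ(ℓ) = (-ℓωᵢ) mod pᵢ ∈ [0, pᵢ)`.
Since `N` is superadditive and vanishes at each `gᵢ` (where `rⱼ(gᵢ) = δᵢⱼ` by the choice of `ωᵢ`),
every element of the monoid generated by the `gᵢ` has `N ≥ 0`; conversely the identity writes any
`ℓ` with `N(ℓ) ≥ 0` as `N(ℓ) p₁ g₁ + Σ rᵢ(ℓ) gᵢ`. Minimality holds because every `gⱼ` with
`j ≠ i` is a multiple of `pᵢ`, while `gᵢ` is coprime to `pᵢ`.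
-/

open Finset

lemma mul_ceil_intCast_div (a : ℤ) {b : ℤ} (hb : 0 < b) :
    b * ⌈(a : ℚ) / b⌉ = a + (-a) % b := by
  lift b to ℕ using hb.le
  rw [Int.cast_natCast, Rat.ceil_intCast_div_natCast]
  linarith [Int.emod_def (-a) b]

lemma neg_mul_emod_eq_one {p g ω : ℤ} (hp : 1 < p) (h : p ∣ ω * g + 1) : (-(g * ω)) % p = 1 := by
  have : -(g * ω) ≡ 1 [ZMOD p] := Int.modEq_iff_dvd.mpr (by convert h using 1; ring)
  rw [this, Int.emod_eq_of_lt zero_le_one hp]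

lemma AddSubmonoid.notMem_closure_of_dvd {S : Set ℤ} {d g : ℤ} (hS : ∀ s ∈ S, d ∣ s)
    (hg : ¬d ∣ g) : g ∉ AddSubmonoid.closure S := fun hmem =>
  hg <| Ideal.mem_span_singleton.mp <|
    (AddSubmonoid.closure_le (S := (Ideal.span {d}).toAddSubmonoid).mpr
      fun s hs => Ideal.mem_span_singleton.mpr (hS s hs)) hmem

section ProdExcept

variable {ι : Type*} [Fintype ι] [DecidableEq ι] (p : ι → ℤ)

def prodExcept (i : ι) : ℤ := ∏ j ∈ univ.erase i, p j

lemma mul_prodExcept (i : ι) : p i * prodExcept p i = ∏ j, p j :=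
  mul_prod_erase _ _ (mem_univ i)

lemma prod_ediv_eq_prodExcept {i : ι} (hi : p i ≠ 0) : (∏ j, p j) / p i = prodExcept p i := by
  rw [← mul_prodExcept, Int.mul_ediv_cancel_left _ hi]

lemma dvd_prodExcept {i j : ι} (hji : j ≠ i) : p j ∣ prodExcept p i :=
  dvd_prod_of_mem _ (mem_erase.mpr ⟨hji, mem_univ j⟩)

lemma isCoprime_prodExcept (hp : Pairwise fun i j => IsCoprime (p i) (p j)) (i : ι) :
    IsCoprime (p i) (prodExcept p i) :=
  IsCoprime.prod_right fun _ hj => hp (ne_of_mem_erase hj).symm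

end ProdExcept

section Seifert

variable {ι : Type*} [Fintype ι] (b₀ : ℤ) (p c ω : ι → ℤ)

/-- `N` for Seifert data in which the leg `(pᵢ, ωᵢ)` occurs `cᵢ` times. -/
def seifertN (ℓ : ℤ) : ℤ :=
  b₀ * ℓ - ∑ i, c i * ⌈((ℓ * ω i : ℤ) : ℚ) / (p i : ℚ)⌉

variable {b₀ p c ω}

lemma seifertN_add_le (hc : ∀ i, 0 ≤ c i) (a b : ℤ) :
    seifertN b₀ p c ω a + seifertN b₀ p c ω b ≤ seifertN b₀ p c ω (a + b) := by
  have hceil : ∀ i, c i * ⌈(((a + b) * ω i : ℤ) : ℚ) / (p i : ℚ)⌉ ≤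
      c i * ⌈((a * ω i : ℤ) : ℚ) / (p i : ℚ)⌉ + c i * ⌈((b * ω i : ℤ) : ℚ) / (p i : ℚ)⌉ := by
    intro i
    rw [← mul_add]
    refine mul_le_mul_of_nonneg_left ?_ (hc i)
    calc ⌈(((a + b) * ω i : ℤ) : ℚ) / (p i : ℚ)⌉
        = ⌈((a * ω i : ℤ) : ℚ) / (p i : ℚ) + ((b * ω i : ℤ) : ℚ) / (p i : ℚ)⌉ := by
          push_cast; ring_nf
      _ ≤ _ := Int.ceil_add_le _ _
  have := sum_le_sum fun i (_ : i ∈ univ) => hceil i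
  rw [sum_add_distrib] at this
  unfold seifertN
  linarith

lemma seifertN_nonneg_of_mem_closure (hc : ∀ i, 0 ≤ c i) {G : Set ℤ}
    (hG : ∀ g ∈ G, 0 ≤ seifertN b₀ p c ω g) {ℓ : ℤ} (hℓ : ℓ ∈ AddSubmonoid.closure G) :
    0 ≤ seifertN b₀ p c ω ℓ := by
  induction hℓ using AddSubmonoid.closure_induction with
  | mem g hg => exact hG g hg
  | zero => simp [seifertN]
  | add a b _ _ ha hb => linarith [seifertN_add_le (b₀ := b₀) (p := p) (ω := ω) hc a b]

variable [DecidableEq ι]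

def seifertGen (p c : ι → ℤ) (i : ι) : ℤ := c i * prodExcept p i

lemma mul_prod_eq_one_add_sum_seifertGen (hp : ∀ i, p i ≠ 0)
    (hb₀ : (b₀ : ℚ) = 1 / ((∏ i, p i : ℤ) : ℚ) + ∑ i, (c i : ℚ) * ((ω i : ℚ) / (p i : ℚ))) :
    b₀ * ∏ i, p i = 1 + ∑ i, ω i * seifertGen p c i := by
  have hP : ((∏ i, p i : ℤ) : ℚ) ≠ 0 := by exact_mod_cast prod_ne_zero_iff.mpr fun i _ => hp i
  have hterm : ∀ i, (c i : ℚ) * ((ω i : ℚ) / (p i : ℚ)) * ((∏ i, p i : ℤ) : ℚ)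
      = ((ω i * seifertGen p c i : ℤ) : ℚ) := fun i => by
    have hpi : (p i : ℚ) ≠ 0 := by exact_mod_cast hp i
    rw [seifertGen, ← mul_prodExcept p i]
    push_cast
    field_simp
  have key : (b₀ : ℚ) * ((∏ i, p i : ℤ) : ℚ) = ((1 + ∑ i, ω i * seifertGen p c i : ℤ) : ℚ) := by
    rw [hb₀, add_mul, sum_mul, one_div, inv_mul_cancel₀ hP, sum_congr rfl fun i _ => hterm i]
    push_cast
    rfl
  exact_mod_cast key

lemma seifertN_mul_prod (hp : ∀ i, 0 < p i)
    (hb₀ : b₀ * ∏ i, p i = 1 + ∑ i, ω i * seifertGen p c i) (ℓ : ℤ) :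
    seifertN b₀ p c ω ℓ * ∏ i, p i = ℓ - ∑ i, (-(ℓ * ω i)) % p i * seifertGen p c i := by
  have hterm : ∀ i, c i * ⌈((ℓ * ω i : ℤ) : ℚ) / (p i : ℚ)⌉ * ∏ j, p j
      = ℓ * (ω i * seifertGen p c i) + (-(ℓ * ω i)) % p i * seifertGen p c i := fun i => by
    rw [← mul_prodExcept p i, seifertGen]
    linear_combination c i * prodExcept p i * mul_ceil_intCast_div (ℓ * ω i) (hp i)
  rw [seifertN, sub_mul, sum_mul, sum_congr rfl fun i _ => hterm i, sum_add_distrib, ← mul_sum]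
  linear_combination ℓ * hb₀

lemma seifertN_seifertGen (hp : ∀ i, 1 < p i)
    (hb₀ : b₀ * ∏ i, p i = 1 + ∑ i, ω i * seifertGen p c i)
    (hω : ∀ i, p i ∣ ω i * seifertGen p c i + 1) (i : ι) :
    seifertN b₀ p c ω (seifertGen p c i) = 0 := by
  have hres : ∀ j, (-(seifertGen p c i * ω j)) % p j * seifertGen p c j
      = if j = i then seifertGen p c i else 0 := fun j => by
    split_ifs with hji
    · rw [hji, neg_mul_emod_eq_one (hp i) (hω i), one_mul]
    · rw [Int.emod_eq_zero_of_dvd, zero_mul]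
      exact dvd_neg.mpr (((dvd_prodExcept p hji).mul_left _).mul_right _)
  have hP : ∏ i, p i ≠ 0 := prod_ne_zero_iff.mpr fun i _ => by linarith [hp i]
  have := seifertN_mul_prod (fun i => by linarith [hp i]) hb₀ (seifertGen p c i)
  simp_rw [hres, sum_ite_eq', if_pos (mem_univ i), sub_self] at this
  exact (mul_eq_zero.mp this).resolve_right hP

lemma setOf_seifertN_nonneg (hp : ∀ i, 1 < p i)
    (hb₀ : b₀ * ∏ i, p i = 1 + ∑ i, ω i * seifertGen p c i)
    (hω : ∀ i, p i ∣ ω i * seifertGen p c i + 1) (hc : ∀ i, 0 ≤ c i) {i₀ : ι} (hi₀ : c i₀ = 1) :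
    {ℓ | 0 ≤ seifertN b₀ p c ω ℓ} = AddSubmonoid.closure (Set.range (seifertGen p c)) := by
  have hmul : ∀ {k x : ℤ}, 0 ≤ k → x ∈ AddSubmonoid.closure (Set.range (seifertGen p c)) →
      k * x ∈ AddSubmonoid.closure (Set.range (seifertGen p c)) := fun {k x} hk hx => by
    lift k to ℕ using hk
    simpa using nsmul_mem hx k
  have hgen : ∀ i, seifertGen p c i ∈ AddSubmonoid.closure (Set.range (seifertGen p c)) :=
    fun i => AddSubmonoid.subset_closure ⟨i, rfl⟩
  ext ℓ
  refine ⟨fun hℓ => ?_, seifertN_nonneg_of_mem_closure hc ?_⟩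
  · have hP : ∏ i, p i = p i₀ * seifertGen p c i₀ := by
      rw [seifertGen, hi₀, one_mul, mul_prodExcept]
    have hℓ_eq : ℓ = seifertN b₀ p c ω ℓ * (p i₀ * seifertGen p c i₀)
        + ∑ i, (-(ℓ * ω i)) % p i * seifertGen p c i := by
      rw [← hP, seifertN_mul_prod (fun i => by linarith [hp i]) hb₀]
      ring
    rw [SetLike.mem_coe, hℓ_eq]
    refine add_mem (hmul hℓ (hmul (by linarith [hp i₀]) (hgen i₀))) (sum_mem fun i _ => ?_)
    exact hmul (Int.emod_nonneg _ (by linarith [hp i])) (hgen i)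
  · rintro _ ⟨i, rfl⟩
    exact (seifertN_seifertGen hp hb₀ hω i).ge

lemma seifertGen_notMem_closure (hp : ∀ i, 1 < p i)
    (hpcop : Pairwise fun i j => IsCoprime (p i) (p j))
    (hc : ∀ i, IsCoprime (c i) (p i)) (i : ι) :
    seifertGen p c i ∉ AddSubmonoid.closure (Set.range (seifertGen p c) \ {seifertGen p c i}) := by
  refine AddSubmonoid.notMem_closure_of_dvd (d := p i) ?_ fun hdvd => ?_
  · rintro _ ⟨⟨j, rfl⟩, hne⟩
    have hji : j ≠ i := by rintro rfl; exact hne rfl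
    exact (dvd_prodExcept p hji.symm).mul_left _
  · have hunit :=
      ((hc i).symm.mul_right (isCoprime_prodExcept p hpcop i)).isUnit_of_dvd' dvd_rfl hdvd
    rcases Int.isUnit_iff.mp hunit with h | h <;> linarith [hp i]

end Seifert

theorem stmt_19_general
    (n : ℕ) (hn : 3 ≤ n)
    (p : Fin n → ℤ) (hp2 : ∀ i, 2 ≤ p i)
    (hpcop : ∀ i j, i ≠ j → IsCoprime (p i) (p j))
    (m : ℤ) (hm : 1 ≤ m)
    (hmcop : ∀ i : Fin n, 2 ≤ (i : ℕ) → IsCoprime m (p i))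
    (P : ℤ) (hP : P = ∏ i, p i)
    (ω : Fin n → ℤ)
    (hω12 : ∀ i : Fin n, (i : ℕ) < 2 → p i ∣ ω i * (P / p i) + 1)
    (hω3 : ∀ i : Fin n, 2 ≤ (i : ℕ) → p i ∣ ω i * (m * (P / p i)) + 1)
    (b₀ : ℤ)
    (hb₀ : (b₀ : ℚ) = 1 / (P : ℚ) +
      ∑ i : Fin n, (if (i : ℕ) < 2 then 1 else (m : ℚ)) * ((ω i : ℚ) / (p i : ℚ)))
    (N : ℤ → ℤ)
    (hN : ∀ ℓ : ℤ, N ℓ = b₀ * ℓ -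
      ∑ i : Fin n, (if (i : ℕ) < 2 then 1 else m) * ⌈((ℓ * ω i : ℤ) : ℚ) / ((p i : ℤ) : ℚ)⌉)
    (G : Set ℤ)
    (hG : G = {g : ℤ | ∃ i : Fin n,
      ((i : ℕ) < 2 ∧ g = P / p i) ∨ (2 ≤ (i : ℕ) ∧ g = m * (P / p i))}) :
    {ℓ : ℤ | 0 ≤ N ℓ} = ↑(AddSubmonoid.closure G)
    ∧ ∀ g ∈ G, g ∉ AddSubmonoid.closure (G \ {g}) := by
  set c : Fin n → ℤ := fun i => if (i : ℕ) < 2 then 1 else m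
  have hp : ∀ i, 1 < p i := fun i => hp2 i
  have hPdiv : ∀ i, P / p i = prodExcept p i := fun i => by
    rw [hP, prod_ediv_eq_prodExcept p (by linarith [hp i])]
  have hgen : ∀ i, seifertGen p c i = if (i : ℕ) < 2 then P / p i else m * (P / p i) := fun i => by
    rw [seifertGen, hPdiv]; simp only [c]; split_ifs <;> ring
  have hG' : G = Set.range (seifertGen p c) := by
    ext g
    simp only [hG, hgen, Set.mem_ofPred_eq, Set.mem_range]
    refine exists_congr fun i => ?_
    split_ifs with h <;> grind
  have hb₀' : b₀ * ∏ i, p i = 1 + ∑ i, ω i * seifertGen p c i :=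
    mul_prod_eq_one_add_sum_seifertGen (fun i => by linarith [hp i])
      (by rw [hb₀, hP]; push_cast [c, apply_ite]; rfl)
  have hω : ∀ i, p i ∣ ω i * seifertGen p c i + 1 := fun i => by
    rw [hgen]; split_ifs with h
    exacts [hω12 i h, hω3 i (by omega)]
  have hc : ∀ i, 0 ≤ c i := fun i => by
    simp only [c]; split_ifs <;> omega
  have hcop : ∀ i, IsCoprime (c i) (p i) := fun i => by
    simp only [c]; split_ifs with h
    exacts [isCoprime_one_left, hmcop i (by omega)]
  rw [hG', show N = seifertN b₀ p c ω from funext hN]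
  refine ⟨setOf_seifertN_nonneg hp hb₀' hω hc (i₀ := ⟨0, by omega⟩) rfl, ?_⟩
  rintro _ ⟨i, rfl⟩
  exact seifertGen_notMem_closure hp (fun i j hij => hpcop i j hij) hcop i

/-- Brieskorn–Hamm rational homology spheres, case (i): the semigroup `𝒮_M` of
`Σ(mp₁, mp₂, p₃, …, p_n)` has minimal system of generators
`{P/p₁, P/p₂} ∪ {m·P/pᵢ : 3 ≤ i ≤ n}` (generators indexed by `Fin n` with
`i < 2` corresponding to the first two and `i ≥ 2` to the rest). -/
theorem stmt_19
    (n : ℕ) (hn : 3 ≤ n)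
    (p : Fin n → ℤ) (hp2 : ∀ i, 2 ≤ p i)
    (hpcop : ∀ i j, i ≠ j → IsCoprime (p i) (p j))
    (m : ℤ) (hm : 1 ≤ m)
    (hmcop : ∀ i : Fin n, 2 ≤ (i : ℕ) → IsCoprime m (p i))
    (P : ℤ) (hP : P = ∏ i, p i)
    (ω : Fin n → ℤ) (hω : ∀ i, 0 < ω i ∧ ω i < p i)
    (hω12 : ∀ i : Fin n, (i : ℕ) < 2 → p i ∣ ω i * (P / p i) + 1)
    (hω3 : ∀ i : Fin n, 2 ≤ (i : ℕ) → p i ∣ ω i * (m * (P / p i)) + 1)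
    (b₀ : ℤ)
    (hb₀ : (b₀ : ℚ) = 1 / (P : ℚ) +
      ∑ i : Fin n, (if (i : ℕ) < 2 then 1 else (m : ℚ)) * ((ω i : ℚ) / (p i : ℚ)))
    (N : ℤ → ℤ)
    (hN : ∀ ℓ : ℤ, N ℓ = b₀ * ℓ -
      ∑ i : Fin n, (if (i : ℕ) < 2 then 1 else m) * ⌈((ℓ * ω i : ℤ) : ℚ) / ((p i : ℤ) : ℚ)⌉)
    (G : Set ℤ)
    (hG : G = {g : ℤ | ∃ i : Fin n,
      ((i : ℕ) < 2 ∧ g = P / p i) ∨ (2 ≤ (i : ℕ) ∧ g = m * (P / p i))}) :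
    {ℓ : ℤ | 0 ≤ N ℓ} = ↑(AddSubmonoid.closure G)
    ∧ ∀ g ∈ G, g ∉ AddSubmonoid.closure (G \ {g}) :=
  stmt_19_general n hn p hp2 hpcop m hm hmcop P hP ω hω12 hω3 b₀ hb₀ N hN G hG
end
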